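/- arXiv:0709.0498 — 7 statements merged into one kernel-verified Lean document; each statement's English description precedes it below -/
import Mathlib

section
/- For every integer n ≥ 1, the number of standard Young tableaux of the 4-strip shape D = S(4,n) \ {(1,n), (n+3,1)} (the pure 4-strip with n columns with its top-right and bottom-left corner cells removed, a skew shape with 4n−2 cells) equals (4n−2)!·( A_{2n−1}² / ((2n−1)!)² − A_{2n−2}·A_{2n} / ((2n−2)!·(2n)!) ), where A_j is the number of up-down permutations of j elements. (In terms of tangent and Euler numbers this is (4n−2)!·( T_n²/((2n−1)!)² − (−E_{2n−2}E_{2n})/((2n−2)!(2n)!) ).) -/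
/-- The number of up-down (alternating) permutations of `{1, …, j}`:
permutations with `σ(1) < σ(2) > σ(3) < σ(4) > ⋯`. -/
noncomputable def updownCount (j : ℕ) : ℕ :=
  Nat.card {σ : Equiv.Perm (Fin j) //
    ∀ i : Fin j, ∀ h : (i : ℕ) + 1 < j,
      if (i : ℕ) % 2 = 0 then σ i < σ ⟨(i : ℕ) + 1, h⟩
      else σ ⟨(i : ℕ) + 1, h⟩ < σ i}

/-- The number of standard Young tableaux of shape `D`: bijections from the
cells of `D` to `{1, …, |D|}` increasing along rows and along columns. -/
noncomputable def sytCount (D : Finset (ℤ × ℤ)) : ℕ :=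
  Nat.card {f : {c : ℤ × ℤ // c ∈ D} ≃ Fin D.card //
    ∀ a b : {c : ℤ × ℤ // c ∈ D},
      ((a.1.1 = b.1.1 ∧ a.1.2 < b.1.2) ∨ (a.1.2 = b.1.2 ∧ a.1.1 < b.1.1)) →
      f a < f b}

/-- The pure `m`-strip diagram with `n` columns:
`S(m,n) = {(r,c) : 1 ≤ c ≤ n, n+1−c ≤ r ≤ n+m−c}`. -/
noncomputable def strip (m n : ℕ) : Finset (ℤ × ℤ) :=
  (Finset.Icc (1 : ℤ) ((n : ℤ) + m) ×ˢ Finset.Icc (1 : ℤ) (n : ℤ)).filter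
    (fun rc => (n : ℤ) + 1 - rc.2 ≤ rc.1 ∧ rc.1 ≤ (n : ℤ) + m - rc.2)

/-!
Cut the shape `S(4,n) \ {(1,n), (n+3,1)}` along its diagonals: the cells with `r + c ∈ {n+1, n+2}`
and those with `r + c ∈ {n+3, n+4}` form two ribbons of `2n - 1` cells each. A standard tableau
is then a labelling of the two ribbons by `0, …, 4n - 3` which is down-up along the upper ribbon,
up-down along the lower one, and *compatible*: every cell of the upper ribbon is smaller than the
cells of the lower ribbon directly below it and directly to its right.

Dropping compatibility, the labellings number `C(4n-2, 2n-1) A_{2n-1}²` (choose the labels of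
the upper ribbon, then two alternating permutations). The incompatible ones correspond
bijectively, by exchanging the tails of the two sequences at the first place where they cross,
to pairs consisting of an up-down sequence of length `2n` and a down-up sequence of length
`2n - 2`, which number `C(4n-2, 2n) A_{2n} A_{2n-2}`: this is the Lindström–Gessel–Viennot
involution behind a `2 × 2` determinant.
-/

namespace FourStrip

open Finset

def IsZigzag (m par : ℕ) (x : ℕ → ℕ) : Prop :=
  ∀ i, i + 1 < m → (x i < x (i + 1) ↔ i % 2 = par)

lemma isZigzag_congr {m par : ℕ} {x y : ℕ → ℕ}
    (h : ∀ i j, i < m → j < m → (x i < x j ↔ y i < y j)) :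
    IsZigzag m par x ↔ IsZigzag m par y :=
  forall_congr' fun i => forall_congr' fun hi => by rw [h i (i + 1) (by omega) hi]

section Permutations

variable {m : ℕ}

def permSeq (σ : Equiv.Perm (Fin m)) : ℕ → ℕ :=
  fun i => if h : i < m then σ ⟨i, h⟩ else 0

lemma permSeq_of_lt (σ : Equiv.Perm (Fin m)) {i : ℕ} (h : i < m) : permSeq σ i = σ ⟨i, h⟩ :=
  dif_pos h

lemma permSeq_lt (σ : Equiv.Perm (Fin m)) {i : ℕ} (h : i < m) : permSeq σ i < m := by
  simp [permSeq_of_lt σ h]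

lemma eq_of_permSeq_eq (σ : Equiv.Perm (Fin m)) {i j : ℕ} (hi : i < m) (hj : j < m)
    (hij : permSeq σ i = permSeq σ j) : i = j := by
  rw [permSeq_of_lt σ hi, permSeq_of_lt σ hj] at hij
  simpa using σ.injective (Fin.ext hij)

lemma lt_iff_iff_ite {α : Type*} [LinearOrder α] {a b : α} (hab : a ≠ b) (P : Prop)
    [Decidable P] : (a < b ↔ P) ↔ if P then a < b else b < a := by
  split_ifs with hP <;> simp [hP, hab.symm.le_iff_lt]

lemma card_isZigzag_zero (m : ℕ) :
    Nat.card {σ : Equiv.Perm (Fin m) // IsZigzag m 0 (permSeq σ)} = updownCount m := by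
  refine Nat.card_congr (Equiv.subtypeEquivRight fun σ => ?_)
  have hne : ∀ (i : ℕ) (h : i + 1 < m), σ ⟨i, by omega⟩ ≠ σ ⟨i + 1, h⟩ := fun i h hσ => by
    simpa using σ.injective hσ
  simp only [IsZigzag, Fin.forall_iff, permSeq, Fin.lt_def]
  refine ⟨fun hz i hi h => ?_, fun hz i h => ?_⟩
  · have := hz i h
    rwa [dif_pos hi, dif_pos h, ← Fin.lt_def, lt_iff_iff_ite (hne i h)] at this
  · rw [dif_pos (by omega), dif_pos h, ← Fin.lt_def, lt_iff_iff_ite (hne i h)]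
    exact hz i (by omega) h

/-- Reversing the values exchanges rises and descents. -/
lemma card_isZigzag_one (m : ℕ) :
    Nat.card {σ : Equiv.Perm (Fin m) // IsZigzag m 1 (permSeq σ)} = updownCount m := by
  rw [← card_isZigzag_zero]
  refine Nat.card_congr (Equiv.subtypeEquiv (Equiv.mulLeft Fin.revPerm) fun σ => ?_)
  have hrev : ∀ i, i < m → permSeq (Fin.revPerm * σ) i = m - 1 - permSeq σ i := fun i hi => by
    simp only [permSeq_of_lt _ hi, Equiv.Perm.coe_mul, Function.comp_apply, Fin.revPerm_apply,
      Fin.val_rev]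
    omega
  refine forall_congr' fun i => forall_congr' fun hi => ?_
  have hne := mt (eq_of_permSeq_eq σ (i := i) (j := i + 1) (by omega) hi) (by omega)
  have := permSeq_lt σ hi
  have := permSeq_lt σ (i := i) (by omega)
  rw [Equiv.coe_mulLeft, hrev i (by omega), hrev (i + 1) hi]
  omega

end Permutations

section Shuffles

variable {p q N : ℕ}

def leftSeq (e : Fin p ⊕ Fin q ≃ Fin N) : ℕ → ℕ :=
  fun i => if h : i < p then e (.inl ⟨i, h⟩) else 0

def rightSeq (e : Fin p ⊕ Fin q ≃ Fin N) : ℕ → ℕ :=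
  fun i => if h : i < q then e (.inr ⟨i, h⟩) else 0

lemma leftSeq_of_lt (e : Fin p ⊕ Fin q ≃ Fin N) {i : ℕ} (h : i < p) :
    leftSeq e i = e (.inl ⟨i, h⟩) :=
  dif_pos h

lemma rightSeq_of_lt (e : Fin p ⊕ Fin q ≃ Fin N) {i : ℕ} (h : i < q) :
    rightSeq e i = e (.inr ⟨i, h⟩) :=
  dif_pos h

lemma leftSeq_ne_rightSeq (e : Fin p ⊕ Fin q ≃ Fin N) {i j : ℕ} (hi : i < p) (hj : j < q) :
    leftSeq e i ≠ rightSeq e j := by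
  rw [leftSeq_of_lt e hi, rightSeq_of_lt e hj]
  exact fun h => Sum.inl_ne_inr (e.injective (Fin.ext h))

lemma leftSeq_ne (e : Fin p ⊕ Fin q ≃ Fin N) {i j : ℕ} (hi : i < p) (hj : j < p)
    (hij : i ≠ j) : leftSeq e i ≠ leftSeq e j := by
  rw [leftSeq_of_lt e hi, leftSeq_of_lt e hj]
  exact fun h => hij (by simpa using e.injective (Fin.ext h))

lemma rightSeq_ne (e : Fin p ⊕ Fin q ≃ Fin N) {i j : ℕ} (hi : i < q) (hj : j < q)
    (hij : i ≠ j) : rightSeq e i ≠ rightSeq e j := by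
  rw [rightSeq_of_lt e hi, rightSeq_of_lt e hj]
  exact fun h => hij (by simpa using e.injective (Fin.ext h))

def leftValues (e : Fin p ⊕ Fin q ≃ Fin N) : Finset (Fin N) :=
  univ.map (Function.Embedding.inl.trans e.toEmbedding)

lemma card_leftValues (e : Fin p ⊕ Fin q ≃ Fin N) : #(leftValues e) = p := by
  simp [leftValues]

lemma card_compl_eq (hpq : p + q = N) {S : Finset (Fin N)} (hS : #S = p) : #Sᶜ = q := by
  rw [card_compl, hS, Fintype.card_fin]
  omega

noncomputable def shuffle (hpq : p + q = N)
    (t : {S : Finset (Fin N) // #S = p} × Equiv.Perm (Fin p) × Equiv.Perm (Fin q)) :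
    Fin p ⊕ Fin q ≃ Fin N :=
  (Equiv.sumCongr t.2.1 t.2.2).trans (finSumEquivOfFinset t.1.2 (card_compl_eq hpq t.1.2))

lemma leftValues_shuffle (hpq : p + q = N)
    (t : {S : Finset (Fin N) // #S = p} × Equiv.Perm (Fin p) × Equiv.Perm (Fin q)) :
    leftValues (shuffle hpq t) = t.1.1 := by
  refine eq_of_subset_of_card_le (fun x hx => ?_) (by rw [card_leftValues, t.1.2])
  obtain ⟨i, -, rfl⟩ := mem_map.mp hx
  simp [shuffle, orderEmbOfFin_mem]

lemma symm_finSumEquivOfFinset_mem_range_inl {S : Finset (Fin N)} (hS : #S = p)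
    (hSc : #Sᶜ = q) {x : Fin N} (hx : x ∈ S) :
    (finSumEquivOfFinset hS hSc).symm x ∈ Set.range Sum.inl := by
  rcases h : (finSumEquivOfFinset hS hSc).symm x with i | j
  · exact ⟨i, rfl⟩
  · rw [Equiv.symm_apply_eq, finSumEquivOfFinset_inr] at h
    exact absurd hx (mem_compl.mp (h ▸ orderEmbOfFin_mem _ hSc j))

lemma shuffle_bijective (hpq : p + q = N) : Function.Bijective (shuffle hpq) := by
  refine ⟨fun t t' h => ?_, fun e => ?_⟩
  · obtain ⟨⟨S, hS⟩, σ, τ⟩ := t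
    obtain ⟨⟨S', hS'⟩, σ', τ'⟩ := t'
    obtain rfl : S = S' := by
      simpa only [leftValues_shuffle] using congrArg leftValues h
    have hστ : Equiv.Perm.sumCongrHom _ _ (σ, τ) = Equiv.Perm.sumCongrHom _ _ (σ', τ') :=
      Equiv.ext fun x => (finSumEquivOfFinset _ _).injective (Equiv.congr_fun h x)
    simpa using Equiv.Perm.sumCongrHom_injective hστ
  · set S := leftValues e
    have hS : #S = p := card_leftValues e
    let F := finSumEquivOfFinset hS (card_compl_eq hpq hS)
    obtain ⟨⟨σ, τ⟩, hστ⟩ := Equiv.Perm.mem_sumCongrHom_range_of_perm_mapsTo_inl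
      (σ := e.trans F.symm) (by
        rintro _ ⟨i, rfl⟩
        exact symm_finSumEquivOfFinset_mem_range_inl _ _ (by simp [S, leftValues]))
    refine ⟨(⟨S, hS⟩, σ, τ), ?_⟩
    change (Equiv.Perm.sumCongrHom _ _ (σ, τ)).trans F = e
    rw [hστ, Equiv.trans_assoc, Equiv.symm_trans_self, Equiv.trans_refl]

lemma isZigzag_leftSeq_shuffle (hpq : p + q = N)
    (t : {S : Finset (Fin N) // #S = p} × Equiv.Perm (Fin p) × Equiv.Perm (Fin q)) (par : ℕ) :
    IsZigzag p par (leftSeq (shuffle hpq t)) ↔ IsZigzag p par (permSeq t.2.1) :=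
  isZigzag_congr fun i j hi hj => by
    simp [leftSeq_of_lt _ hi, leftSeq_of_lt _ hj, permSeq_of_lt _ hi, permSeq_of_lt _ hj,
      shuffle]

lemma isZigzag_rightSeq_shuffle (hpq : p + q = N)
    (t : {S : Finset (Fin N) // #S = p} × Equiv.Perm (Fin p) × Equiv.Perm (Fin q)) (par : ℕ) :
    IsZigzag q par (rightSeq (shuffle hpq t)) ↔ IsZigzag q par (permSeq t.2.2) :=
  isZigzag_congr fun i j hi hj => by
    simp [rightSeq_of_lt _ hi, rightSeq_of_lt _ hj, permSeq_of_lt _ hi, permSeq_of_lt _ hj,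
      shuffle]

lemma card_isZigzag_shuffle (hpq : p + q = N) (par par' : ℕ) :
    Nat.card {e : Fin p ⊕ Fin q ≃ Fin N //
        IsZigzag p par (leftSeq e) ∧ IsZigzag q par' (rightSeq e)} =
      N.choose p * Nat.card {σ : Equiv.Perm (Fin p) // IsZigzag p par (permSeq σ)} *
        Nat.card {τ : Equiv.Perm (Fin q) // IsZigzag q par' (permSeq τ)} := by
  let split : {t : {S : Finset (Fin N) // #S = p} × Equiv.Perm (Fin p) × Equiv.Perm (Fin q) //
        IsZigzag p par (permSeq t.2.1) ∧ IsZigzag q par' (permSeq t.2.2)} ≃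
      {S : Finset (Fin N) // #S = p} × {σ : Equiv.Perm (Fin p) // IsZigzag p par (permSeq σ)} ×
        {τ : Equiv.Perm (Fin q) // IsZigzag q par' (permSeq τ)} :=
    { toFun t := (t.1.1, ⟨t.1.2.1, t.2.1⟩, ⟨t.1.2.2, t.2.2⟩)
      invFun x := ⟨(x.1, x.2.1, x.2.2), x.2.1.2, x.2.2.2⟩ }
  rw [← Nat.card_congr (Equiv.subtypeEquiv (Equiv.ofBijective _ (shuffle_bijective hpq))
      fun t => (and_congr (isZigzag_leftSeq_shuffle hpq t par)
        (isZigzag_rightSeq_shuffle hpq t par')).symm),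
    Nat.card_congr split, Nat.card_prod, Nat.card_prod, Nat.card_eq_fintype_card,
    Fintype.card_finset_len, Fintype.card_fin, mul_assoc]

end Shuffles

section Cuts

variable {k : ℕ}

def CompatibleAt (k : ℕ) (e : Fin (2 * k + 1) ⊕ Fin (2 * k + 1) ≃ Fin (4 * k + 2)) (i : ℕ) :
    Prop :=
  i ≤ 2 * k → i % 2 = 0 →
    leftSeq e i < rightSeq e i ∧ (i + 2 ≤ 2 * k → leftSeq e i < rightSeq e (i + 2))

def Compatible (k : ℕ) (e : Fin (2 * k + 1) ⊕ Fin (2 * k + 1) ≃ Fin (4 * k + 2)) : Prop :=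
  ∀ i, CompatibleAt k e i

/-- `J` is a cut when exchanging the tails of the two sequences after position `J`
(see `tailSwap`) turns the zigzags of lengths `2k+1, 2k+1` into zigzags of lengths
`2k+2, 2k`. -/
def IsBalancedCut (k : ℕ) (e : Fin (2 * k + 1) ⊕ Fin (2 * k + 1) ≃ Fin (4 * k + 2)) (J : ℕ) :
    Prop :=
  J ≤ 2 * k ∧ (rightSeq e J < leftSeq e J ↔ J % 2 = 0) ∧
    (J = 0 ∨ J = 2 * k ∨ (leftSeq e (J - 1) < rightSeq e (J + 1) ↔ J % 2 = 0))

def IsShiftedCut (k : ℕ) (e : Fin (2 * k + 2) ⊕ Fin (2 * k) ≃ Fin (4 * k + 2)) (J : ℕ) : Prop :=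
  J ≤ 2 * k ∧ (J = 2 * k ∨ (leftSeq e J < rightSeq e J ↔ J % 2 = 0)) ∧
    (J = 0 ∨ (rightSeq e (J - 1) < leftSeq e (J + 1) ↔ J % 2 = 0))

instance (k e J) : Decidable (IsBalancedCut k e J) := by unfold IsBalancedCut; infer_instance

instance (k e J) : Decidable (IsShiftedCut k e J) := by unfold IsShiftedCut; infer_instance

/-- The first place where compatibility fails is a cut, or the position right after it. -/
lemma exists_isBalancedCut {e : Fin (2 * k + 1) ⊕ Fin (2 * k + 1) ≃ Fin (4 * k + 2)}
    (ha : IsZigzag (2 * k + 1) 1 (leftSeq e)) (hb : IsZigzag (2 * k + 1) 0 (rightSeq e))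
    (h : ¬ Compatible k e) : ∃ J, IsBalancedCut k e J := by
  classical
  have hex := not_forall.mp h
  set i₀ := Nat.find hex
  have hfail : ¬ CompatibleAt k e i₀ := Nat.find_spec hex
  unfold CompatibleAt at hfail
  push Not at hfail
  obtain ⟨hi₀, hpar, hfail⟩ := hfail
  have hne := leftSeq_ne_rightSeq e (i := i₀) (j := i₀) (by omega) (by omega)
  by_cases hlt : rightSeq e i₀ < leftSeq e i₀
  · refine ⟨i₀, hi₀, by omega, ?_⟩
    by_cases hend : i₀ = 0 ∨ i₀ = 2 * k
    · omega
    have hprev : CompatibleAt k e (i₀ - 2) := not_not.mp (Nat.find_min hex (by omega))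
    unfold CompatibleAt at hprev
    have hadown := ha (i₀ - 2) (by omega)
    have hbup := hb i₀ (by omega)
    rw [show i₀ - 2 + 2 = i₀ by omega] at hprev
    rw [show i₀ - 2 + 1 = i₀ - 1 by omega] at hadown
    have := leftSeq_ne e (i := i₀ - 2) (j := i₀ - 1) (by omega) (by omega) (by omega)
    omega
  · obtain ⟨hi₀', hcross⟩ := hfail (by omega)
    have hadown := ha i₀ (by omega)
    have hbup := hb i₀ (by omega)
    have := leftSeq_ne e (i := i₀) (j := i₀ + 1) (by omega) (by omega) (by omega)
    have := leftSeq_ne_rightSeq e (i := i₀ + 1) (j := i₀ + 1) (by omega) (by omega)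
    refine ⟨i₀ + 1, by omega, by omega, Or.inr (Or.inr ?_)⟩
    rw [Nat.add_sub_cancel, show i₀ + 1 + 1 = i₀ + 2 by omega]
    omega

/-- The cut sits at the first even `i₀` with `leftSeq e i₀ < rightSeq e i₀` (or `i₀ = 2k`),
or right before it. -/
lemma exists_isShiftedCut {e : Fin (2 * k + 2) ⊕ Fin (2 * k) ≃ Fin (4 * k + 2)}
    (hc : IsZigzag (2 * k + 2) 0 (leftSeq e)) (hd : IsZigzag (2 * k) 1 (rightSeq e)) :
    ∃ J, IsShiftedCut k e J := by
  classical
  have hex : ∃ i, i % 2 = 0 ∧ (i = 2 * k ∨ leftSeq e i < rightSeq e i) := ⟨2 * k, by omega⟩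
  set i₀ := Nat.find hex
  obtain ⟨hpar, hstop⟩ : i₀ % 2 = 0 ∧ (i₀ = 2 * k ∨ leftSeq e i₀ < rightSeq e i₀) :=
    Nat.find_spec hex
  have hi₀ : i₀ ≤ 2 * k := Nat.find_min' hex ⟨by omega, Or.inl rfl⟩
  by_cases hnext : i₀ = 0 ∨ rightSeq e (i₀ - 1) < leftSeq e (i₀ + 1)
  · exact ⟨i₀, hi₀, by omega, by omega⟩
  have hprev := Nat.find_min hex (m := i₀ - 2) (by omega)
  push Not at hprev
  have hcup := hc (i₀ - 2) (by omega)
  have hddown := hd (i₀ - 2) (by omega)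
  have hcup' := hc i₀ (by omega)
  rw [show i₀ - 2 + 1 = i₀ - 1 by omega] at hcup hddown
  have := leftSeq_ne_rightSeq e (i := i₀ - 2) (j := i₀ - 2) (by omega) (by omega)
  have := leftSeq_ne_rightSeq e (i := i₀ + 1) (j := i₀ - 1) (by omega) (by omega)
  have := rightSeq_ne e (i := i₀ - 2) (j := i₀ - 1) (by omega) (by omega) (by omega)
  refine ⟨i₀ - 1, by omega, by omega, Or.inr ?_⟩
  rw [show i₀ - 1 - 1 = i₀ - 2 by omega, show i₀ - 1 + 1 = i₀ by omega]
  omega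

end Cuts

section TailSwap

/-- The reindexing that exchanges tails at `J`: the positions `≤ J` of the long sequence and
`< J` of the short one change sides. The clamping by `2 * k` only makes the map total; it is
inactive when `J ≤ 2 * k`. -/
def tailSwap (k J : ℕ) : Fin (2 * k + 2) ⊕ Fin (2 * k) ≃ Fin (2 * k + 1) ⊕ Fin (2 * k + 1) where
  toFun := Sum.elim
    (fun i => if _ : (i : ℕ) ≤ J ∧ (i : ℕ) ≤ 2 * k then .inr ⟨i, by omega⟩
      else .inl ⟨i - 1, by omega⟩)
    (fun i => if _ : (i : ℕ) < J then .inl ⟨i, by omega⟩ else .inr ⟨i + 1, by omega⟩)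
  invFun := Sum.elim
    (fun i => if _ : (i : ℕ) < J ∧ (i : ℕ) < 2 * k then .inr ⟨i, by omega⟩
      else .inl ⟨i + 1, by omega⟩)
    (fun i => if _ : (i : ℕ) ≤ J then .inl ⟨i, by omega⟩ else .inr ⟨i - 1, by omega⟩)
  left_inv := by
    rintro (⟨i, hi⟩ | ⟨i, hi⟩) <;> simp only [Sum.elim_inl, Sum.elim_inr] <;> split_ifs <;>
      simp only [Sum.elim_inl, Sum.elim_inr] <;> split_ifs <;> grind
  right_inv := by
    rintro (⟨i, hi⟩ | ⟨i, hi⟩) <;> simp only [Sum.elim_inl, Sum.elim_inr] <;> split_ifs <;>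
      simp only [Sum.elim_inl, Sum.elim_inr] <;> split_ifs <;> grind

variable {k J i : ℕ}

section ToShifted

variable (e : Fin (2 * k + 1) ⊕ Fin (2 * k + 1) ≃ Fin (4 * k + 2))

lemma leftSeq_toShifted_of_le (hJ : J ≤ 2 * k) (h : i ≤ J) :
    leftSeq ((tailSwap k J).trans e) i = rightSeq e i := by
  simp only [leftSeq, rightSeq, tailSwap, Equiv.trans_apply, Equiv.coe_fn_mk]
  grind

lemma leftSeq_toShifted_of_lt (h : J < i) (hi : i < 2 * k + 2) :
    leftSeq ((tailSwap k J).trans e) i = leftSeq e (i - 1) := by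
  simp only [leftSeq, tailSwap, Equiv.trans_apply, Equiv.coe_fn_mk]
  grind

lemma rightSeq_toShifted_of_lt (hJ : J ≤ 2 * k) (h : i < J) :
    rightSeq ((tailSwap k J).trans e) i = leftSeq e i := by
  simp only [leftSeq, rightSeq, tailSwap, Equiv.trans_apply, Equiv.coe_fn_mk]
  grind

lemma rightSeq_toShifted_of_le (h : J ≤ i) (hi : i < 2 * k) :
    rightSeq ((tailSwap k J).trans e) i = rightSeq e (i + 1) := by
  simp only [rightSeq, tailSwap, Equiv.trans_apply, Equiv.coe_fn_mk]
  grind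

end ToShifted

section ToBalanced

variable (e : Fin (2 * k + 2) ⊕ Fin (2 * k) ≃ Fin (4 * k + 2))

lemma leftSeq_toBalanced_of_lt (hJ : J ≤ 2 * k) (h : i < J) :
    leftSeq ((tailSwap k J).symm.trans e) i = rightSeq e i := by
  simp only [leftSeq, rightSeq, tailSwap, Equiv.trans_apply, Equiv.coe_fn_symm_mk]
  grind

lemma leftSeq_toBalanced_of_le (h : J ≤ i) (hi : i < 2 * k + 1) :
    leftSeq ((tailSwap k J).symm.trans e) i = leftSeq e (i + 1) := by
  simp only [leftSeq, tailSwap, Equiv.trans_apply, Equiv.coe_fn_symm_mk]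
  grind

lemma rightSeq_toBalanced_of_le (hJ : J ≤ 2 * k) (h : i ≤ J) :
    rightSeq ((tailSwap k J).symm.trans e) i = leftSeq e i := by
  simp only [leftSeq, rightSeq, tailSwap, Equiv.trans_apply, Equiv.coe_fn_symm_mk]
  grind

lemma rightSeq_toBalanced_of_lt (h : J < i) (hi : i < 2 * k + 1) :
    rightSeq ((tailSwap k J).symm.trans e) i = rightSeq e (i - 1) := by
  simp only [rightSeq, tailSwap, Equiv.trans_apply, Equiv.coe_fn_symm_mk]
  grind

end ToBalanced

end TailSwap

section Transfer

variable {k J : ℕ}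

lemma not_compatible_of_isBalancedCut {e : Fin (2 * k + 1) ⊕ Fin (2 * k + 1) ≃ Fin (4 * k + 2)}
    (hcut : IsBalancedCut k e J) : ¬ Compatible k e := by
  obtain ⟨hJ, hcol, hrow⟩ := hcut
  intro hcomp
  rcases Nat.mod_two_eq_zero_or_one J with hpar | hpar
  · have := hcomp J hJ hpar
    omega
  · have hprev := hcomp (J - 1) (by omega) (by omega)
    have := leftSeq_ne_rightSeq e (i := J - 1) (j := J + 1) (by omega) (by omega)
    rw [show J - 1 + 2 = J + 1 by omega] at hprev
    omega

lemma isShiftedCut_toShifted_iff {e : Fin (2 * k + 1) ⊕ Fin (2 * k + 1) ≃ Fin (4 * k + 2)}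
    {i : ℕ} (hJ : J ≤ 2 * k) (hi : i < J) :
    IsShiftedCut k ((tailSwap k J).trans e) i ↔ IsBalancedCut k e i := by
  unfold IsShiftedCut IsBalancedCut
  rw [leftSeq_toShifted_of_le e hJ hi.le, rightSeq_toShifted_of_lt e hJ hi,
    rightSeq_toShifted_of_lt e hJ (by omega : i - 1 < J),
    leftSeq_toShifted_of_le e hJ (by omega : i + 1 ≤ J)]
  omega

section ToShifted

variable {e : Fin (2 * k + 1) ⊕ Fin (2 * k + 1) ≃ Fin (4 * k + 2)}
  (ha : IsZigzag (2 * k + 1) 1 (leftSeq e)) (hb : IsZigzag (2 * k + 1) 0 (rightSeq e))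
include ha hb

lemma isZigzag_leftSeq_toShifted (hcut : IsBalancedCut k e J) :
    IsZigzag (2 * k + 2) 0 (leftSeq ((tailSwap k J).trans e)) := by
  have hJ := hcut.1
  intro i hi
  rcases Nat.lt_trichotomy i J with h | rfl | h
  · rw [leftSeq_toShifted_of_le e hJ h.le, leftSeq_toShifted_of_le e hJ h]
    exact hb i (by omega)
  · rw [leftSeq_toShifted_of_le e hJ le_rfl, leftSeq_toShifted_of_lt e (by omega) hi,
      Nat.add_sub_cancel]
    exact hcut.2.1
  · rw [leftSeq_toShifted_of_lt e h (by omega), leftSeq_toShifted_of_lt e (by omega) hi,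
      Nat.add_sub_cancel]
    have := ha (i - 1) (by omega)
    rw [show i - 1 + 1 = i by omega] at this
    omega

lemma isZigzag_rightSeq_toShifted (hcut : IsBalancedCut k e J) :
    IsZigzag (2 * k) 1 (rightSeq ((tailSwap k J).trans e)) := by
  have hJ := hcut.1
  intro i hi
  rcases Nat.lt_trichotomy (i + 1) J with h | h | h
  · rw [rightSeq_toShifted_of_lt e hJ (by omega), rightSeq_toShifted_of_lt e hJ h]
    exact ha i (by omega)
  · rw [rightSeq_toShifted_of_lt e hJ (by omega), rightSeq_toShifted_of_le e (by omega) hi]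
    have := hcut.2.2
    rw [show J - 1 = i by omega, show J + 1 = i + 1 + 1 by omega] at this
    omega
  · rw [rightSeq_toShifted_of_le e (by omega) (by omega), rightSeq_toShifted_of_le e (by omega) hi]
    have := hb (i + 1) (by omega)
    omega

lemma isShiftedCut_toShifted (hJ : J ≤ 2 * k) : IsShiftedCut k ((tailSwap k J).trans e) J := by
  refine ⟨hJ, ?_, ?_⟩
  · by_cases hend : J = 2 * k
    · exact Or.inl hend
    rw [leftSeq_toShifted_of_le e hJ le_rfl, rightSeq_toShifted_of_le e le_rfl (by omega)]
    exact Or.inr (hb J (by omega))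
  · by_cases hstart : J = 0
    · exact Or.inl hstart
    rw [rightSeq_toShifted_of_lt e hJ (by omega), leftSeq_toShifted_of_lt e (by omega) (by omega),
      Nat.add_sub_cancel]
    have := ha (J - 1) (by omega)
    rw [show J - 1 + 1 = J by omega] at this
    omega

end ToShifted

lemma isBalancedCut_toBalanced_iff {e : Fin (2 * k + 2) ⊕ Fin (2 * k) ≃ Fin (4 * k + 2)}
    {i : ℕ} (hJ : J ≤ 2 * k) (hi : i < J) :
    IsBalancedCut k ((tailSwap k J).symm.trans e) i ↔ IsShiftedCut k e i := by
  unfold IsShiftedCut IsBalancedCut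
  rw [rightSeq_toBalanced_of_le e hJ hi.le, leftSeq_toBalanced_of_lt e hJ hi,
    leftSeq_toBalanced_of_lt e hJ (by omega : i - 1 < J),
    rightSeq_toBalanced_of_le e hJ (by omega : i + 1 ≤ J)]
  omega

section ToBalanced

variable {e : Fin (2 * k + 2) ⊕ Fin (2 * k) ≃ Fin (4 * k + 2)}
  (hc : IsZigzag (2 * k + 2) 0 (leftSeq e)) (hd : IsZigzag (2 * k) 1 (rightSeq e))
include hc hd

lemma isZigzag_leftSeq_toBalanced (hcut : IsShiftedCut k e J) :
    IsZigzag (2 * k + 1) 1 (leftSeq ((tailSwap k J).symm.trans e)) := by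
  have hJ := hcut.1
  intro i hi
  rcases Nat.lt_trichotomy (i + 1) J with h | h | h
  · rw [leftSeq_toBalanced_of_lt e hJ (by omega), leftSeq_toBalanced_of_lt e hJ h]
    exact hd i (by omega)
  · rw [leftSeq_toBalanced_of_lt e hJ (by omega), leftSeq_toBalanced_of_le e (by omega) hi]
    have := hcut.2.2
    rw [show J - 1 = i by omega, show J + 1 = i + 1 + 1 by omega] at this
    omega
  · rw [leftSeq_toBalanced_of_le e (by omega) (by omega), leftSeq_toBalanced_of_le e (by omega) hi]
    have := hc (i + 1) (by omega)
    omega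

lemma isZigzag_rightSeq_toBalanced (hcut : IsShiftedCut k e J) :
    IsZigzag (2 * k + 1) 0 (rightSeq ((tailSwap k J).symm.trans e)) := by
  have hJ := hcut.1
  intro i hi
  rcases Nat.lt_trichotomy i J with h | rfl | h
  · rw [rightSeq_toBalanced_of_le e hJ h.le, rightSeq_toBalanced_of_le e hJ h]
    exact hc i (by omega)
  · rw [rightSeq_toBalanced_of_le e hJ le_rfl, rightSeq_toBalanced_of_lt e (by omega) hi,
      Nat.add_sub_cancel]
    have := hcut.2.1
    omega
  · rw [rightSeq_toBalanced_of_lt e h (by omega), rightSeq_toBalanced_of_lt e (by omega) hi,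
      Nat.add_sub_cancel]
    have := hd (i - 1) (by omega)
    rw [show i - 1 + 1 = i by omega] at this
    omega

lemma isBalancedCut_toBalanced (hJ : J ≤ 2 * k) :
    IsBalancedCut k ((tailSwap k J).symm.trans e) J := by
  refine ⟨hJ, ?_, ?_⟩
  · rw [rightSeq_toBalanced_of_le e hJ le_rfl, leftSeq_toBalanced_of_le e le_rfl (by omega)]
    have := hc J (by omega)
    omega
  · by_cases hend : J = 0 ∨ J = 2 * k
    · omega
    rw [leftSeq_toBalanced_of_lt e hJ (by omega), rightSeq_toBalanced_of_lt e (by omega) (by omega),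
      Nat.add_sub_cancel]
    have := hd (J - 1) (by omega)
    rw [show J - 1 + 1 = J by omega] at this
    omega

end ToBalanced

end Transfer

section Involution

variable {k : ℕ}

abbrev BalancedPair (k : ℕ) := {e : Fin (2 * k + 1) ⊕ Fin (2 * k + 1) ≃ Fin (4 * k + 2) //
  IsZigzag (2 * k + 1) 1 (leftSeq e) ∧ IsZigzag (2 * k + 1) 0 (rightSeq e)}

abbrev ShiftedPair (k : ℕ) := {e : Fin (2 * k + 2) ⊕ Fin (2 * k) ≃ Fin (4 * k + 2) //
  IsZigzag (2 * k + 2) 0 (leftSeq e) ∧ IsZigzag (2 * k) 1 (rightSeq e)}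

lemma find_isShiftedCut_toShifted {e : Fin (2 * k + 1) ⊕ Fin (2 * k + 1) ≃ Fin (4 * k + 2)}
    (ha : IsZigzag (2 * k + 1) 1 (leftSeq e)) (hb : IsZigzag (2 * k + 1) 0 (rightSeq e))
    (hex : ∃ J, IsBalancedCut k e J)
    (hex' : ∃ J, IsShiftedCut k ((tailSwap k (Nat.find hex)).trans e) J) :
    Nat.find hex' = Nat.find hex :=
  (Nat.find_eq_iff _).mpr ⟨isShiftedCut_toShifted ha hb (Nat.find_spec hex).1, fun _ hi =>
    (isShiftedCut_toShifted_iff (Nat.find_spec hex).1 hi).not.mpr (Nat.find_min hex hi)⟩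

lemma find_isBalancedCut_toBalanced {e : Fin (2 * k + 2) ⊕ Fin (2 * k) ≃ Fin (4 * k + 2)}
    (hc : IsZigzag (2 * k + 2) 0 (leftSeq e)) (hd : IsZigzag (2 * k) 1 (rightSeq e))
    (hex : ∃ J, IsShiftedCut k e J)
    (hex' : ∃ J, IsBalancedCut k ((tailSwap k (Nat.find hex)).symm.trans e) J) :
    Nat.find hex' = Nat.find hex :=
  (Nat.find_eq_iff _).mpr ⟨isBalancedCut_toBalanced hc hd (Nat.find_spec hex).1, fun _ hi =>
    (isBalancedCut_toBalanced_iff (Nat.find_spec hex).1 hi).not.mpr (Nat.find_min hex hi)⟩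

/-- Exchanging the tails at the first cut; the inverse exchanges them back at the first cut of
the image, which is the same position. -/
noncomputable def crossingEquiv (k : ℕ) :
    {x : BalancedPair k // ¬ Compatible k x.1} ≃ ShiftedPair k where
  toFun x :=
    have hex := exists_isBalancedCut x.1.2.1 x.1.2.2 x.2
    ⟨(tailSwap k (Nat.find hex)).trans x.1.1,
      isZigzag_leftSeq_toShifted x.1.2.1 x.1.2.2 (Nat.find_spec hex),
      isZigzag_rightSeq_toShifted x.1.2.1 x.1.2.2 (Nat.find_spec hex)⟩
  invFun y :=
    have hex := exists_isShiftedCut y.2.1 y.2.2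
    ⟨⟨(tailSwap k (Nat.find hex)).symm.trans y.1,
        isZigzag_leftSeq_toBalanced y.2.1 y.2.2 (Nat.find_spec hex),
        isZigzag_rightSeq_toBalanced y.2.1 y.2.2 (Nat.find_spec hex)⟩,
      not_compatible_of_isBalancedCut
        (isBalancedCut_toBalanced y.2.1 y.2.2 (Nat.find_spec hex).1)⟩
  left_inv x := by
    refine Subtype.ext (Subtype.ext ?_)
    dsimp only
    rw [find_isShiftedCut_toShifted x.1.2.1 x.1.2.2, ← Equiv.trans_assoc, Equiv.symm_trans_self,
      Equiv.refl_trans]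
  right_inv y := by
    refine Subtype.ext ?_
    dsimp only
    rw [find_isBalancedCut_toBalanced y.2.1 y.2.2, ← Equiv.trans_assoc, Equiv.self_trans_symm,
      Equiv.refl_trans]

lemma card_compatible_add_card_shiftedPair (k : ℕ) :
    Nat.card {x : BalancedPair k // Compatible k x.1} + Nat.card (ShiftedPair k) =
      Nat.card (BalancedPair k) := by
  classical
  rw [← Nat.card_congr (crossingEquiv k), ← Nat.card_sum,
    Nat.card_congr (Equiv.sumCompl fun x : BalancedPair k => Compatible k x.1)]

lemma card_balancedPair (k : ℕ) :
    Nat.card (BalancedPair k) = (4 * k + 2).choose (2 * k + 1) * updownCount (2 * k + 1) ^ 2 := by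
  rw [card_isZigzag_shuffle (by omega), card_isZigzag_one, card_isZigzag_zero, mul_assoc, sq]

lemma card_shiftedPair (k : ℕ) :
    Nat.card (ShiftedPair k) =
      (4 * k + 2).choose (2 * k + 2) * updownCount (2 * k + 2) * updownCount (2 * k) := by
  rw [card_isZigzag_shuffle (by omega), card_isZigzag_one, card_isZigzag_zero]

end Involution

section Tableaux

def Precedes (x y : ℤ × ℤ) : Prop :=
  (x.1 = y.1 ∧ x.2 < y.2) ∨ (x.2 = y.2 ∧ x.1 < y.1)

def IsStandard {D : Finset (ℤ × ℤ)} (f : {x // x ∈ D} ≃ Fin #D) : Prop :=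
  ∀ a b : {x // x ∈ D}, Precedes a.1 b.1 → f a < f b

lemma sytCount_eq_card_isStandard (D : Finset (ℤ × ℤ)) :
    sytCount D = Nat.card {f : {x // x ∈ D} ≃ Fin #D // IsStandard f} :=
  rfl

lemma isStandard_of_neighbors {D : Finset (ℤ × ℤ)} (f : {x // x ∈ D} ≃ Fin #D)
    (hrow : ∀ r, {c : ℤ | (r, c) ∈ D}.OrdConnected)
    (hcol : ∀ c, {r : ℤ | (r, c) ∈ D}.OrdConnected)
    (hright : ∀ a b : {x // x ∈ D}, b.1 = (a.1.1, a.1.2 + 1) → f a < f b)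
    (hdown : ∀ a b : {x // x ∈ D}, b.1 = (a.1.1 + 1, a.1.2) → f a < f b) : IsStandard f := by
  let v : ℤ × ℤ → ℕ := fun x => if h : x ∈ D then f ⟨x, h⟩ else 0
  have hv : ∀ a : {x // x ∈ D}, v a = f a := fun a => dif_pos a.2
  rintro ⟨⟨r, c⟩, ha⟩ ⟨⟨r', c'⟩, hb⟩ (⟨rfl, hlt⟩ | ⟨rfl, hlt⟩)
  · have hmono : StrictMonoOn (fun c => v (r, c)) {c | (r, c) ∈ D} :=
      strictMonoOn_of_lt_add_one (hrow r) fun c _ h₁ h₂ => by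
        simpa only [hv ⟨_, h₁⟩, hv ⟨_, h₂⟩, Fin.val_fin_lt] using hright ⟨_, h₁⟩ ⟨_, h₂⟩ rfl
    simpa only [hv ⟨_, ha⟩, hv ⟨_, hb⟩, Fin.val_fin_lt] using hmono ha hb hlt
  · have hmono : StrictMonoOn (fun r => v (r, c)) {r | (r, c) ∈ D} :=
      strictMonoOn_of_lt_add_one (hcol c) fun r _ h₁ h₂ => by
        simpa only [hv ⟨_, h₁⟩, hv ⟨_, h₂⟩, Fin.val_fin_lt] using hdown ⟨_, h₁⟩ ⟨_, h₂⟩ rfl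
    simpa only [hv ⟨_, ha⟩, hv ⟨_, hb⟩, Fin.val_fin_lt] using hmono ha hb hlt

end Tableaux

section Diagram

variable {k : ℕ}

noncomputable def cornerlessStrip (n : ℕ) : Finset (ℤ × ℤ) :=
  ((strip 4 n).erase (1, (n : ℤ))).erase ((n : ℤ) + 3, 1)

lemma mem_cornerlessStrip {r c : ℤ} :
    (r, c) ∈ cornerlessStrip (k + 1) ↔ 1 ≤ c ∧ c ≤ k + 1 ∧ k + 2 ≤ r + c ∧ r + c ≤ k + 5 ∧
      ¬(r = 1 ∧ c = k + 1) ∧ ¬(r = k + 4 ∧ c = 1) := by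
  simp only [cornerlessStrip, strip, mem_erase, mem_filter, mem_product, mem_Icc, ne_eq,
    Prod.mk.injEq]
  push_cast
  omega

/-- The cells of the cornerless strip with `r + c ≤ k + 3`, listed column by column, in each
column first the lower one: a down-up path `(k+2, 1), (k+1, 1), (k+1, 2), (k, 2), …`. -/
def upperCell (k K : ℕ) : ℤ × ℤ :=
  ((k : ℤ) + 2 - (K : ℤ) / 2 - (K : ℤ) % 2, (K : ℤ) / 2 + 1)

/-- The cells with `r + c ≥ k + 4`: the up-down path `(k+3, 1), (k+3, 2), (k+2, 2), …`. -/
def lowerCell (k K : ℕ) : ℤ × ℤ :=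
  ((k : ℤ) + 3 - (K : ℤ) / 2, (K : ℤ) / 2 + 1 + (K : ℤ) % 2)

def ribbonCell (k : ℕ) : Fin (2 * k + 1) ⊕ Fin (2 * k + 1) → ℤ × ℤ :=
  Sum.elim (fun K => upperCell k K) (fun K => lowerCell k K)

lemma ribbonCell_mem (s : Fin (2 * k + 1) ⊕ Fin (2 * k + 1)) :
    ribbonCell k s ∈ cornerlessStrip (k + 1) := by
  rcases s with ⟨K, hK⟩ | ⟨K, hK⟩ <;>
    simp only [ribbonCell, Sum.elim_inl, Sum.elim_inr, upperCell, lowerCell,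
      mem_cornerlessStrip] <;> omega

lemma ribbonCell_injective : Function.Injective (ribbonCell k) := by
  rintro (⟨K, hK⟩ | ⟨K, hK⟩) (⟨K', hK'⟩ | ⟨K', hK'⟩) h <;>
    simp only [ribbonCell, Sum.elim_inl, Sum.elim_inr, upperCell, lowerCell,
      Prod.mk.injEq] at h <;>
    simp only [Sum.inl.injEq, Sum.inr.injEq, Fin.mk.injEq, reduceCtorEq] <;> omega

lemma exists_ribbonCell_eq {x : ℤ × ℤ} (hx : x ∈ cornerlessStrip (k + 1)) :
    ∃ s, ribbonCell k s = x := by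
  obtain ⟨r, c⟩ := x
  rw [mem_cornerlessStrip] at hx
  obtain h | h | h | h : r + c = k + 2 ∨ r + c = k + 3 ∨ r + c = k + 4 ∨ r + c = k + 5 := by
    omega
  · refine ⟨.inl ⟨(2 * c - 1).toNat, by omega⟩, ?_⟩
    simp only [ribbonCell, Sum.elim_inl, upperCell, Prod.mk.injEq]
    omega
  · refine ⟨.inl ⟨(2 * c - 2).toNat, by omega⟩, ?_⟩
    simp only [ribbonCell, Sum.elim_inl, upperCell, Prod.mk.injEq]
    omega
  · refine ⟨.inr ⟨(2 * c - 2).toNat, by omega⟩, ?_⟩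
    simp only [ribbonCell, Sum.elim_inr, lowerCell, Prod.mk.injEq]
    omega
  · refine ⟨.inr ⟨(2 * c - 3).toNat, by omega⟩, ?_⟩
    simp only [ribbonCell, Sum.elim_inr, lowerCell, Prod.mk.injEq]
    omega

noncomputable def ribbonEquiv (k : ℕ) :
    Fin (2 * k + 1) ⊕ Fin (2 * k + 1) ≃ {x // x ∈ cornerlessStrip (k + 1)} :=
  Equiv.ofBijective (fun s => ⟨ribbonCell k s, ribbonCell_mem s⟩)
    ⟨fun _ _ h => ribbonCell_injective (congrArg Subtype.val h),
      fun x => (exists_ribbonCell_eq x.2).imp fun _ hs => Subtype.ext hs⟩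

lemma card_cornerlessStrip (k : ℕ) : #(cornerlessStrip (k + 1)) = 4 * k + 2 := by
  have := Fintype.card_congr (ribbonEquiv k)
  simp only [Fintype.card_sum, Fintype.card_fin, Fintype.card_coe] at this
  omega

lemma ordConnected_row (r : ℤ) : {c : ℤ | (r, c) ∈ cornerlessStrip (k + 1)}.OrdConnected :=
  ⟨fun _ h₁ _ h₂ _ hc => by
    simp only [Set.mem_ofPred_eq, Set.mem_Icc, mem_cornerlessStrip] at h₁ h₂ hc ⊢
    omega⟩

lemma ordConnected_column (c : ℤ) : {r : ℤ | (r, c) ∈ cornerlessStrip (k + 1)}.OrdConnected :=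
  ⟨fun _ h₁ _ h₂ _ hr => by
    simp only [Set.mem_ofPred_eq, Set.mem_Icc, mem_cornerlessStrip] at h₁ h₂ hr ⊢
    omega⟩

end Diagram

section Neighbors

variable {k : ℕ} {e : Fin (2 * k + 1) ⊕ Fin (2 * k + 1) ≃ Fin (4 * k + 2)}
  (ha : IsZigzag (2 * k + 1) 1 (leftSeq e)) (hb : IsZigzag (2 * k + 1) 0 (rightSeq e))
  (hcomp : Compatible k e)
include ha hb hcomp

lemma lt_of_right_neighbor {s t : Fin (2 * k + 1) ⊕ Fin (2 * k + 1)}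
    (h : ribbonCell k t = ((ribbonCell k s).1, (ribbonCell k s).2 + 1)) : (e s : ℕ) < e t := by
  rcases s with ⟨K, hK⟩ | ⟨K, hK⟩ <;> rcases t with ⟨K', hK'⟩ | ⟨K', hK'⟩ <;>
    simp only [ribbonCell, Sum.elim_inl, Sum.elim_inr, upperCell, lowerCell,
      Prod.mk.injEq] at h <;>
    simp only [← leftSeq_of_lt, ← rightSeq_of_lt]
  · obtain ⟨rfl, hodd⟩ : K' = K + 1 ∧ K % 2 = 1 := by omega
    exact (ha K hK').mpr hodd
  · obtain ⟨rfl, heven⟩ : K' = K + 2 ∧ K % 2 = 0 := by omega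
    exact (hcomp K (by omega) heven).2 (by omega)
  · omega
  · obtain ⟨rfl, heven⟩ : K' = K + 1 ∧ K % 2 = 0 := by omega
    exact (hb K hK').mpr heven

lemma lt_of_lower_neighbor {s t : Fin (2 * k + 1) ⊕ Fin (2 * k + 1)}
    (h : ribbonCell k t = ((ribbonCell k s).1 + 1, (ribbonCell k s).2)) : (e s : ℕ) < e t := by
  rcases s with ⟨K, hK⟩ | ⟨K, hK⟩ <;> rcases t with ⟨K', hK'⟩ | ⟨K', hK'⟩ <;>
    simp only [ribbonCell, Sum.elim_inl, Sum.elim_inr, upperCell, lowerCell,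
      Prod.mk.injEq] at h <;>
    simp only [← leftSeq_of_lt, ← rightSeq_of_lt]
  · obtain ⟨rfl, heven⟩ : K = K' + 1 ∧ K' % 2 = 0 := by omega
    have := leftSeq_ne e (i := K' + 1) (j := K') hK hK' (by omega)
    have := ha K' hK
    omega
  · obtain ⟨rfl, heven⟩ : K = K' ∧ K % 2 = 0 := by omega
    exact (hcomp K (by omega) heven).1
  · omega
  · obtain ⟨rfl, hodd⟩ : K = K' + 1 ∧ K' % 2 = 1 := by omega
    have := rightSeq_ne e (i := K' + 1) (j := K') hK hK' (by omega)
    have := hb K' hK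
    omega

end Neighbors

section Relabel

variable {k : ℕ}

noncomputable def relabel (k : ℕ) :
    ({x // x ∈ cornerlessStrip (k + 1)} ≃ Fin #(cornerlessStrip (k + 1))) ≃
      (Fin (2 * k + 1) ⊕ Fin (2 * k + 1) ≃ Fin (4 * k + 2)) :=
  Equiv.equivCongr (ribbonEquiv k).symm (finCongr (card_cornerlessStrip k))

lemma val_relabel_apply (f : {x // x ∈ cornerlessStrip (k + 1)} ≃ Fin #(cornerlessStrip (k + 1)))
    (s : Fin (2 * k + 1) ⊕ Fin (2 * k + 1)) : (relabel k f s : ℕ) = f (ribbonEquiv k s) :=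
  rfl

lemma relabel_lt_of_precedes
    {f : {x // x ∈ cornerlessStrip (k + 1)} ≃ Fin #(cornerlessStrip (k + 1))} (hf : IsStandard f)
    {s t : Fin (2 * k + 1) ⊕ Fin (2 * k + 1)}
    (h : Precedes (ribbonCell k s) (ribbonCell k t)) : (relabel k f s : ℕ) < relabel k f t := by
  rw [val_relabel_apply, val_relabel_apply]
  exact hf _ _ h

lemma isZigzag_and_compatible_relabel
    {f : {x // x ∈ cornerlessStrip (k + 1)} ≃ Fin #(cornerlessStrip (k + 1))} (hf : IsStandard f) :
    (IsZigzag (2 * k + 1) 1 (leftSeq (relabel k f)) ∧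
      IsZigzag (2 * k + 1) 0 (rightSeq (relabel k f))) ∧ Compatible k (relabel k f) := by
  refine ⟨⟨fun i hi => ?_, fun i hi => ?_⟩, fun i hi hpar => ⟨?_, fun hi' => ?_⟩⟩
  · rw [leftSeq_of_lt _ (by omega), leftSeq_of_lt _ hi]
    rcases Nat.mod_two_eq_zero_or_one i with hpar | hpar
    · have := relabel_lt_of_precedes hf (s := .inl ⟨i + 1, hi⟩) (t := .inl ⟨i, by omega⟩)
        (by simp only [Precedes, ribbonCell, Sum.elim_inl, upperCell]; omega)
      omega
    · have := relabel_lt_of_precedes hf (s := .inl ⟨i, by omega⟩) (t := .inl ⟨i + 1, hi⟩)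
        (by simp only [Precedes, ribbonCell, Sum.elim_inl, upperCell]; omega)
      omega
  · rw [rightSeq_of_lt _ (by omega), rightSeq_of_lt _ hi]
    rcases Nat.mod_two_eq_zero_or_one i with hpar | hpar
    · have := relabel_lt_of_precedes hf (s := .inr ⟨i, by omega⟩) (t := .inr ⟨i + 1, hi⟩)
        (by simp only [Precedes, ribbonCell, Sum.elim_inr, lowerCell]; omega)
      omega
    · have := relabel_lt_of_precedes hf (s := .inr ⟨i + 1, hi⟩) (t := .inr ⟨i, by omega⟩)
        (by simp only [Precedes, ribbonCell, Sum.elim_inr, lowerCell]; omega)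
      omega
  all_goals
    rw [leftSeq_of_lt _ (by omega), rightSeq_of_lt _ (by omega)]
    exact relabel_lt_of_precedes hf
      (by simp only [Precedes, ribbonCell, Sum.elim_inl, Sum.elim_inr, upperCell, lowerCell]; omega)

lemma isStandard_of_relabel
    {f : {x // x ∈ cornerlessStrip (k + 1)} ≃ Fin #(cornerlessStrip (k + 1))}
    (ha : IsZigzag (2 * k + 1) 1 (leftSeq (relabel k f)))
    (hb : IsZigzag (2 * k + 1) 0 (rightSeq (relabel k f))) (hcomp : Compatible k (relabel k f)) :
    IsStandard f := by
  refine isStandard_of_neighbors f ordConnected_row ordConnected_column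
    (fun a b h => ?_) (fun a b h => ?_)
  all_goals
    obtain ⟨s, rfl⟩ := (ribbonEquiv k).surjective a
    obtain ⟨t, rfl⟩ := (ribbonEquiv k).surjective b
    rw [← Fin.val_fin_lt, ← val_relabel_apply, ← val_relabel_apply]
  · exact lt_of_right_neighbor ha hb hcomp h
  · exact lt_of_lower_neighbor ha hb hcomp h

lemma sytCount_cornerlessStrip (k : ℕ) :
    sytCount (cornerlessStrip (k + 1)) = Nat.card {x : BalancedPair k // Compatible k x.1} := by
  have hstd : ∀ f, IsStandard f ↔ (IsZigzag (2 * k + 1) 1 (leftSeq (relabel k f)) ∧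
      IsZigzag (2 * k + 1) 0 (rightSeq (relabel k f))) ∧ Compatible k (relabel k f) := fun _ =>
    ⟨isZigzag_and_compatible_relabel, fun ⟨⟨ha, hb⟩, hcomp⟩ => isStandard_of_relabel ha hb hcomp⟩
  rw [sytCount_eq_card_isStandard]
  exact Nat.card_congr ((Equiv.subtypeEquiv (relabel k) hstd).trans
    (Equiv.subtypeSubtypeEquivSubtypeInter _ _).symm)

end Relabel

lemma sytCount_cornerlessStrip_add (k : ℕ) :
    sytCount (cornerlessStrip (k + 1)) +
        (4 * k + 2).choose (2 * k + 2) * updownCount (2 * k + 2) * updownCount (2 * k) =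
      (4 * k + 2).choose (2 * k + 1) * updownCount (2 * k + 1) ^ 2 := by
  rw [sytCount_cornerlessStrip, ← card_shiftedPair, ← card_balancedPair]
  exact card_compatible_add_card_shiftedPair k

lemma cast_sytCount_cornerlessStrip (k : ℕ) :
    (sytCount (cornerlessStrip (k + 1)) : ℚ) =
      ((4 * k + 2).factorial : ℚ) *
        ((updownCount (2 * k + 1) : ℚ) ^ 2 / ((2 * k + 1).factorial : ℚ) ^ 2 -
          (updownCount (2 * k) : ℚ) * (updownCount (2 * k + 2) : ℚ) /
            (((2 * k).factorial : ℚ) * ((2 * k + 2).factorial : ℚ))) := by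
  have h := congrArg (Nat.cast : ℕ → ℚ) (sytCount_cornerlessStrip_add k)
  push_cast at h
  rw [Nat.cast_choose ℚ (by omega : 2 * k + 2 ≤ 4 * k + 2),
    Nat.cast_choose ℚ (by omega : 2 * k + 1 ≤ 4 * k + 2),
    show 4 * k + 2 - (2 * k + 2) = 2 * k by omega,
    show 4 * k + 2 - (2 * k + 1) = 2 * k + 1 by omega] at h
  linear_combination h

end FourStrip

/-- The number of SYT of the 4-strip with both extreme corner cells removed equals
`(4n−2)! · ( A_{2n−1}²/((2n−1)!)² − A_{2n−2}·A_{2n}/((2n−2)!·(2n)!) )`. -/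
theorem syt_fourStrip_bothCornersRemoved (n : ℕ) (hn : 1 ≤ n) :
    (sytCount (((strip 4 n).erase (1, (n : ℤ))).erase ((n : ℤ) + 3, 1)) : ℚ) =
      (Nat.factorial (4 * n - 2) : ℚ) *
        ((updownCount (2 * n - 1) : ℚ) ^ 2 / ((Nat.factorial (2 * n - 1) : ℚ)) ^ 2 -
          (updownCount (2 * n - 2) : ℚ) * (updownCount (2 * n) : ℚ) /
            ((Nat.factorial (2 * n - 2) : ℚ) * (Nat.factorial (2 * n) : ℚ))) := by
  obtain ⟨k, rfl⟩ := Nat.exists_eq_add_of_le' hn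
  rw [show 4 * (k + 1) - 2 = 4 * k + 2 by omega, show 2 * (k + 1) - 1 = 2 * k + 1 by omega,
    show 2 * (k + 1) - 2 = 2 * k by omega, show 2 * (k + 1) = 2 * k + 2 by omega]
  exact FourStrip.cast_sytCount_cornerlessStrip k
end

section
/- Fix integers n ≥ 1 and p,q ≥ 0. Let α_n be the number of permutations σ of {1,…,2n+p+q} whose descent set {i : σ(i) > σ(i+1)} is exactly {1,2,…,p} ∪ {p+1, p+3, p+5, …, p+2n−1} ∪ {p+2n, p+2n+1, …, p+2n+q−1}. Then α_n = (2n+p+q)! · X_{2n−1}(p,q). -/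
/-- `Ā_j = A_j / j!`. -/
noncomputable def Abar (j : ℕ) : ℝ := (updownCount j : ℝ) / (Nat.factorial j : ℝ)

/-- The quantity `X_N(p,q)` of Romik–Eremenko. -/
noncomputable def XN (N p q : ℕ) : ℝ :=
  (∑ i ∈ Finset.range (p / 2 + 1), ∑ j ∈ Finset.range (q / 2 + 1),
      (-1 : ℝ) ^ (i + j) * Abar (N + 2 * i + 2 * j + 1) /
        ((Nat.factorial (p - 2 * i) : ℝ) * (Nat.factorial (q - 2 * j) : ℝ)))
  + (if Odd p then
      (-1 : ℝ) ^ ((p + 1) / 2) * ∑ j ∈ Finset.range (q / 2 + 1),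
        (-1 : ℝ) ^ j * Abar (N + p + 2 * j + 1) / (Nat.factorial (q - 2 * j) : ℝ)
    else 0)
  + (if Odd q then
      (-1 : ℝ) ^ ((q + 1) / 2) * ∑ i ∈ Finset.range (p / 2 + 1),
        (-1 : ℝ) ^ i * Abar (N + q + 2 * i + 1) / (Nat.factorial (p - 2 * i) : ℝ)
    else 0)
  + (if Odd p ∧ Odd q then (-1 : ℝ) ^ ((p + q) / 2 + 1) * Abar (N + p + q + 1) else 0)

/-- The number of permutations of `{1, …, m}` whose descent set (with positions
indexed `1, …, m−1`) is exactly the set `S`. -/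
noncomputable def descentSetCount (m : ℕ) (S : Finset ℕ) : ℕ :=
  Nat.card {σ : Equiv.Perm (Fin m) //
    ∀ i : Fin m, ∀ h : (i : ℕ) + 1 < m,
      (σ ⟨(i : ℕ) + 1, h⟩ < σ i ↔ (i : ℕ) + 1 ∈ S)}

namespace AlphaAux

open Finset Equiv

def DesP (m : ℕ) (S : Finset ℕ) (σ : Equiv.Perm (Fin m)) : Prop :=
  ∀ i : Fin m, ∀ h : (i : ℕ) + 1 < m, (σ ⟨(i : ℕ) + 1, h⟩ < σ i ↔ (i : ℕ) + 1 ∈ S)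

lemma descentSetCount_eq (m : ℕ) (S : Finset ℕ) :
    descentSetCount m S = Nat.card {σ : Equiv.Perm (Fin m) // DesP m S σ} := rfl

lemma lt_iff_not_lt' {m : ℕ} {a b : Fin m} (hne : a ≠ b) : a < b ↔ ¬ b < a :=
  ⟨fun h h' => absurd (h.trans h') (lt_irrefl a), fun h => hne.lt_or_gt.resolve_right h⟩

lemma descCount_congr {m : ℕ} {S S' : Finset ℕ}
    (h : ∀ j, 1 ≤ j → j < m → (j ∈ S ↔ j ∈ S')) :
    descentSetCount m S = descentSetCount m S' := by
  rw [descentSetCount_eq, descentSetCount_eq]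
  refine Nat.card_congr (Equiv.subtypeEquivRight fun σ => ?_)
  constructor <;> intro H i hi
  · exact (H i hi).trans (h _ (by omega) hi)
  · exact (H i hi).trans (h _ (by omega) hi).symm

/-- value-complement equiv -/
def compEquiv (m : ℕ) : Equiv.Perm (Fin m) ≃ Equiv.Perm (Fin m) where
  toFun σ := σ.trans Fin.revPerm
  invFun σ := σ.trans Fin.revPerm
  left_inv σ := by ext i; simp
  right_inv σ := by ext i; simp

lemma compEquiv_desc {m : ℕ} (σ : Equiv.Perm (Fin m)) (i : Fin m) (h : (i : ℕ) + 1 < m) :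
    ((compEquiv m σ) ⟨(i : ℕ) + 1, h⟩ < (compEquiv m σ) i ↔ ¬ (σ ⟨(i : ℕ) + 1, h⟩ < σ i)) := by
  have hne : σ ⟨(i : ℕ) + 1, h⟩ ≠ σ i := by
    intro hc
    have h3 := congrArg Fin.val (σ.injective hc)
    simp at h3
  show (σ ⟨(i : ℕ) + 1, h⟩).rev < (σ i).rev ↔ _
  rw [Fin.rev_lt_rev]
  exact (lt_iff_not_lt' hne.symm).trans (by tauto)

lemma descCount_compl {m : ℕ} {S S' : Finset ℕ}
    (h : ∀ j, 1 ≤ j → j < m → (j ∈ S' ↔ j ∉ S)) :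
    descentSetCount m S = descentSetCount m S' := by
  rw [descentSetCount_eq, descentSetCount_eq]
  refine Nat.card_congr (Equiv.subtypeEquiv (compEquiv m) fun σ => ?_)
  constructor <;> intro H i hi
  · rw [compEquiv_desc σ i hi, H i hi, h _ (by omega) hi]
  · have := H i hi
    rw [compEquiv_desc σ i hi, h _ (by omega) hi] at this
    constructor
    · intro hd; by_contra hs; exact (this.mpr hs) hd
    · intro hs; by_contra hd; exact (this.mp hd) hs

/-- full reversal (reverse positions and values) -/
def revAllEquiv (m : ℕ) : Equiv.Perm (Fin m) ≃ Equiv.Perm (Fin m) where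
  toFun σ := (Fin.revPerm.trans σ).trans Fin.revPerm
  invFun σ := (Fin.revPerm.trans σ).trans Fin.revPerm
  left_inv σ := by ext i; simp
  right_inv σ := by ext i; simp

lemma DesP_revAll {m : ℕ} {S S' : Finset ℕ}
    (h : ∀ j, 1 ≤ j → j < m → (j ∈ S' ↔ (m - j) ∈ S)) {σ : Equiv.Perm (Fin m)}
    (H : DesP m S σ) : DesP m S' (revAllEquiv m σ) := by
  intro i hi
  have h2 : (m - 2 - (i : ℕ)) + 1 < m := by omega
  have e1 : (Fin.rev i) = ⟨(m - 2 - (i : ℕ)) + 1, h2⟩ := by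
    ext; simp [Fin.val_rev]; omega
  have e2 : (Fin.rev (⟨(i : ℕ) + 1, hi⟩ : Fin m)) = ⟨m - 2 - (i : ℕ), by omega⟩ := by
    ext; simp [Fin.val_rev]; omega
  have key : ((revAllEquiv m σ) ⟨(i : ℕ) + 1, hi⟩ < (revAllEquiv m σ) i ↔
      σ ⟨(m - 2 - (i : ℕ)) + 1, h2⟩ < σ ⟨m - 2 - (i : ℕ), by omega⟩) := by
    show (σ (Fin.rev ⟨(i : ℕ) + 1, hi⟩)).rev < (σ (Fin.rev i)).rev ↔ _
    rw [Fin.rev_lt_rev, e1, e2]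
  rw [key]
  have HH := H ⟨m - 2 - (i : ℕ), by omega⟩ (by simpa using h2)
  simp only at HH
  rw [show (⟨((⟨m - 2 - (i:ℕ), by omega⟩ : Fin m) : ℕ) + 1, by simpa using h2⟩ : Fin m)
      = ⟨(m - 2 - (i : ℕ)) + 1, h2⟩ from by ext; simp] at HH
  rw [HH, h _ (by omega) (by omega)]
  have : m - ((i : ℕ) + 1) = (m - 2 - (i : ℕ)) + 1 := by omega
  rw [this]

lemma descCount_revAll {m : ℕ} {S S' : Finset ℕ}
    (h : ∀ j, 1 ≤ j → j < m → (j ∈ S' ↔ (m - j) ∈ S)) :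
    descentSetCount m S = descentSetCount m S' := by
  have h' : ∀ j, 1 ≤ j → j < m → (j ∈ S ↔ (m - j) ∈ S') := by
    intro j h1 h2
    rw [h (m - j) (by omega) (by omega)]
    rw [show m - (m - j) = j from by omega]
  rw [descentSetCount_eq, descentSetCount_eq]
  refine Nat.card_congr (Equiv.subtypeEquiv (revAllEquiv m) fun σ => ⟨fun H => DesP_revAll h H, fun H => ?_⟩)
  have H2 := DesP_revAll h' H
  have e : revAllEquiv m (revAllEquiv m σ) = σ := by ext i; simp [revAllEquiv]
  rwa [e] at H2


def UDP (m : ℕ) (σ : Equiv.Perm (Fin m)) : Prop :=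
  ∀ i : Fin m, ∀ h : (i : ℕ) + 1 < m,
    if (i : ℕ) % 2 = 0 then σ i < σ ⟨(i : ℕ) + 1, h⟩ else σ ⟨(i : ℕ) + 1, h⟩ < σ i

lemma updownCount_eq (m : ℕ) :
    updownCount m = Nat.card {σ : Equiv.Perm (Fin m) // UDP m σ} := rfl

lemma fin_succ_ne {m : ℕ} (i : Fin m) (h : (i : ℕ) + 1 < m) {σ : Equiv.Perm (Fin m)} :
    σ ⟨(i : ℕ) + 1, h⟩ ≠ σ i := by
  intro hc
  have h3 := congrArg Fin.val (σ.injective hc)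
  simp at h3

lemma descCount_updown_even {m : ℕ} {S : Finset ℕ}
    (h : ∀ j, 1 ≤ j → j < m → (j ∈ S ↔ j % 2 = 0)) :
    descentSetCount m S = updownCount m := by
  rw [descentSetCount_eq, updownCount_eq]
  refine Nat.card_congr (Equiv.subtypeEquivRight fun σ => ?_)
  constructor <;> intro H i hi
  · have Hi := (H i hi).trans (h _ (by omega) hi)
    by_cases hp : (i : ℕ) % 2 = 0
    · rw [if_pos hp]
      have : ¬ (σ ⟨(i : ℕ) + 1, hi⟩ < σ i) := by rw [Hi]; omega
      exact ((lt_iff_not_lt' (fin_succ_ne i hi)).mpr · ) |>.mt (by tauto) |> fun _ =>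
        ((fin_succ_ne i hi).symm.lt_or_gt.resolve_right (by rw [Hi]; omega) : _)
    · rw [if_neg hp]
      exact Hi.mpr (by omega)
  · have Hi := H i hi
    rw [h _ (by omega) hi]
    by_cases hp : (i : ℕ) % 2 = 0
    · rw [if_pos hp] at Hi
      constructor
      · intro hd; exact absurd (hd.trans Hi) (lt_irrefl _)
      · omega
    · rw [if_neg hp] at Hi
      constructor
      · intro _; omega
      · intro _; exact Hi

lemma descCount_updown_odd {m : ℕ} {S : Finset ℕ}
    (h : ∀ j, 1 ≤ j → j < m → (j ∈ S ↔ j % 2 = 1)) :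
    descentSetCount m S = updownCount m := by
  rw [descCount_compl (S' := (Finset.range m).filter (fun j => j % 2 = 0))
    (by intro j h1 h2
        simp only [Finset.mem_filter, Finset.mem_range]
        rw [h j h1 h2]; omega)]
  refine descCount_updown_even ?_
  intro j h1 h2
  simp only [Finset.mem_filter, Finset.mem_range]
  omega

lemma DesP_at {m : ℕ} {S : Finset ℕ} {σ : Equiv.Perm (Fin m)} (H : DesP m S σ)
    (t : ℕ) (ht1 : 1 ≤ t) (ht2 : t < m) :
    (σ ⟨t, ht2⟩ < σ ⟨t - 1, by omega⟩ ↔ t ∈ S) := by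
  have h' : ((⟨t - 1, by omega⟩ : Fin m) : ℕ) + 1 < m := by simp; omega
  have HH := H ⟨t - 1, by omega⟩ h'
  rw [show (⟨((⟨t - 1, by omega⟩ : Fin m) : ℕ) + 1, h'⟩ : Fin m) = ⟨t, ht2⟩ from by
    ext; simp; omega] at HH
  rw [HH, show ((⟨t - 1, by omega⟩ : Fin m) : ℕ) + 1 = t from by (try simp only [Fin.val_mk]); omega]

lemma descCount_free_split (m t : ℕ) (S : Finset ℕ) (ht1 : 1 ≤ t) (ht2 : t < m) (htS : t ∉ S) :
    Nat.card {σ : Equiv.Perm (Fin m) //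
        ∀ i : Fin m, ∀ h : (i : ℕ) + 1 < m, (i : ℕ) + 1 ≠ t →
          (σ ⟨(i : ℕ) + 1, h⟩ < σ i ↔ (i : ℕ) + 1 ∈ S)}
      = descentSetCount m (insert t S) + descentSetCount m S := by
  classical
  rw [descentSetCount_eq, descentSetCount_eq]
  rw [Nat.card_eq_fintype_card, Nat.card_eq_fintype_card, Nat.card_eq_fintype_card,
    Fintype.card_subtype, Fintype.card_subtype, Fintype.card_subtype]
  have hdisj : Disjoint
      ((Finset.univ : Finset (Equiv.Perm (Fin m))).filter (fun σ => DesP m (insert t S) σ))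
      ((Finset.univ : Finset (Equiv.Perm (Fin m))).filter (fun σ => DesP m S σ)) := by
    rw [Finset.disjoint_left]
    intro σ h1 h2
    simp only [Finset.mem_filter, Finset.mem_univ, true_and] at h1 h2
    have d1 := (DesP_at h1 t ht1 ht2).mpr (Finset.mem_insert_self t S)
    have d2 := (DesP_at h2 t ht1 ht2).mp d1
    exact htS d2
  rw [← Finset.card_union_of_disjoint hdisj]
  congr 1
  ext σ
  simp only [Finset.mem_filter, Finset.mem_union, Finset.mem_univ, true_and]
  constructor
  · intro H
    by_cases hd : σ ⟨t, ht2⟩ < σ ⟨t - 1, by omega⟩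
    · left
      intro i hi
      by_cases hit : (i : ℕ) + 1 = t
      · have e1 : (⟨(i : ℕ) + 1, hi⟩ : Fin m) = ⟨t, ht2⟩ := Fin.ext hit
        have e2 : i = (⟨t - 1, by omega⟩ : Fin m) := Fin.ext (show (i : ℕ) = t - 1 by omega)
        have hd' : σ ⟨(i : ℕ) + 1, hi⟩ < σ i := by rw [e1, e2]; exact hd
        exact iff_of_true hd' (by rw [hit]; exact Finset.mem_insert_self t S)
      · exact (H i hi hit).trans (by simp [Finset.mem_insert, hit])
    · right
      intro i hi
      by_cases hit : (i : ℕ) + 1 = t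
      · have e1 : (⟨(i : ℕ) + 1, hi⟩ : Fin m) = ⟨t, ht2⟩ := Fin.ext hit
        have e2 : i = (⟨t - 1, by omega⟩ : Fin m) := Fin.ext (show (i : ℕ) = t - 1 by omega)
        have hd' : ¬ σ ⟨(i : ℕ) + 1, hi⟩ < σ i := by rw [e1, e2]; exact hd
        exact iff_of_false hd' (by rw [hit]; exact htS)
      · exact H i hi hit
  · rintro (H | H) i hi hit
    · exact (H i hi).trans (by simp [Finset.mem_insert, hit])
    · exact H i hi


lemma DesP_nat {m : ℕ} {S : Finset ℕ} {σ : Equiv.Perm (Fin m)} :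
    DesP m S σ ↔ ∀ k : ℕ, ∀ h1 : k + 1 < m,
      (σ ⟨k + 1, h1⟩ < σ ⟨k, by omega⟩ ↔ k + 1 ∈ S) := by
  constructor
  · intro H k h1
    have := H ⟨k, by omega⟩ (by simpa using h1)
    simpa using this
  · intro H i h
    have := H (i : ℕ) (by simpa using h)
    simpa [Fin.eta] using this

/-- prefix-decreasing with prescribed tail pattern, position `p` free -/
def PreP (m p : ℕ) (T : Finset ℕ) (σ : Equiv.Perm (Fin m)) : Prop :=
  (∀ k : ℕ, ∀ h : k + 1 < m, k + 1 < p → σ ⟨k + 1, h⟩ < σ ⟨k, by omega⟩) ∧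
  (∀ k : ℕ, ∀ h : k + 1 < m, p < k + 1 →
     (σ ⟨k + 1, h⟩ < σ ⟨k, by omega⟩ ↔ k + 1 - p ∈ T))

lemma card_filter_coe_lt (m p : ℕ) (hp : p ≤ m) :
    ((Finset.univ : Finset (Fin m)).filter (fun j : Fin m => (j : ℕ) < p)).card = p := by
  have e : (Finset.univ : Finset (Fin m)).filter (fun j : Fin m => (j : ℕ) < p)
      = Finset.univ.map (Fin.castLEEmb hp) := by
    ext j
    simp only [Finset.mem_filter, Finset.mem_univ, true_and, Finset.mem_map]
    constructor
    · intro hj; exact ⟨⟨(j : ℕ), hj⟩, Fin.ext rfl⟩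
    · rintro ⟨a, rfl⟩; simpa using a.isLt
  rw [e, Finset.card_map, Finset.card_univ, Fintype.card_fin]

lemma chain_desc {m p : ℕ} {σ : Equiv.Perm (Fin m)}
    (h1 : ∀ k : ℕ, ∀ h : k + 1 < m, k + 1 < p → σ ⟨k + 1, h⟩ < σ ⟨k, by omega⟩) :
    ∀ b a : ℕ, ∀ _hab : a < b, ∀ _hbp : b < p, ∀ hbm : b < m, σ ⟨b, hbm⟩ < σ ⟨a, by omega⟩ := by
  intro b
  induction b with
  | zero => intro a h; omega
  | succ b ih =>
    intro a hab hbp hbm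
    have step : σ ⟨b + 1, hbm⟩ < σ ⟨b, by omega⟩ := h1 b hbm hbp
    rcases Nat.lt_succ_iff_lt_or_eq.mp hab with h' | h'
    · exact step.trans (ih a h' (by omega) (by omega))
    · subst h'; exact step

lemma card_PreP (m p : ℕ) (T : Finset ℕ) (hp : p ≤ m) :
    Nat.card {σ : Equiv.Perm (Fin m) // PreP m p T σ}
      = m.choose p * descentSetCount (m - p) T := by
  classical
  have hcompl : ∀ (A : Finset (Fin m)), A.card = p → (Aᶜ).card = m - p := by
    intro A hA; rw [Finset.card_compl, hA, Fintype.card_fin]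
  set F : {A : Finset (Fin m) // A.card = p} ×
      {τ : Equiv.Perm (Fin (m - p)) // DesP (m - p) T τ} → Fin m → Fin m := fun x j =>
    if hj : (j : ℕ) < p then (x.1.1.orderEmbOfFin x.1.2) ⟨p - 1 - (j : ℕ), by omega⟩
    else ((x.1.1ᶜ).orderEmbOfFin (hcompl x.1.1 x.1.2))
      (x.2.1 ⟨(j : ℕ) - p, by omega⟩) with hF
  have hFinj : ∀ x, Function.Injective (F x) := by
    intro x a b hab
    by_cases ha : (a : ℕ) < p <;> by_cases hb : (b : ℕ) < p
    · rw [hF] at hab; simp only [dif_pos ha, dif_pos hb] at hab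
      have h1 := (x.1.1.orderEmbOfFin x.1.2).injective hab
      have h2 := congrArg Fin.val h1
      simp at h2
      exact Fin.ext (by omega)
    · exfalso
      rw [hF] at hab; simp only [dif_pos ha, dif_neg hb] at hab
      have m1 := Finset.orderEmbOfFin_mem x.1.1 x.1.2 ⟨p - 1 - (a : ℕ), by omega⟩
      rw [hab] at m1
      have m2 := Finset.orderEmbOfFin_mem (x.1.1ᶜ) (hcompl x.1.1 x.1.2)
        (x.2.1 ⟨(b : ℕ) - p, by omega⟩)
      rw [Finset.mem_compl] at m2
      exact m2 m1
    · exfalso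
      rw [hF] at hab; simp only [dif_neg ha, dif_pos hb] at hab
      have m1 := Finset.orderEmbOfFin_mem x.1.1 x.1.2 ⟨p - 1 - (b : ℕ), by omega⟩
      rw [← hab] at m1
      have m2 := Finset.orderEmbOfFin_mem (x.1.1ᶜ) (hcompl x.1.1 x.1.2)
        (x.2.1 ⟨(a : ℕ) - p, by omega⟩)
      rw [Finset.mem_compl] at m2
      exact m2 m1
    · rw [hF] at hab; simp only [dif_neg ha, dif_neg hb] at hab
      have h1 := x.2.1.injective ((x.1.1ᶜ.orderEmbOfFin (hcompl x.1.1 x.1.2)).injective hab)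
      have h2 := congrArg Fin.val h1
      simp at h2
      exact Fin.ext (by omega)
  have hbij : ∀ x, Function.Bijective (F x) := fun x => Finite.injective_iff_bijective.mp (hFinj x)
  have hprop : ∀ x, PreP m p T (Equiv.ofBijective (F x) (hbij x)) := by
    intro x
    constructor
    · intro k h hlt
      show F x ⟨k + 1, h⟩ < F x ⟨k, by omega⟩
      rw [hF]
      simp only [dif_pos (show ((⟨k + 1, h⟩ : Fin m) : ℕ) < p from hlt),
        dif_pos (show ((⟨k, by omega⟩ : Fin m) : ℕ) < p from by (try simp only [Fin.val_mk]); omega)]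
      exact (x.1.1.orderEmbOfFin x.1.2).strictMono (by simp [Fin.lt_def]; omega)
    · intro k h hgt
      show F x ⟨k + 1, h⟩ < F x ⟨k, by omega⟩ ↔ k + 1 - p ∈ T
      rw [hF]
      simp only [dif_neg (show ¬ ((⟨k + 1, h⟩ : Fin m) : ℕ) < p from by (try simp only [Fin.val_mk]); omega),
        dif_neg (show ¬ ((⟨k, by omega⟩ : Fin m) : ℕ) < p from by (try simp only [Fin.val_mk]); omega)]
      rw [(x.1.1ᶜ.orderEmbOfFin (hcompl x.1.1 x.1.2)).lt_iff_lt]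
      have h1 : (k - p) + 1 < m - p := by omega
      have HH := (DesP_nat.mp x.2.2) (k - p) h1
      try simp only [Fin.val_mk]
      rw [show (⟨k + 1 - p, by omega⟩ : Fin (m - p)) = ⟨(k - p) + 1, h1⟩ from
        Fin.ext (by (try simp only [Fin.val_mk]); omega)]
      rw [show (k + 1 - p : ℕ) = (k - p) + 1 from by omega]
      exact HH
  set G : {A : Finset (Fin m) // A.card = p} ×
      {τ : Equiv.Perm (Fin (m - p)) // DesP (m - p) T τ} →
      {σ : Equiv.Perm (Fin m) // PreP m p T σ} :=
    fun x => ⟨Equiv.ofBijective (F x) (hbij x), hprop x⟩ with hG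
  have himg : ∀ x, (Finset.univ.filter (fun j : Fin m => (j : ℕ) < p)).image (F x) = x.1.1 := by
    intro x
    apply Finset.eq_of_subset_of_card_le
    · intro a ha
      simp only [Finset.mem_image, Finset.mem_filter, Finset.mem_univ, true_and] at ha
      obtain ⟨j, hj, rfl⟩ := ha
      rw [hF]
      simp only [dif_pos hj]
      exact Finset.orderEmbOfFin_mem _ _ _
    · rw [x.1.2, Finset.card_image_of_injOn ((hFinj x).injOn),
        card_filter_coe_lt m p hp]
  have hGinj : Function.Injective G := by
    rintro ⟨⟨A, hA⟩, ⟨τ, hτ⟩⟩ ⟨⟨A', hA'⟩, ⟨τ', hτ'⟩⟩ hxy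
    have hF2 : F (⟨⟨A, hA⟩, ⟨τ, hτ⟩⟩) = F (⟨⟨A', hA'⟩, ⟨τ', hτ'⟩⟩) := by
      funext j
      have h0 := congrArg Subtype.val hxy
      exact congrFun (congrArg (fun (e : Equiv.Perm (Fin m)) => (e : Fin m → Fin m)) h0) j
    have hAA : A = A' := by
      have e1 := himg ⟨⟨A, hA⟩, ⟨τ, hτ⟩⟩
      have e2 := himg ⟨⟨A', hA'⟩, ⟨τ', hτ'⟩⟩
      rw [hF2] at e1
      exact e1.symm.trans e2
    subst hAA
    have hττ : τ = τ' := by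
      apply Equiv.ext
      intro i
      have hFj := congrFun hF2 ⟨p + (i : ℕ), by omega⟩
      rw [hF] at hFj
      simp only [dif_neg (show ¬ ((⟨p + (i : ℕ), by omega⟩ : Fin m) : ℕ) < p from by (try simp only [Fin.val_mk]); omega)] at hFj
      have h1 := (Aᶜ.orderEmbOfFin (hcompl A hA)).injective hFj
      have h2 : (⟨((⟨p + (i : ℕ), by omega⟩ : Fin m) : ℕ) - p, by (try simp only [Fin.val_mk]); omega⟩
          : Fin (m - p)) = i := by
        ext; (try simp only [Fin.val_mk]); omega
      rw [h2] at h1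
      exact h1
    subst hττ
    rfl
  have hGsurj : Function.Surjective G := by
    rintro ⟨σ, hσ⟩
    obtain ⟨A, hAdef⟩ : ∃ A : Finset (Fin m),
        A = (Finset.univ.filter (fun j : Fin m => (j : ℕ) < p)).image σ := ⟨_, rfl⟩
    have hA : A.card = p := by
      rw [hAdef, Finset.card_image_of_injective _ σ.injective, card_filter_coe_lt m p hp]
    have hpre : ∀ (j : ℕ) (hj : j < p), σ ⟨j, by omega⟩ = A.orderEmbOfFin hA ⟨p - 1 - j, by omega⟩ := by
      have hmem : ∀ k : Fin p, σ ⟨p - 1 - (k : ℕ), by omega⟩ ∈ A := by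
        intro k
        refine (Finset.ext_iff.mp hAdef _).mpr (Finset.mem_image_of_mem σ ?_)
        simp only [Finset.mem_filter, Finset.mem_univ, true_and]
        (try simp only [Fin.val_mk]); omega
      have hmono : StrictMono (fun k : Fin p => σ ⟨p - 1 - (k : ℕ), by omega⟩) := by
        intro k1 k2 hk
        exact chain_desc hσ.1 (p - 1 - (k1 : ℕ)) (p - 1 - (k2 : ℕ))
          (by omega) (by omega) (by omega)
      have huniq := Finset.orderEmbOfFin_unique hA hmem hmono
      intro j hj
      have := congrFun huniq ⟨p - 1 - j, by omega⟩
      simp only at this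
      rw [← this]
      congr 1
      ext; (try simp only [Fin.val_mk]); omega
    have hmemB : ∀ i : Fin (m - p), σ ⟨p + (i : ℕ), by omega⟩ ∈ Aᶜ := by
      intro i
      rw [Finset.mem_compl]
      intro hmem
      have hmem2 := (Finset.ext_iff.mp hAdef _).mp hmem
      simp only [Finset.mem_image, Finset.mem_filter, Finset.mem_univ, true_and] at hmem2
      obtain ⟨j, hj, hje⟩ := hmem2
      have h1 := congrArg Fin.val (σ.injective hje)
      (try simp only [Fin.val_mk] at h1); omega
    set t : Fin (m - p) → Fin (m - p) :=
      fun i => (Aᶜ.orderIsoOfFin (hcompl A hA)).symm ⟨σ ⟨p + (i : ℕ), by omega⟩, hmemB i⟩ with ht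
    have htinj : Function.Injective t := by
      intro i1 i2 h12
      rw [ht] at h12
      have h1 := (Aᶜ.orderIsoOfFin (hcompl A hA)).symm.injective h12
      have h2 := congrArg Fin.val (σ.injective (congrArg Subtype.val h1))
      (try simp only [Fin.val_mk] at h2)
      exact Fin.ext (by omega)
    set τ : Equiv.Perm (Fin (m - p)) := Equiv.ofBijective t (Finite.injective_iff_bijective.mp htinj) with hτdef
    have hτ : DesP (m - p) T τ := by
      rw [DesP_nat]
      intro k h1
      show (Aᶜ.orderIsoOfFin (hcompl A hA)).symm ⟨σ ⟨p + ((⟨k + 1, h1⟩ : Fin (m - p)) : ℕ), by omega⟩, hmemB _⟩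
          < (Aᶜ.orderIsoOfFin (hcompl A hA)).symm ⟨σ ⟨p + ((⟨k, by omega⟩ : Fin (m - p)) : ℕ), by omega⟩, hmemB _⟩
          ↔ k + 1 ∈ T
      rw [OrderIso.lt_iff_lt ((Aᶜ.orderIsoOfFin (hcompl A hA)).symm)]
      rw [Subtype.mk_lt_mk]
      have HH := hσ.2 (p + k) (by omega) (by omega)
      simp only [Fin.val_mk]
      rw [show (⟨p + (k + 1), by omega⟩ : Fin m) = ⟨(p + k) + 1, by omega⟩ from
        Fin.ext (by (try simp only [Fin.val_mk]); omega)]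
      rw [HH]
      rw [show (p + k) + 1 - p = k + 1 from by omega]
    refine ⟨⟨⟨A, hA⟩, ⟨τ, hτ⟩⟩, ?_⟩
    rw [hG]
    apply Subtype.ext
    apply Equiv.ext
    intro j
    show F _ j = σ j
    rw [hF]
    by_cases hj : (j : ℕ) < p
    · simp only [dif_pos hj]
      have := hpre (j : ℕ) hj
      rw [show (⟨(j : ℕ), by omega⟩ : Fin m) = j from Fin.eta j _] at this
      exact this.symm
    · simp only [dif_neg hj]
      show Aᶜ.orderEmbOfFin (hcompl A hA)
        ((Aᶜ.orderIsoOfFin (hcompl A hA)).symm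
          ⟨σ ⟨p + ((⟨(j : ℕ) - p, by omega⟩ : Fin (m - p)) : ℕ), by omega⟩, hmemB _⟩) = σ j
      rw [← Finset.coe_orderIsoOfFin_apply]
      rw [OrderIso.apply_symm_apply]
      show σ ⟨p + ((⟨(j : ℕ) - p, by omega⟩ : Fin (m - p)) : ℕ), by omega⟩ = σ j
      congr 1
      ext; simp only [Fin.val_mk]; omega
  have hcard := Nat.card_eq_of_bijective G ⟨hGinj, hGsurj⟩
  rw [← hcard, Nat.card_prod, descentSetCount_eq]
  congr 1
  rw [Nat.card_eq_fintype_card, Fintype.card_finset_len, Fintype.card_fin]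


/-- the descent pattern: `p` descents, alternation of length `N`, `q` descents -/
def Sset (N p q : ℕ) : Finset ℕ :=
  Finset.Icc 1 p ∪ (Finset.range ((N + 1) / 2)).image (fun j => p + 2 * j + 1)
    ∪ Finset.Icc (p + N + 1) (p + N + q)

def Wset (N p q : ℕ) : Finset ℕ :=
  Finset.Icc 1 (p - 1) ∪ (Finset.range ((N + 1) / 2)).image (fun j => p + 2 * j + 1)
    ∪ Finset.Icc (p + N + 1) (p + N + q)

lemma mem_Sset {N p q j : ℕ} :
    j ∈ Sset N p q ↔ ((1 ≤ j ∧ j ≤ p) ∨ (p < j ∧ j ≤ p + N ∧ (j - p) % 2 = 1)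
      ∨ (p + N < j ∧ j ≤ p + N + q)) := by
  simp only [Sset, Finset.mem_union, Finset.mem_Icc, Finset.mem_image, Finset.mem_range]
  constructor
  · rintro ((h | ⟨a, ha, rfl⟩) | h)
    · exact Or.inl h
    · exact Or.inr (Or.inl (by omega))
    · exact Or.inr (Or.inr h)
  · rintro (h | ⟨h1, h2, h3⟩ | h)
    · exact Or.inl (Or.inl h)
    · exact Or.inl (Or.inr ⟨(j - p - 1) / 2, by omega, by omega⟩)
    · exact Or.inr h

lemma mem_Wset {N p q j : ℕ} :
    j ∈ Wset N p q ↔ ((1 ≤ j ∧ j ≤ p - 1) ∨ (p < j ∧ j ≤ p + N ∧ (j - p) % 2 = 1)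
      ∨ (p + N < j ∧ j ≤ p + N + q)) := by
  simp only [Wset, Finset.mem_union, Finset.mem_Icc, Finset.mem_image, Finset.mem_range]
  constructor
  · rintro ((h | ⟨a, ha, rfl⟩) | h)
    · exact Or.inl h
    · exact Or.inr (Or.inl (by omega))
    · exact Or.inr (Or.inr h)
  · rintro (h | ⟨h1, h2, h3⟩ | h)
    · exact Or.inl (Or.inl h)
    · exact Or.inl (Or.inr ⟨(j - p - 1) / 2, by omega, by omega⟩)
    · exact Or.inr h

lemma free_nat (m t : ℕ) (S : Finset ℕ) :
    Nat.card {σ : Equiv.Perm (Fin m) //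
        ∀ i : Fin m, ∀ h : (i : ℕ) + 1 < m, (i : ℕ) + 1 ≠ t →
          (σ ⟨(i : ℕ) + 1, h⟩ < σ i ↔ (i : ℕ) + 1 ∈ S)}
      = Nat.card {σ : Equiv.Perm (Fin m) //
        ∀ k : ℕ, ∀ h : k + 1 < m, k + 1 ≠ t →
          (σ ⟨k + 1, h⟩ < σ ⟨k, by omega⟩ ↔ k + 1 ∈ S)} := by
  refine Nat.card_congr (Equiv.subtypeEquivRight fun σ => ?_)
  constructor
  · intro H k h hk
    have := H ⟨k, by omega⟩ (by simpa using h) (by simpa using hk)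
    simpa using this
  · intro H i h hk
    have := H (i : ℕ) (by simpa using h) (by simpa using hk)
    simpa [Fin.eta] using this

lemma PreP_iff_free {m p : ℕ} {W T : Finset ℕ} (hp : 1 ≤ p)
    (hlow : ∀ j, 1 ≤ j → j < p → j ∈ W)
    (hhigh : ∀ j, p < j → j < m → (j ∈ W ↔ j - p ∈ T)) (σ : Equiv.Perm (Fin m)) :
    (∀ k : ℕ, ∀ h : k + 1 < m, k + 1 ≠ p →
        (σ ⟨k + 1, h⟩ < σ ⟨k, by omega⟩ ↔ k + 1 ∈ W)) ↔ PreP m p T σ := by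
  constructor
  · intro H
    constructor
    · intro k h hk
      exact (H k h (by omega)).mpr (hlow _ (by omega) hk)
    · intro k h hk
      rw [H k h (by omega), hhigh _ hk h]
  · intro H k h hk
    rcases lt_trichotomy (k + 1) p with h' | h' | h'
    · exact iff_of_true (H.1 k h h') (hlow _ (by omega) h')
    · exact absurd h' hk
    · rw [H.2 k h h']
      exact (hhigh _ h' h).symm

lemma master (N p q : ℕ) (hp : 1 ≤ p) :
    descentSetCount (N + 1 + p + q) (Sset N p q) + descentSetCount (N + 1 + p + q) (Wset N p q)
      = (N + 1 + p + q).choose p * descentSetCount (N + 1 + q) (Sset N 0 q) := by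
  have hsplit := descCount_free_split (N + 1 + p + q) p (Wset N p q) hp (by omega)
    (by simp only [mem_Wset]; omega)
  have hins : descentSetCount (N + 1 + p + q) (insert p (Wset N p q))
      = descentSetCount (N + 1 + p + q) (Sset N p q) :=
    descCount_congr (fun j h1 h2 => by
      simp only [Finset.mem_insert, mem_Wset, mem_Sset]; omega)
  rw [hins] at hsplit
  have hnat := free_nat (N + 1 + p + q) p (Wset N p q)
  have hiff : ∀ σ : Equiv.Perm (Fin (N + 1 + p + q)),
      (∀ k : ℕ, ∀ h : k + 1 < N + 1 + p + q, k + 1 ≠ p →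
        (σ ⟨k + 1, h⟩ < σ ⟨k, by omega⟩ ↔ k + 1 ∈ Wset N p q))
      ↔ PreP (N + 1 + p + q) p (Sset N 0 q) σ :=
    PreP_iff_free hp
      (fun j h1 h2 => by simp only [mem_Wset]; omega)
      (fun j h1 h2 => by simp only [mem_Wset, mem_Sset]; omega)
  have hcongr : Nat.card {σ : Equiv.Perm (Fin (N + 1 + p + q)) //
      ∀ k : ℕ, ∀ h : k + 1 < N + 1 + p + q, k + 1 ≠ p →
        (σ ⟨k + 1, h⟩ < σ ⟨k, by omega⟩ ↔ k + 1 ∈ Wset N p q)}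
      = Nat.card {σ : Equiv.Perm (Fin (N + 1 + p + q)) //
          PreP (N + 1 + p + q) p (Sset N 0 q) σ} :=
    Nat.card_congr (Equiv.subtypeEquivRight hiff)
  have hPre := card_PreP (N + 1 + p + q) p (Sset N 0 q) (by omega)
  rw [show N + 1 + p + q - p = N + 1 + q from by omega] at hPre
  omega

lemma W_id_ge2 (N p q : ℕ) (hp : 2 ≤ p) :
    descentSetCount (N + 1 + p + q) (Wset N p q)
      = descentSetCount (N + 1 + p + q) (Sset (N + 2) (p - 2) q) :=
  descCount_congr (fun j h1 h2 => by simp only [mem_Wset, mem_Sset]; omega)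

lemma W_id_p1_odd (N q : ℕ) (hN : N % 2 = 1) :
    descentSetCount (N + 2 + q) (Wset N 1 q)
      = descentSetCount (N + 2 + q) (Sset (N + 1) q 0) :=
  descCount_revAll (fun j h1 h2 => by simp only [mem_Sset, mem_Wset]; omega)

lemma W_id_p1_even0 (N : ℕ) (hN : N % 2 = 0) :
    descentSetCount (N + 2) (Wset N 1 0) = updownCount (N + 2) :=
  descCount_updown_even (fun j h1 h2 => by simp only [mem_Wset]; omega)

lemma Sset_symm (N p q : ℕ) (hN : N % 2 = 1) :
    descentSetCount (N + 1 + p + q) (Sset N p q)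
      = descentSetCount (N + 1 + p + q) (Sset N q p) :=
  descCount_revAll (fun j h1 h2 => by simp only [mem_Sset]; omega)

lemma Sset_base (N : ℕ) :
    descentSetCount (N + 1) (Sset N 0 0) = updownCount (N + 1) :=
  descCount_updown_odd (fun j h1 h2 => by simp only [mem_Sset]; omega)


noncomputable def T1 (N p q : ℕ) : ℝ :=
  ∑ i ∈ Finset.range (p / 2 + 1), ∑ j ∈ Finset.range (q / 2 + 1),
    (-1 : ℝ) ^ (i + j) * Abar (N + 2 * i + 2 * j + 1) /
      ((Nat.factorial (p - 2 * i) : ℝ) * (Nat.factorial (q - 2 * j) : ℝ))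

noncomputable def T2 (N p q : ℕ) : ℝ :=
  if Odd p then
    (-1 : ℝ) ^ ((p + 1) / 2) * ∑ j ∈ Finset.range (q / 2 + 1),
      (-1 : ℝ) ^ j * Abar (N + p + 2 * j + 1) / (Nat.factorial (q - 2 * j) : ℝ)
  else 0

noncomputable def T3 (N p q : ℕ) : ℝ :=
  if Odd q then
    (-1 : ℝ) ^ ((q + 1) / 2) * ∑ i ∈ Finset.range (p / 2 + 1),
      (-1 : ℝ) ^ i * Abar (N + q + 2 * i + 1) / (Nat.factorial (p - 2 * i) : ℝ)
  else 0

noncomputable def T4 (N p q : ℕ) : ℝ :=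
  if Odd p ∧ Odd q then (-1 : ℝ) ^ ((p + q) / 2 + 1) * Abar (N + p + q + 1) else 0

lemma XN_eq (N p q : ℕ) : XN N p q = T1 N p q + T2 N p q + T3 N p q + T4 N p q := rfl

lemma T1_0 (N q : ℕ) : T1 N 0 q
    = ∑ j ∈ Finset.range (q / 2 + 1), (-1 : ℝ) ^ j * Abar (N + 2 * j + 1)
        / (Nat.factorial (q - 2 * j) : ℝ) := by
  unfold T1
  rw [show (0 / 2 + 1 : ℕ) = 1 from rfl, Finset.sum_range_one]
  refine Finset.sum_congr rfl fun j _ => ?_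
  norm_num

lemma T2_0 (N q : ℕ) : T2 N 0 q = 0 := if_neg (by decide)

lemma T4_0 (N q : ℕ) : T4 N 0 q = 0 :=
  if_neg (by rintro ⟨h, -⟩; exact (by decide : ¬ Odd 0) h)

lemma T3_0 (N q : ℕ) : T3 N 0 q
    = if Odd q then (-1 : ℝ) ^ ((q + 1) / 2) * Abar (N + q + 1) else 0 := by
  unfold T3
  by_cases h : Odd q
  · rw [if_pos h, if_pos h]
    rw [show (0 / 2 + 1 : ℕ) = 1 from rfl, Finset.sum_range_one]
    norm_num
  · rw [if_neg h, if_neg h]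

lemma XN_00 (N : ℕ) : XN N 0 0 = Abar (N + 1) := by
  rw [XN_eq, T1_0, T2_0, T3_0, T4_0]
  rw [if_neg (by decide : ¬ Odd 0)]
  rw [show (0 / 2 + 1 : ℕ) = 1 from rfl, Finset.sum_range_one]
  norm_num

lemma XN_symm (N p q : ℕ) : XN N p q = XN N q p := by
  rw [XN_eq, XN_eq]
  have hA : T1 N p q = T1 N q p := by
    unfold T1
    rw [Finset.sum_comm]
    refine Finset.sum_congr rfl fun j _ => Finset.sum_congr rfl fun i _ => ?_
    rw [show i + j = j + i from by omega, show N + 2 * i + 2 * j + 1 = N + 2 * j + 2 * i + 1 from by omega,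
      mul_comm ((Nat.factorial (p - 2 * i)) : ℝ) ((Nat.factorial (q - 2 * j)) : ℝ)]
  have hD : T4 N p q = T4 N q p := by
    unfold T4
    rw [show q + p = p + q from by omega, show N + q + p + 1 = N + p + q + 1 from by omega]
    exact if_congr and_comm rfl rfl
  have hB : T2 N p q = T3 N q p := rfl
  have hC : T3 N p q = T2 N q p := rfl
  rw [hA, hD, hB, hC]
  ring

lemma T1_rec (N p q : ℕ) (hp : 2 ≤ p) :
    T1 N p q = T1 N 0 q / (Nat.factorial p : ℝ) - T1 (N + 2) (p - 2) q := by
  have hsplit : p / 2 + 1 = ((p - 2) / 2 + 1) + 1 := by omega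
  rw [show T1 N p q = ∑ i ∈ Finset.range (p / 2 + 1), ∑ j ∈ Finset.range (q / 2 + 1),
      (-1 : ℝ) ^ (i + j) * Abar (N + 2 * i + 2 * j + 1) /
        ((Nat.factorial (p - 2 * i) : ℝ) * (Nat.factorial (q - 2 * j) : ℝ)) from rfl]
  rw [hsplit, Finset.sum_range_succ']
  have h1 : ∑ i ∈ Finset.range ((p - 2) / 2 + 1), ∑ j ∈ Finset.range (q / 2 + 1),
      (-1 : ℝ) ^ ((i + 1) + j) * Abar (N + 2 * (i + 1) + 2 * j + 1) /
        ((Nat.factorial (p - 2 * (i + 1)) : ℝ) * (Nat.factorial (q - 2 * j) : ℝ))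
      = - T1 (N + 2) (p - 2) q := by
    have e : T1 (N + 2) (p - 2) q = ∑ i ∈ Finset.range ((p - 2) / 2 + 1),
        ∑ j ∈ Finset.range (q / 2 + 1),
        (-1 : ℝ) ^ (i + j) * Abar (N + 2 + 2 * i + 2 * j + 1) /
          ((Nat.factorial (p - 2 - 2 * i) : ℝ) * (Nat.factorial (q - 2 * j) : ℝ)) := rfl
    rw [e, ← Finset.sum_neg_distrib]
    refine Finset.sum_congr rfl fun i _ => ?_
    rw [← Finset.sum_neg_distrib]
    refine Finset.sum_congr rfl fun j _ => ?_
    rw [show (i + 1) + j = (i + j) + 1 from by omega, pow_succ,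
      show N + 2 * (i + 1) + 2 * j + 1 = N + 2 + 2 * i + 2 * j + 1 from by omega,
      show p - 2 * (i + 1) = p - 2 - 2 * i from by omega]
    ring
  have h2 : ∑ j ∈ Finset.range (q / 2 + 1),
      (-1 : ℝ) ^ (0 + j) * Abar (N + 2 * 0 + 2 * j + 1) /
        ((Nat.factorial (p - 2 * 0) : ℝ) * (Nat.factorial (q - 2 * j) : ℝ))
      = T1 N 0 q / (Nat.factorial p : ℝ) := by
    rw [T1_0, Finset.sum_div]
    refine Finset.sum_congr rfl fun j _ => ?_
    norm_num
    rw [div_div, mul_comm ((Nat.factorial (q - 2 * j)) : ℝ) ((Nat.factorial p) : ℝ)]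
  rw [h1, h2]
  ring

lemma T2_rec (N p q : ℕ) (hp : 2 ≤ p) : T2 N p q = - T2 (N + 2) (p - 2) q := by
  unfold T2
  have hiff : Odd p ↔ Odd (p - 2) := by rw [Nat.odd_iff, Nat.odd_iff]; omega
  by_cases h : Odd p
  · rw [if_pos h, if_pos (hiff.mp h)]
    have he : (p + 1) / 2 = ((p - 2) + 1) / 2 + 1 := by omega
    rw [he, pow_succ]
    simp only [show ∀ j : ℕ, N + p + 2 * j + 1 = N + 2 + (p - 2) + 2 * j + 1 from fun j => by omega]
    ring
  · rw [if_neg h, if_neg (fun hc => h (hiff.mpr hc))]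
    ring

lemma T3_rec (N p q : ℕ) (hp : 2 ≤ p) :
    T3 N p q = T3 N 0 q / (Nat.factorial p : ℝ) - T3 (N + 2) (p - 2) q := by
  rw [T3_0]
  rw [show T3 N p q = if Odd q then (-1 : ℝ) ^ ((q + 1) / 2) * ∑ i ∈ Finset.range (p / 2 + 1),
      (-1 : ℝ) ^ i * Abar (N + q + 2 * i + 1) / (Nat.factorial (p - 2 * i) : ℝ) else 0 from rfl]
  rw [show T3 (N + 2) (p - 2) q = if Odd q then
      (-1 : ℝ) ^ ((q + 1) / 2) * ∑ i ∈ Finset.range ((p - 2) / 2 + 1),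
      (-1 : ℝ) ^ i * Abar (N + 2 + q + 2 * i + 1) / (Nat.factorial (p - 2 - 2 * i) : ℝ) else 0 from rfl]
  by_cases h : Odd q
  · rw [if_pos h, if_pos h, if_pos h]
    have hsplit : p / 2 + 1 = ((p - 2) / 2 + 1) + 1 := by omega
    rw [hsplit, Finset.sum_range_succ', mul_add]
    have h1 : (-1 : ℝ) ^ ((q + 1) / 2) * ∑ i ∈ Finset.range ((p - 2) / 2 + 1),
        (-1 : ℝ) ^ (i + 1) * Abar (N + q + 2 * (i + 1) + 1) / (Nat.factorial (p - 2 * (i + 1)) : ℝ)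
        = - ((-1 : ℝ) ^ ((q + 1) / 2) * ∑ i ∈ Finset.range ((p - 2) / 2 + 1),
          (-1 : ℝ) ^ i * Abar (N + 2 + q + 2 * i + 1) / (Nat.factorial (p - 2 - 2 * i) : ℝ)) := by
      rw [Finset.mul_sum, Finset.mul_sum, ← Finset.sum_neg_distrib]
      refine Finset.sum_congr rfl fun i _ => ?_
      rw [pow_succ, show N + q + 2 * (i + 1) + 1 = N + 2 + q + 2 * i + 1 from by omega,
        show p - 2 * (i + 1) = p - 2 - 2 * i from by omega]
      ring
    have h2 : (-1 : ℝ) ^ ((q + 1) / 2) * ((-1 : ℝ) ^ 0 * Abar (N + q + 2 * 0 + 1) /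
        (Nat.factorial (p - 2 * 0) : ℝ))
        = ((-1 : ℝ) ^ ((q + 1) / 2) * Abar (N + q + 1)) / (Nat.factorial p : ℝ) := by
      norm_num
      ring
    rw [h1, h2]
    ring
  · rw [if_neg h, if_neg h, if_neg h]
    ring

lemma T4_rec (N p q : ℕ) (hp : 2 ≤ p) : T4 N p q = - T4 (N + 2) (p - 2) q := by
  unfold T4
  have hiff : Odd p ↔ Odd (p - 2) := by rw [Nat.odd_iff, Nat.odd_iff]; omega
  by_cases h : Odd p ∧ Odd q
  · rw [if_pos h, if_pos ⟨hiff.mp h.1, h.2⟩]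
    have hp2 : p % 2 = 1 := Nat.odd_iff.mp h.1
    have hq2 : q % 2 = 1 := Nat.odd_iff.mp h.2
    have he : (p + q) / 2 + 1 = (((p - 2) + q) / 2 + 1) + 1 := by omega
    rw [he, pow_succ, show N + p + q + 1 = N + 2 + (p - 2) + q + 1 from by omega]
    ring
  · rw [if_neg h, if_neg (fun hc => h ⟨hiff.mpr hc.1, hc.2⟩)]
    ring

lemma XN_rec2 (N p q : ℕ) (hp : 2 ≤ p) :
    XN N p q = XN N 0 q / (Nat.factorial p : ℝ) - XN (N + 2) (p - 2) q := by
  rw [XN_eq, XN_eq, XN_eq, T1_rec N p q hp, T2_rec N p q hp, T3_rec N p q hp, T4_rec N p q hp,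
    T2_0, T4_0]
  ring

lemma XN_rec1 (N q : ℕ) : XN N 1 q = XN N 0 q - XN (N + 1) 0 q := by
  rw [XN_eq, XN_eq, XN_eq]
  have h1 : T1 N 1 q = T1 N 0 q := by
    rw [T1_0]
    unfold T1
    rw [show (1 / 2 + 1 : ℕ) = 1 from rfl, Finset.sum_range_one]
    refine Finset.sum_congr rfl fun j _ => ?_
    norm_num
  have h2 : T2 N 1 q = - T1 (N + 1) 0 q := by
    rw [T1_0]
    unfold T2
    rw [if_pos (by decide : Odd 1)]
    rw [← Finset.sum_neg_distrib, Finset.mul_sum]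
    refine Finset.sum_congr rfl fun j _ => ?_
    norm_num
    try ring
  have h3 : T3 N 1 q = T3 N 0 q := by
    rw [T3_0]
    unfold T3
    by_cases h : Odd q
    · rw [if_pos h, if_pos h]
      rw [show (1 / 2 + 1 : ℕ) = 1 from rfl, Finset.sum_range_one]
      norm_num
    · rw [if_neg h, if_neg h]
  have h4 : T4 N 1 q = - T3 (N + 1) 0 q := by
    rw [T3_0]
    unfold T4
    by_cases h : Odd q
    · rw [if_pos ⟨by decide, h⟩, if_pos h]
      have hq2 : q % 2 = 1 := Nat.odd_iff.mp h
      have he : (1 + q) / 2 + 1 = (q + 1) / 2 + 1 := by omega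
      rw [he, pow_succ]
      ring
    · rw [if_neg (fun hc => h hc.2), if_neg h]
      ring
  rw [h1, h2, h3, h4, T2_0 N q, T4_0 N q, T2_0 (N + 1) q, T4_0 (N + 1) q]
  ring


lemma fact_ne (m : ℕ) : ((Nat.factorial m : ℕ) : ℝ) ≠ 0 :=
  Nat.cast_ne_zero.mpr (Nat.factorial_ne_zero m)

lemma updown_real (m : ℕ) : (updownCount m : ℝ) = (Nat.factorial m : ℝ) * Abar m := by
  unfold Abar
  rw [mul_comm, div_mul_cancel₀ _ (fact_ne m)]

lemma base_real (N : ℕ) :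
    (descentSetCount (N + 1) (Sset N 0 0) : ℝ) = (Nat.factorial (N + 1) : ℝ) * XN N 0 0 := by
  rw [Sset_base, XN_00, updown_real]

lemma choose_fact (m p : ℕ) (h : p ≤ m) :
    (m.choose p : ℝ) * (Nat.factorial (m - p) : ℝ)
      = (Nat.factorial m : ℝ) / (Nat.factorial p : ℝ) := by
  have h1 := Nat.choose_mul_factorial_mul_factorial h
  have h2 : m.choose p * Nat.factorial (m - p) * Nat.factorial p = Nat.factorial m := by
    rw [mul_right_comm]; exact h1
  rw [eq_div_iff (fact_ne p)]
  exact_mod_cast h2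

lemma Aux : ∀ p M : ℕ, M % 2 = 0 →
    (descentSetCount (M + 1 + p) (Sset M p 0) : ℝ)
      = (Nat.factorial (M + 1 + p) : ℝ) * XN M p 0 := by
  intro p
  induction p using Nat.strong_induction_on with
  | _ p ih =>
    intro M hM
    rcases Nat.lt_or_ge p 2 with hp2 | hp2
    · interval_cases p
      · rw [show M + 1 + 0 = M + 1 from rfl]
        exact base_real M
      · -- p = 1
        have hm := master M 1 0 (by omega)
        rw [show M + 1 + 1 + 0 = M + 2 from by omega, show M + 1 + 0 = M + 1 from by omega,
          Nat.choose_one_right, W_id_p1_even0 M hM] at hm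
        rw [show M + 1 + 1 = M + 2 from by omega, XN_rec1 M 0, XN_00 M,
          XN_00 (M + 1), show M + 1 + 1 = M + 2 from by omega]
        have hmc := congrArg (fun n : ℕ => (n : ℝ)) hm
        push_cast at hmc
        rw [base_real M, XN_00 M, updown_real (M + 2)] at hmc
        have hfs : ((Nat.factorial (M + 2)) : ℝ)
            = ((M : ℝ) + 2) * (Nat.factorial (M + 1) : ℝ) := by
          rw [show M + 2 = (M + 1) + 1 from by omega, Nat.factorial_succ]
          push_cast; ring
        linear_combination hmc - Abar (M + 1) * hfs
    · -- p ≥ 2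
      have hm := master M p 0 (by omega)
      rw [W_id_ge2 M p 0 hp2] at hm
      rw [show M + 1 + p + 0 = M + 1 + p from by omega,
        show M + 1 + 0 = M + 1 from by omega] at hm
      have hW := ih (p - 2) (by omega) (M + 2) (by omega)
      rw [show M + 2 + 1 + (p - 2) = M + 1 + p from by omega] at hW
      have h0 := base_real M
      have hcf := choose_fact (M + 1 + p) p (by omega)
      rw [show M + 1 + p - p = M + 1 from by omega] at hcf
      have hmc := congrArg (fun n : ℕ => (n : ℝ)) hm
      push_cast at hmc
      rw [h0, hW] at hmc
      rw [XN_rec2 M p 0 hp2]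
      linear_combination hmc + XN M 0 0 * hcf

lemma Main : ∀ k p q N : ℕ, p + q = k → N % 2 = 1 →
    (descentSetCount (N + 1 + p + q) (Sset N p q) : ℝ)
      = (Nat.factorial (N + 1 + p + q) : ℝ) * XN N p q := by
  intro k
  induction k using Nat.strong_induction_on with
  | _ k ih =>
    have key : ∀ p q N : ℕ, p + q = k → 1 ≤ p → N % 2 = 1 →
        (descentSetCount (N + 1 + p + q) (Sset N p q) : ℝ)
          = (Nat.factorial (N + 1 + p + q) : ℝ) * XN N p q := by
      intro p q N hk hp hN
      rcases Nat.lt_or_ge p 2 with hp2 | hp2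
      · -- p = 1
        have hp1 : p = 1 := by omega
        subst hp1
        have hm := master N 1 q (by omega)
        rw [show N + 1 + 1 + q = N + 2 + q from by omega,
          show N + 1 + 0 + q = N + 1 + q from by omega,
          Nat.choose_one_right, W_id_p1_odd N q hN] at hm
        have hW := Aux q (N + 1) (by omega)
        rw [show N + 1 + 1 + q = N + 2 + q from by omega] at hW
        have h0 := ih q (by omega) 0 q N (by omega) hN
        rw [show N + 1 + 0 + q = N + 1 + q from by omega] at h0
        have hmc := congrArg (fun n : ℕ => (n : ℝ)) hm
        push_cast at hmc
        rw [h0, hW, XN_symm (N + 1) q 0] at hmc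
        rw [show N + 1 + 1 + q = N + 2 + q from by omega, XN_rec1 N q]
        have hfs : ((Nat.factorial (N + 2 + q)) : ℝ)
            = ((N : ℝ) + 2 + (q : ℝ)) * (Nat.factorial (N + 1 + q) : ℝ) := by
          rw [show N + 2 + q = (N + 1 + q) + 1 from by omega, Nat.factorial_succ]
          push_cast; ring
        linear_combination hmc - XN N 0 q * hfs
      · -- p ≥ 2
        have hm := master N p q (by omega)
        rw [show N + 1 + 0 + q = N + 1 + q from by omega, W_id_ge2 N p q hp2] at hm
        have hW := ih (p - 2 + q) (by omega) (p - 2) q (N + 2) rfl (by omega)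
        rw [show N + 2 + 1 + (p - 2) + q = N + 1 + p + q from by omega] at hW
        have h0 := ih q (by omega) 0 q N (by omega) hN
        rw [show N + 1 + 0 + q = N + 1 + q from by omega] at h0
        have hcf := choose_fact (N + 1 + p + q) p (by omega)
        rw [show N + 1 + p + q - p = N + 1 + q from by omega] at hcf
        have hmc := congrArg (fun n : ℕ => (n : ℝ)) hm
        push_cast at hmc
        rw [h0, hW] at hmc
        rw [XN_rec2 N p q hp2]
        linear_combination hmc + XN N 0 q * hcf
    intro p q N hk hN
    rcases Nat.eq_zero_or_pos p with hp0 | hp0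
    · subst hp0
      rcases Nat.eq_zero_or_pos q with hq0 | hq0
      · subst hq0
        rw [show N + 1 + 0 + 0 = N + 1 from by omega]
        exact base_real N
      · have hsym := Sset_symm N 0 q hN
        have hkey := key q 0 N (by omega) hq0 hN
        rw [show N + 1 + q + 0 = N + 1 + 0 + q from by omega] at hkey
        rw [hsym, XN_symm N 0 q]
        exact hkey
    · exact key p q N hk hp0 hN

end AlphaAux

/-- The number `α_n` of permutations of `{1, …, 2n+p+q}` with descent set
`{1,…,p} ∪ {p+1, p+3, …, p+2n−1} ∪ {p+2n, …, p+2n+q−1}` equals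
`(2n+p+q)! · X_{2n−1}(p,q)`. -/
theorem alpha_eq (n p q : ℕ) (hn : 1 ≤ n) :
    (descentSetCount (2 * n + p + q)
        (Finset.Icc 1 p ∪ (Finset.range n).image (fun j => p + 2 * j + 1) ∪
          Finset.Icc (p + 2 * n) (p + 2 * n + q - 1)) : ℝ) =
      (Nat.factorial (2 * n + p + q) : ℝ) * XN (2 * n - 1) p q := by
  have hN : (2 * n - 1) % 2 = 1 := by omega
  have hmain := AlphaAux.Main (p + q) p q (2 * n - 1) rfl hN
  rw [show 2 * n - 1 + 1 + p + q = 2 * n + p + q from by omega] at hmain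
  rw [AlphaAux.descCount_congr (S' := AlphaAux.Sset (2 * n - 1) p q) ?hmem, hmain]
  case hmem =>
    intro j h1 h2
    simp only [AlphaAux.mem_Sset, Finset.mem_union, Finset.mem_Icc, Finset.mem_image,
      Finset.mem_range]
    constructor
    · rintro ((h | ⟨a, ha, rfl⟩) | h)
      · exact Or.inl h
      · exact Or.inr (Or.inl (by omega))
      · exact Or.inr (Or.inr (by omega))
    · rintro (h | ⟨hh1, hh2, hh3⟩ | h)
      · exact Or.inl (Or.inl h)
      · exact Or.inl (Or.inr ⟨(j - p - 1) / 2, by omega, by omega⟩)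
      · exact Or.inr (by omega)
end

section
/- (Andreief's formula) Let (Ω,μ) be a σ-finite measure space and let f_1,…,f_k, g_1,…,g_k ∈ L²(Ω,μ) be real-valued square-integrable functions. Then ∫_{Ω^k} det( f_i(x_l) )_{1≤i,l≤k} · det( g_j(x_l) )_{1≤l,j≤k} dμ(x_1)⋯dμ(x_k) = k! · det( ∫_Ω f_i(x) g_j(x) dμ(x) )_{1≤i,j≤k}. -/
/-!
Expanding both determinants as sums over permutations, `det (f_i(x_l)) · det (g_j(x_l))` becomes
a signed sum over pairs `(σ, τ)` of products `∏_l f_{σ l}(x_l) g_{τ l}(x_l)`. Each such product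
integrates by Fubini to `∏_l A_{σ l, τ l}` with `A_{ij} = ∫ f_i g_j`, and for fixed `σ` the signed
sum over `τ` is the determinant of `A` with rows permuted by `σ`, namely `sign σ · det A`. The two
signs cancel, leaving `k!` copies of `det A`.
-/

open MeasureTheory Finset Equiv

section

variable {n R : Type*} [Fintype n] [DecidableEq n] [CommRing R]

theorem Matrix.sum_sign_mul_prod_apply_perm (A : Matrix n n R) (σ : Perm n) :
    ∑ τ : Perm n, ((Perm.sign τ : ℤ) : R) * ∏ l, A (σ l) (τ l) = Perm.sign σ * A.det := by
  rw [← Matrix.det_permute, ← Matrix.det_transpose, Matrix.det_apply']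
  rfl

theorem Matrix.sum_sign_mul_sign_mul_prod_apply_perm (A : Matrix n n R) :
    ∑ σ : Perm n, ∑ τ : Perm n,
        ((Perm.sign σ : ℤ) : R) * Perm.sign τ * ∏ l, A (σ l) (τ l) =
      (Fintype.card n).factorial * A.det := by
  simp_rw [mul_assoc, ← mul_sum, A.sum_sign_mul_prod_apply_perm, ← mul_assoc, ← Int.cast_mul,
    ← Units.val_mul, Int.units_mul_self, Units.val_one, Int.cast_one, one_mul, sum_const,
    card_univ, Fintype.card_perm, nsmul_eq_mul]

theorem Matrix.det_of_mul_det_of {α : Type*} (f g : n → α → R) (x : n → α) :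
    (Matrix.of fun i l => f i (x l)).det * (Matrix.of fun l j => g j (x l)).det =
      ∑ σ : Perm n, ∑ τ : Perm n, ((Perm.sign σ : ℤ) : R) * Perm.sign τ *
        ∏ l, f (σ l) (x l) * g (τ l) (x l) := by
  rw [← Matrix.det_transpose (Matrix.of fun l j => g j (x l)), Matrix.det_apply',
    Matrix.det_apply', sum_mul_sum]
  refine sum_congr rfl fun σ _ => sum_congr rfl fun τ _ => ?_
  simp only [Matrix.of_apply, Matrix.transpose_apply, prod_mul_distrib]
  ring

end

theorem integral_det_of_mul_det_of {Ω ι 𝕜 : Type*} [Fintype ι] [DecidableEq ι] [RCLike 𝕜]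
    [MeasurableSpace Ω] {μ : Measure Ω} [SigmaFinite μ] {f g : ι → Ω → 𝕜}
    (hfg : ∀ i j, Integrable (fun x => f i x * g j x) μ) :
    (∫ x : ι → Ω, (Matrix.of fun i l => f i (x l)).det * (Matrix.of fun l j => g j (x l)).det
        ∂Measure.pi fun _ => μ) =
      ((Fintype.card ι).factorial : 𝕜) * (Matrix.of fun i j => ∫ x, f i x * g j x ∂μ).det := by
  have hprod (σ τ : Perm ι) : Integrable (fun x : ι → Ω => ∏ l, f (σ l) (x l) * g (τ l) (x l))
      (Measure.pi fun _ => μ) :=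
    Integrable.fintype_prod fun l => hfg (σ l) (τ l)
  simp_rw [Matrix.det_of_mul_det_of]
  rw [integral_finsetSum _ fun σ _ => integrable_finsetSum _ fun τ _ => (hprod σ τ).const_mul _]
  simp_rw [integral_finsetSum _ fun τ _ => (hprod _ τ).const_mul _, integral_const_mul,
    fun σ τ : Perm ι => integral_fintype_prod_eq_prod (μ := fun _ => μ)
      fun l x => f (σ l) x * g (τ l) x]
  exact Matrix.sum_sign_mul_sign_mul_prod_apply_perm (Matrix.of fun i j => ∫ x, f i x * g j x ∂μ)

/-- **Andreief's formula.** For square-integrable functions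
`f_1, …, f_k, g_1, …, g_k` on a σ-finite measure space `(Ω, μ)`,
`∫_{Ω^k} det(f_i(x_l)) · det(g_j(x_l)) dμ^{⊗k}(x) = k! · det(∫ f_i g_j dμ)`. -/
theorem andreief {Ω : Type*} [MeasurableSpace Ω] (μ : Measure Ω) [SigmaFinite μ]
    (k : ℕ) (f g : Fin k → Ω → ℝ)
    (hf : ∀ i, MemLp (f i) 2 μ) (hg : ∀ i, MemLp (g i) 2 μ) :
    (∫ x : Fin k → Ω,
        Matrix.det (Matrix.of fun i l : Fin k => f i (x l)) *
          Matrix.det (Matrix.of fun l j : Fin k => g j (x l))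
        ∂(Measure.pi fun _ : Fin k => μ)) =
      (Nat.factorial k : ℝ) *
        Matrix.det (Matrix.of fun i j : Fin k => ∫ x, f i x * g j x ∂μ) := by
  simpa using integral_det_of_mul_det_of fun i j => (hf i).integrable_mul (hg j)
end

section
/- Let λ_1 ≥ λ_2 ≥ … ≥ λ_k ≥ 0 be integers and set L_j = λ_j + k − j for 1 ≤ j ≤ k. Let C_λ = {(i,j) ∈ ℤ² : 1 ≤ i ≤ k, −(k−i) ≤ j ≤ λ_i} and let F = {(i,j) ∈ C_λ : j > −(k−i)} be the set of non-leftmost (free) cells. Fix real numbers 0 ≤ x_1 ≤ x_2 ≤ … ≤ x_k ≤ 1. Then the Lebesgue measure, in ℝ^F, of the set of functions y : F → ℝ such that the extension Y : C_λ → ℝ defined by Y(i,j) = y(i,j) for (i,j) ∈ F and Y(i, −(k−i)) = x_{k+1−i} for 1 ≤ i ≤ k satisfies 0 ≤ Y(i,j) ≤ 1 for all cells, Y(i,j) ≥ Y(i+1,j) whenever both (i,j) and (i+1,j) lie in C_λ, and Y(i,j) ≥ Y(i,j+1) whenever both (i,j) and (i,j+1) lie in C_λ, equals (1/∏_{j=1}^k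 L_j!) · det( x_{k+1−i}^{L_j} )_{1≤i,j≤k} (equivalently (−1)^{k(k−1)/2} det( x_i^{L_j} )_{i,j} / ∏_j L_j!). -/
/-!
In the coordinates `p = j + (k - 1 - i)` the diagram `C_λ` becomes a shifted diagram: row `i`
consists of its diagonal cell `p = 0`, carrying `b i = x (k - 1 - i)`, followed by
`n i = L_{i+1}` free cells, and the constraints say that the filling `Y` decreases along rows
and satisfies `Y (i+1) p ≤ Y i (p+1)`. Padding `Y` by zeros outside the diagram, these two
inequalities also encode `0 ≤ Y`, and `Y ≤ 1` follows from `b ≤ 1`.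

Fixing the cells `p = 1`, whose values `t` interlace `b` (`b (i+1) ≤ t i ≤ b i`), leaves a
polytope of the same kind with diagonal `t` and row lengths `n i - 1` (rows that run out of
free cells disappear). By induction its volume is `det (t i ^ (n j - 1)) / ∏ (n j - 1)!`.
Integrating this over the interlacing box row by row gives
`det (b i ^ n j - b (i+1) ^ n j) / ∏ (n j)!`, and subtracting consecutive rows telescopes it
back to `det (b i ^ n j) / ∏ (n j)!`.
-/

open MeasureTheory

/-- The cells of the diagram obtained by leaning the Young diagram
`λ = (lam 0 ≥ lam 1 ≥ … ≥ lam (k−1))` against a staircase of order `k`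
(rows indexed `0, …, k−1`, i.e. `1, …, k` shifted down by one): row `i`
consists of the cells `(i, j)` with `−(k−1−i) ≤ j ≤ lam i`. -/
noncomputable def cellsOf (k : ℕ) (lam : Fin k → ℕ) : Finset (Fin k × ℤ) :=
  (Finset.univ ×ˢ Finset.Icc (-(k : ℤ)) ((Finset.univ.sup lam : ℕ) : ℤ)).filter
    (fun c => -((k : ℤ) - 1 - (c.1 : ℤ)) ≤ c.2 ∧ c.2 ≤ (lam c.1 : ℤ))

/-- The free (non-leftmost) cells: those strictly to the right of the
diagonal cell `(i, −(k−1−i))` of their row. -/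
noncomputable def freeCells (k : ℕ) (lam : Fin k → ℕ) : Finset (Fin k × ℤ) :=
  (cellsOf k lam).filter (fun c => -((k : ℤ) - 1 - (c.1 : ℤ)) < c.2)

/-- Extend a function `y` on free cells to all cells by assigning the value
`x (k−1−i)` to the diagonal (leftmost) cell of row `i`. -/
noncomputable def extendDiag (k : ℕ) (lam : Fin k → ℕ) (x : Fin k → ℝ)
    (y : {c : Fin k × ℤ // c ∈ freeCells k lam} → ℝ) : Fin k × ℤ → ℝ :=
  fun c => if h : c ∈ freeCells k lam then y ⟨c, h⟩ else x (Fin.rev c.1)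

theorem integral_det_apply_pi {ι E 𝕜 : Type*} [Fintype ι] [DecidableEq ι] [MeasurableSpace E]
    [RCLike 𝕜] {μ : ι → Measure E} [∀ i, SigmaFinite (μ i)] (f : ι → E → 𝕜)
    (hf : ∀ i j, Integrable (f j) (μ i)) :
    ∫ t, (Matrix.of fun i j => f j (t i)).det ∂Measure.pi μ =
      (Matrix.of fun i j => ∫ s, f j s ∂μ i).det := by
  simp only [← Matrix.det_transpose (Matrix.of _), Matrix.det_apply', Matrix.transpose_apply,
    Matrix.of_apply]
  rw [integral_finsetSum _ fun σ _ => (Integrable.fintype_prod fun i => hf i (σ i)).const_mul _]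
  simp only [integral_const_mul, integral_fintype_prod_eq_prod]

theorem setIntegral_det_pow_univ_pi {ι : Type*} [Fintype ι] [DecidableEq ι] {lb ub : ι → ℝ}
    (hle : lb ≤ ub) (e : ι → ℕ) :
    ∫ t in Set.univ.pi fun i => Set.Icc (lb i) (ub i), (Matrix.of fun i j => t i ^ e j).det =
      (Matrix.of fun i j => (ub i ^ (e j + 1) - lb i ^ (e j + 1)) / (e j + 1)).det := by
  rw [volume_pi, Measure.restrict_pi_pi,
    integral_det_apply_pi (μ := fun i => volume.restrict (Set.Icc (lb i) (ub i)))
      (fun j s => s ^ e j) fun _ _ => (continuous_pow _).integrableOn_Icc]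
  congr with i j
  rw [integral_Icc_eq_integral_Ioc, ← intervalIntegral.integral_of_le (hle i), integral_pow]

theorem det_sub_succ_row {R : Type*} [CommRing R] {r : ℕ} (V : Matrix (Fin r) (Fin r) R) :
    (Matrix.of fun i j => V i j - if h : (i : ℕ) + 1 < r then V ⟨i + 1, h⟩ j else 0).det =
      V.det := by
  let U : Matrix (Fin r) (Fin r) R := .of fun i k => if (k : ℕ) = i + 1 then 1 else 0
  have hUV : ∀ i j, (U * V) i j = if h : (i : ℕ) + 1 < r then V ⟨i + 1, h⟩ j else 0 := by
    intro i j
    split_ifs with h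
    · simp [U, Matrix.mul_apply, ← Fin.ext_iff (b := (⟨i + 1, h⟩ : Fin r))]
    · rw [Matrix.mul_apply]
      refine Finset.sum_eq_zero fun k _ => ?_
      have := k.2
      simp [U, show (k : ℕ) ≠ i + 1 by omega]
  have hU : (1 - U).det = 1 := by
    rw [Matrix.det_of_isUpperTriangular fun i k (hki : k < i) => by
      simp [U, hki.ne', show (k : ℕ) ≠ i + 1 by omega]]
    simp [U]
  rw [show Matrix.of _ = (1 - U) * V by ext i j; simp [sub_mul, hUV], Matrix.det_mul, hU, one_mul]

theorem det_eq_det_castSucc_of_col_last {R : Type*} [CommRing R] {r : ℕ}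
    (M : Matrix (Fin (r + 1)) (Fin (r + 1)) R) (hcol : ∀ i : Fin r, M i.castSucc (.last r) = 0)
    (hlast : M (.last r) (.last r) = 1) :
    M.det = (M.submatrix Fin.castSucc Fin.castSucc).det := by
  rw [Matrix.det_succ_column M (.last r), Fintype.sum_eq_single (.last r) fun i hi => by
    obtain ⟨i, rfl⟩ := Fin.exists_castSucc_eq.2 hi
    simp [hcol]]
  simp [hlast, Fin.succAbove_last]

def padZero {r : ℕ} (b : Fin r → ℝ) (i : ℕ) : ℝ := if h : i < r then b ⟨i, h⟩ else 0

theorem padZero_nonneg {r : ℕ} {b : Fin r → ℝ} (hb0 : ∀ i, 0 ≤ b i) (i : ℕ) :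
    0 ≤ padZero b i := by
  unfold padZero
  split_ifs
  exacts [hb0 _, le_rfl]

def ShiftedAntitone (Y : ℕ → ℕ → ℝ) : Prop :=
  ∀ i q, Y i (q + 1) ≤ Y i q ∧ Y (i + 1) q ≤ Y i (q + 1)

theorem ShiftedAntitone.iff_succ {Y : ℕ → ℕ → ℝ} : ShiftedAntitone Y ↔
    (∀ i, Y i 1 ≤ Y i 0 ∧ Y (i + 1) 0 ≤ Y i 1) ∧
      ShiftedAntitone fun i q => Y i (q + 1) := by
  refine ⟨fun h => ⟨fun i => h i 0, fun i q => h i (q + 1)⟩, fun ⟨h₀, h⟩ i q => ?_⟩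
  cases q with
  | zero => exact h₀ i
  | succ q => exact h i q

theorem ShiftedAntitone.antitone_row {Y : ℕ → ℕ → ℝ} (h : ShiftedAntitone Y) (i : ℕ) :
    Antitone (Y i) :=
  antitone_nat_of_succ_le fun q => (h i q).1

section ShiftedPolytope

variable {r : ℕ} {n : Fin r → ℕ}

def shiftedFilling (b : Fin r → ℝ) (y : (Σ i : Fin r, Fin (n i)) → ℝ) : ℕ → ℕ → ℝ
  | i, 0 => padZero b i
  | i, q + 1 =>
    if h : i < r then (if h' : q < n ⟨i, h⟩ then y ⟨⟨i, h⟩, ⟨q, h'⟩⟩ else 0) else 0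

variable (r n) in
def shiftedPolytope (b : Fin r → ℝ) : Set ((Σ i : Fin r, Fin (n i)) → ℝ) :=
  {y | ShiftedAntitone (shiftedFilling b y)}

variable (b : Fin r → ℝ) (y : (Σ i : Fin r, Fin (n i)) → ℝ)

theorem shiftedFilling_zero (i : Fin r) : shiftedFilling b y i 0 = b i := by
  simp [shiftedFilling, padZero]

theorem shiftedFilling_of_lt (i : Fin r) {q : ℕ} (hq : q < n i) :
    shiftedFilling b y i (q + 1) = y ⟨i, ⟨q, hq⟩⟩ := by
  simp [shiftedFilling, hq]

theorem shiftedFilling_eq_zero (i : Fin r) {p : ℕ} (hp : n i < p) :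
    shiftedFilling b y i p = 0 := by
  obtain ⟨q, rfl⟩ : ∃ q, p = q + 1 := ⟨p - 1, by omega⟩
  simp [shiftedFilling, show ¬ q < n i by omega]

theorem shiftedFilling_of_le {i : ℕ} (hi : r ≤ i) (p : ℕ) : shiftedFilling b y i p = 0 := by
  cases p <;> simp [shiftedFilling, padZero, show ¬ i < r by omega]

theorem measurable_shiftedFilling_apply (i q : ℕ) :
    Measurable fun y : (Σ i : Fin r, Fin (n i)) → ℝ => shiftedFilling b y i q := by
  cases q with
  | zero => exact measurable_const
  | succ q =>
    simp only [shiftedFilling]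
    split_ifs
    exacts [measurable_pi_apply _, measurable_const, measurable_const]

theorem measurableSet_shiftedPolytope : MeasurableSet (shiftedPolytope r n b) := by
  simp only [shiftedPolytope, ShiftedAntitone, Set.ofPred_forall, Set.ofPred_and]
  have hY := measurable_shiftedFilling_apply (n := n) b
  exact .iInter fun i => .iInter fun q =>
    (measurableSet_le (hY ..) (hY ..)).inter (measurableSet_le (hY ..) (hY ..))

variable {b y}

theorem ShiftedAntitone.shiftedFilling_nonneg (h : ShiftedAntitone (shiftedFilling b y))
    (i p : ℕ) : 0 ≤ shiftedFilling b y i p := by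
  by_cases hi : i < r
  · calc 0 = shiftedFilling b y i (max p (n ⟨i, hi⟩ + 1)) :=
          (shiftedFilling_eq_zero b y ⟨i, hi⟩ (by omega)).symm
      _ ≤ shiftedFilling b y i p := h.antitone_row i (le_max_left _ _)
  · exact (shiftedFilling_of_le b y (not_lt.1 hi) p).ge

theorem ShiftedAntitone.shiftedFilling_le (h : ShiftedAntitone (shiftedFilling b y)) (i : Fin r)
    (p : ℕ) : shiftedFilling b y i p ≤ b i :=
  (h.antitone_row i (Nat.zero_le p)).trans_eq (shiftedFilling_zero b y i)

end ShiftedPolytope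

open Nat in
noncomputable def shiftedVolume {r : ℕ} (n : Fin r → ℕ) (b : Fin r → ℝ) : ℝ :=
  (Matrix.of fun i j => b i ^ n j).det / ∏ j, ((n j)! : ℝ)

theorem continuous_shiftedVolume {r : ℕ} (n : Fin r → ℕ) : Continuous (shiftedVolume n) :=
  (continuous_matrix fun i j => (continuous_apply i).pow (n j)).matrix_det.div_const _

theorem StrictAnti.exists_pos_iff_lt {r : ℕ} {n : Fin r → ℕ} (hn : StrictAnti n) :
    ∃ r' ≤ r, r ≤ r' + 1 ∧ ∀ i : Fin r, 0 < n i ↔ (i : ℕ) < r' := by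
  cases r with
  | zero => exact ⟨0, le_rfl, by omega, fun i => i.elim0⟩
  | succ r =>
    by_cases h : n (.last r) = 0
    · refine ⟨r, by omega, le_rfl, fun i => ?_⟩
      rcases (Fin.le_last i).lt_or_eq with hi | rfl
      · simp only [hn hi |>.trans_le' (Nat.zero_le _), true_iff]
        simpa [Fin.lt_def] using hi
      · simp [h]
    · refine ⟨r + 1, le_rfl, by omega, fun i => ⟨fun _ => i.2, fun _ => ?_⟩⟩
      exact (Nat.pos_of_ne_zero h).trans_le (hn.antitone (Fin.le_last i))

section Peel

variable {r r' : ℕ} {n : Fin r → ℕ} {n' : Fin r' → ℕ} (hr : r' ≤ r)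
  (hpos : ∀ i : Fin r, 0 < n i ↔ (i : ℕ) < r')
  (hn : ∀ i : Fin r', n' i + 1 = n (Fin.castLE hr i))

def peelEquiv : Fin r' ⊕ (Σ i : Fin r', Fin (n' i)) ≃ Σ i : Fin r, Fin (n i) where
  toFun
    | .inl i => ⟨Fin.castLE hr i, ⟨0, by rw [← hn]; omega⟩⟩
    | .inr ⟨i, q⟩ => ⟨Fin.castLE hr i, ⟨q + 1, by rw [← hn]; omega⟩⟩
  invFun c :=
    have hc : (c.1 : ℕ) < r' := (hpos c.1).1 (Nat.zero_lt_of_lt c.2.2)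
    if hq : (c.2 : ℕ) = 0 then .inl ⟨c.1, hc⟩
    else .inr ⟨⟨c.1, hc⟩, ⟨c.2 - 1, by
      have := hn ⟨c.1, hc⟩
      simp only [Fin.castLE_mk, Fin.eta] at this
      omega⟩⟩
  left_inv := by rintro (i | ⟨i, q⟩) <;> simp
  right_inv := by
    rintro ⟨i, q⟩
    by_cases hq : (q : ℕ) = 0
    · simp [hq, Fin.ext_iff]
    · simp only [hq, dif_neg, not_false_eq_true]
      congr 1
      simp only [Fin.castLE_mk, Fin.eta, Fin.ext_iff]
      omega

def peelMap :
    (Fin r' → ℝ) × ((Σ i : Fin r', Fin (n' i)) → ℝ) ≃ᵐ ((Σ i : Fin r, Fin (n i)) → ℝ) :=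
  (MeasurableEquiv.sumPiEquivProdPi fun _ => ℝ).symm.trans
    (MeasurableEquiv.piCongrLeft (fun _ => ℝ) (peelEquiv hr hpos hn))

theorem measurePreserving_peelMap : MeasurePreserving (peelMap hr hpos hn) :=
  (volume_measurePreserving_sumPiEquivProdPi_symm fun _ => ℝ).trans
    (volume_measurePreserving_piCongrLeft (fun _ => ℝ) (peelEquiv hr hpos hn))

theorem shiftedFilling_peelMap (b : Fin r → ℝ) (t : Fin r' → ℝ)
    (z : (Σ i : Fin r', Fin (n' i)) → ℝ) (i q : ℕ) :
    shiftedFilling b (peelMap hr hpos hn (t, z)) i (q + 1) = shiftedFilling t z i q := by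
  by_cases hi : i < r'
  · have hir : i < r := hi.trans_le hr
    have hni : n' ⟨i, hi⟩ + 1 = n ⟨i, hir⟩ := hn ⟨i, hi⟩
    cases q with
    | zero =>
      simp only [shiftedFilling, padZero, dif_pos hi, dif_pos hir,
        dif_pos (show 0 < n ⟨i, hir⟩ by omega)]
      exact Equiv.piCongrLeft_sumInl (fun _ => ℝ) (peelEquiv hr hpos hn) t z ⟨i, hi⟩
    | succ q =>
      simp only [shiftedFilling, dif_pos hi, dif_pos hir]
      by_cases hq : q < n' ⟨i, hi⟩
      · rw [dif_pos hq, dif_pos (by omega)]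
        exact Equiv.piCongrLeft_sumInr (fun _ => ℝ) (peelEquiv hr hpos hn) t z
          ⟨⟨i, hi⟩, ⟨q, hq⟩⟩
      · rw [dif_neg hq, dif_neg (by omega)]
  · have hni : ∀ h : i < r, n ⟨i, h⟩ = 0 := fun h =>
      Nat.eq_zero_of_not_pos fun hp => hi ((hpos ⟨i, h⟩).1 hp)
    cases q <;> simp [shiftedFilling, padZero, hi, hni]

theorem peelMap_mem_shiftedPolytope_iff (b : Fin r → ℝ) (t : Fin r' → ℝ)
    (z : (Σ i : Fin r', Fin (n' i)) → ℝ) :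
    peelMap hr hpos hn (t, z) ∈ shiftedPolytope r n b ↔
      (∀ i, padZero t i ≤ padZero b i ∧ padZero b (i + 1) ≤ padZero t i) ∧
        z ∈ shiftedPolytope r' n' t := by
  simp only [shiftedPolytope, Set.mem_ofPred_eq, ShiftedAntitone.iff_succ (Y := shiftedFilling b _),
    shiftedFilling_peelMap]
  rfl

variable (b : Fin r → ℝ)

def interlacingBox : Set (Fin r' → ℝ) :=
  Set.univ.pi fun i => Set.Icc (padZero b (i + 1)) (b (Fin.castLE hr i))

theorem measurableSet_interlacingBox : MeasurableSet (interlacingBox hr b) :=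
  .univ_pi fun _ => measurableSet_Icc

theorem isCompact_interlacingBox : IsCompact (interlacingBox hr b) :=
  isCompact_univ_pi fun _ => isCompact_Icc

variable {b} (hr1 : r ≤ r' + 1) (hb : Antitone b) (hb0 : ∀ i, 0 ≤ b i)

include hr1 hb0 in
theorem forall_padZero_interlace_iff (t : Fin r' → ℝ) :
    (∀ i, padZero t i ≤ padZero b i ∧ padZero b (i + 1) ≤ padZero t i) ↔
      t ∈ interlacingBox hr b := by
  simp only [interlacingBox, Set.mem_univ_pi, Set.mem_Icc]
  refine ⟨fun h i => ?_, fun h i => ?_⟩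
  · have := h i
    simp only [padZero, dif_pos i.2, dif_pos (i.2.trans_le hr)] at this
    exact ⟨this.2, this.1⟩
  · by_cases hi : i < r'
    · simpa [padZero, and_comm, hi, show i < r from hi.trans_le hr] using h ⟨i, hi⟩
    · simp only [padZero, dif_neg hi, dif_neg (show ¬ i + 1 < r by omega), le_refl, and_true]
      split_ifs
      exacts [hb0 _, le_rfl]

include hpos hn hr1 hb0 in
theorem volume_shiftedPolytope_eq_lintegral :
    volume (shiftedPolytope r n b) =
      ∫⁻ t in interlacingBox hr b, volume (shiftedPolytope r' n' t) := by
  rw [← (measurePreserving_peelMap hr hpos hn).measure_preimage_equiv, Measure.volume_eq_prod,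
    Measure.prod_apply ((peelMap hr hpos hn).measurable (measurableSet_shiftedPolytope b)),
    ← lintegral_indicator (measurableSet_interlacingBox hr b)]
  refine lintegral_congr fun t => ?_
  simp only [Set.preimage, Set.mem_ofPred_eq, peelMap_mem_shiftedPolytope_iff,
    forall_padZero_interlace_iff hr hr1 hb0]
  by_cases ht : t ∈ interlacingBox hr b
  · simp only [Set.indicator_of_mem ht, ht, true_and]
    rfl
  · simp only [Set.indicator_of_notMem ht, ht, false_and, Set.ofPred_false, measure_empty]

include hpos hn hr1 in
theorem det_pow_sub_padZero_pow :
    (Matrix.of fun i j : Fin r' =>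
        b (Fin.castLE hr i) ^ (n' j + 1) - padZero b (i + 1) ^ (n' j + 1)).det =
      (Matrix.of fun i j => b i ^ n j).det := by
  rw [← det_sub_succ_row (Matrix.of fun i j => b i ^ n j)]
  obtain rfl | rfl : r = r' ∨ r = r' + 1 := by omega
  · congr with i j
    have hj : n j ≠ 0 := Nat.pos_iff_ne_zero.1 ((hpos j).2 j.2)
    simp only [Matrix.of_apply, hn, padZero, show ∀ i, Fin.castLE hr i = i from fun _ => rfl]
    split_ifs <;> simp [hj]
  · -- the last row has no free cells, so the last column of `b i ^ n j` is constant `1`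
    have hlast : n (.last r') = 0 :=
      Nat.eq_zero_of_not_pos fun h => lt_irrefl r' ((hpos _).1 h)
    rw [det_eq_det_castSucc_of_col_last _ (fun i => by simp [hlast]) (by simp [hlast])]
    congr with i j
    simp only [Matrix.of_apply, hn, padZero, Fin.val_castSucc, dite_true,
      show (i : ℕ) + 1 < r' + 1 by omega]
    rfl

include hpos hn hr1 in
open Nat in
theorem prod_factorial_succ_eq : ∏ j, ((n' j + 1)! : ℝ) = ∏ j, ((n j)! : ℝ) := by
  obtain rfl | rfl : r = r' ∨ r = r' + 1 := by omega
  · exact Finset.prod_congr rfl fun j _ => by rw [hn]; rfl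
  · have hlast : n (.last r') = 0 :=
      Nat.eq_zero_of_not_pos fun h => lt_irrefl r' ((hpos _).1 h)
    rw [Fin.prod_univ_castSucc, hlast]
    simp only [factorial_zero, cast_one, mul_one]
    exact Finset.prod_congr rfl fun j _ => by rw [hn]; rfl

include hb hb0 in
theorem padZero_succ_le (i : Fin r') : padZero b (i + 1) ≤ b (Fin.castLE hr i) := by
  unfold padZero
  split_ifs
  exacts [hb (Fin.le_iff_val_le_val.2 (by simp)), hb0 _]

include hb hb0 in
theorem antitone_of_mem_interlacingBox {t : Fin r' → ℝ} (ht : t ∈ interlacingBox hr b) :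
    Antitone t ∧ ∀ i, 0 ≤ t i := by
  simp only [interlacingBox, Set.mem_univ_pi, Set.mem_Icc] at ht
  refine ⟨fun i j hij => ?_, fun i => (padZero_nonneg hb0 _).trans (ht i).1⟩
  rcases hij.eq_or_lt with rfl | hij
  · exact le_rfl
  calc t j ≤ b (Fin.castLE hr j) := (ht j).2
    _ ≤ b ⟨i + 1, by omega⟩ := hb (Fin.le_iff_val_le_val.2 (by simpa using hij))
    _ = padZero b (i + 1) := by simp [padZero, show (i : ℕ) + 1 < r by omega]
    _ ≤ t i := (ht i).1

include hpos hn hr1 hb hb0 in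
open Nat in
theorem setIntegral_shiftedVolume :
    ∫ t in interlacingBox hr b, shiftedVolume n' t = shiftedVolume n b := by
  unfold shiftedVolume interlacingBox
  rw [integral_div, setIntegral_det_pow_univ_pi (padZero_succ_le hr hb hb0),
    ← det_pow_sub_padZero_pow hr hpos hn hr1, ← prod_factorial_succ_eq hr hpos hn hr1]
  have hrow := Matrix.det_mul_row (fun j => ((n' j : ℝ) + 1)⁻¹)
    (.of fun i j => b (Fin.castLE hr i) ^ (n' j + 1) - padZero b (i + 1) ^ (n' j + 1))
  simp only [Matrix.of_apply, inv_mul_eq_div] at hrow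
  rw [hrow, Finset.prod_inv_distrib]
  simp only [factorial_succ, cast_mul, Finset.prod_mul_distrib]
  push_cast
  field_simp

include hpos hn hr1 hb hb0 in
theorem volume_shiftedPolytope_of_peeled
    (ih : ∀ t ∈ interlacingBox hr b,
      volume (shiftedPolytope r' n' t) = .ofReal (shiftedVolume n' t) ∧
        0 ≤ shiftedVolume n' t) :
    volume (shiftedPolytope r n b) = .ofReal (shiftedVolume n b) ∧ 0 ≤ shiftedVolume n b := by
  have hbox := measurableSet_interlacingBox hr b
  rw [← setIntegral_shiftedVolume hr hpos hn hr1 hb hb0,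
    volume_shiftedPolytope_eq_lintegral hr hpos hn hr1 hb0,
    setLIntegral_congr_fun hbox fun t ht => (ih t ht).1,
    ← ofReal_integral_eq_lintegral_ofReal
      ((continuous_shiftedVolume n').continuousOn.integrableOn_compact
        (isCompact_interlacingBox hr b))
      ((ae_restrict_iff' hbox).2 (ae_of_all _ fun t ht => (ih t ht).2))]
  exact ⟨rfl, setIntegral_nonneg hbox fun t ht => (ih t ht).2⟩

end Peel

theorem volume_shiftedPolytope_of_lt (m : ℕ) {r : ℕ} {n : Fin r → ℕ} (hn : StrictAnti n)
    (hm : ∀ i, n i < m) {b : Fin r → ℝ} (hb : Antitone b) (hb0 : ∀ i, 0 ≤ b i) :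
    volume (shiftedPolytope r n b) = .ofReal (shiftedVolume n b) ∧ 0 ≤ shiftedVolume n b := by
  induction m generalizing r with
  | zero =>
    obtain rfl : r = 0 := by
      cases r
      · rfl
      · exact absurd (hm 0) (Nat.not_lt_zero _)
    have : shiftedPolytope 0 n b = Set.univ :=
      Set.eq_univ_of_forall fun y i q => by cases q <;> simp [shiftedFilling, padZero]
    simp [this, shiftedVolume, volume_pi]
  | succ m ih =>
    obtain ⟨r', hr, hr1, hpos⟩ := hn.exists_pos_iff_lt
    let n' : Fin r' → ℕ := fun i => n (Fin.castLE hr i) - 1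
    have hn' : ∀ i, n' i + 1 = n (Fin.castLE hr i) := fun i =>
      Nat.sub_add_cancel ((hpos _).2 i.2)
    refine volume_shiftedPolytope_of_peeled hr hpos hn' hr1 hb hb0 fun t ht => ?_
    obtain ⟨ht, ht0⟩ := antitone_of_mem_interlacingBox hr hb hb0 ht
    refine ih (fun i j hij => ?_) (fun i => ?_) ht ht0
    · have := hn (show Fin.castLE hr i < Fin.castLE hr j from hij)
      have := hn' i
      have := hn' j
      omega
    · have := hm (Fin.castLE hr i)
      have := hn' i
      omega

theorem volume_shiftedPolytope {r : ℕ} {n : Fin r → ℕ} (hn : StrictAnti n) {b : Fin r → ℝ}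
    (hb : Antitone b) (hb0 : ∀ i, 0 ≤ b i) :
    volume (shiftedPolytope r n b) = .ofReal (shiftedVolume n b) :=
  (volume_shiftedPolytope_of_lt (Finset.univ.sup n + 1) hn
    (fun i => Nat.lt_succ_of_le (Finset.le_sup (Finset.mem_univ i))) hb hb0).1

section HeadPolytope

variable {k : ℕ} {lam : Fin k → ℕ}

theorem mem_cellsOf {c : Fin k × ℤ} :
    c ∈ cellsOf k lam ↔ -((k : ℤ) - 1 - c.1) ≤ c.2 ∧ c.2 ≤ lam c.1 := by
  simp only [cellsOf, Finset.mem_filter, Finset.mem_product, Finset.mem_univ, Finset.mem_Icc,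
    true_and, and_iff_right_iff_imp]
  have := Finset.le_sup (f := lam) (Finset.mem_univ c.1)
  omega

theorem mem_freeCells {c : Fin k × ℤ} :
    c ∈ freeCells k lam ↔ -((k : ℤ) - 1 - c.1) < c.2 ∧ c.2 ≤ lam c.1 := by
  simp only [freeCells, Finset.mem_filter, mem_cellsOf]
  omega

variable (k lam) in
def headRowLength (i : Fin k) : ℕ := lam i + (k - 1 - i)

theorem strictAnti_headRowLength (hlam : Antitone lam) : StrictAnti (headRowLength k lam) :=
  fun i j hij => by
    have := hlam hij.le
    have : (i : ℕ) < j := hij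
    simp only [headRowLength]
    omega

variable (k lam) in
def headCellEquiv :
    (Σ i : Fin k, Fin (headRowLength k lam i)) ≃ {c // c ∈ freeCells k lam} where
  toFun c := ⟨(c.1, (c.2 : ℤ) + 1 - (k - 1 - c.1)), by
    have := c.2.2
    simp only [mem_freeCells, headRowLength] at this ⊢
    omega⟩
  invFun c := ⟨c.1.1, ⟨(c.1.2 + (k - 1 - c.1.1) - 1).toNat, by
    have := mem_freeCells.1 c.2
    simp only [headRowLength]
    omega⟩⟩
  left_inv c := by
    ext
    · rfl
    · simp
  right_inv c := by
    have := mem_freeCells.1 c.2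
    ext
    · rfl
    · simp only [Int.pred_toNat]
      omega

variable (k lam) in
noncomputable def headCellMap :
    ((Σ i : Fin k, Fin (headRowLength k lam i)) → ℝ) ≃ᵐ
      ({c // c ∈ freeCells k lam} → ℝ) :=
  MeasurableEquiv.piCongrLeft (fun _ => ℝ) (headCellEquiv k lam)

theorem measurePreserving_headCellMap : MeasurePreserving (headCellMap k lam) :=
  volume_measurePreserving_piCongrLeft (fun _ => ℝ) (headCellEquiv k lam)

variable {x : Fin k → ℝ} {w : (Σ i : Fin k, Fin (headRowLength k lam i)) → ℝ}

variable (x w) in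
theorem extendDiag_headCellMap {i : Fin k} {j : ℤ} {p : ℕ} (hp : p ≤ headRowLength k lam i)
    (hj : j + (k - 1 - i) = p) :
    extendDiag k lam x (headCellMap k lam w) (i, j) = shiftedFilling (x ∘ Fin.rev) w i p := by
  cases p with
  | zero =>
    have : (i, j) ∉ freeCells k lam := by simp only [mem_freeCells]; omega
    rw [extendDiag, dif_neg this, shiftedFilling_zero]
    rfl
  | succ q =>
    have hq : q < headRowLength k lam i := hp
    have hfree : (i, j) = (headCellEquiv k lam ⟨i, ⟨q, hq⟩⟩).1 := by
      simp only [headCellEquiv, Equiv.coe_fn_mk, Prod.mk.injEq, true_and]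
      omega
    rw [extendDiag, shiftedFilling_of_lt _ _ i hq, hfree, dif_pos (Subtype.prop _)]
    exact Equiv.piCongrLeft_apply_apply (fun _ => ℝ) (headCellEquiv k lam) w ⟨i, ⟨q, hq⟩⟩

variable (k lam x) in
def headPolytope : Set ({c : Fin k × ℤ // c ∈ freeCells k lam} → ℝ) :=
  {y | (∀ c ∈ cellsOf k lam, 0 ≤ extendDiag k lam x y c ∧ extendDiag k lam x y c ≤ 1) ∧
    (∀ (i : Fin k) (h : (i : ℕ) + 1 < k) (j : ℤ),
      (i, j) ∈ cellsOf k lam → ((⟨(i : ℕ) + 1, h⟩ : Fin k), j) ∈ cellsOf k lam →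
      extendDiag k lam x y ((⟨(i : ℕ) + 1, h⟩ : Fin k), j) ≤
        extendDiag k lam x y (i, j)) ∧
    (∀ (i : Fin k) (j : ℤ), (i, j) ∈ cellsOf k lam → (i, j + 1) ∈ cellsOf k lam →
      extendDiag k lam x y (i, j + 1) ≤ extendDiag k lam x y (i, j))}

theorem headCellMap_mem_headPolytope (hx : ∀ i, x i ≤ 1)
    (hw : ShiftedAntitone (shiftedFilling (x ∘ Fin.rev) w)) :
    headCellMap k lam w ∈ headPolytope k lam x := by
  refine ⟨fun ⟨i, j⟩ hc => ?_, fun i h j hc hc' => ?_, fun i j hc hc' => ?_⟩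
  · have := mem_cellsOf.1 hc
    simp only at this
    rw [extendDiag_headCellMap x w (p := (j + (k - 1 - i)).toNat)
      (by simp only [headRowLength]; omega) (by omega)]
    exact ⟨hw.shiftedFilling_nonneg _ _, (hw.shiftedFilling_le _ _).trans (hx _)⟩
  · have := mem_cellsOf.1 hc
    have := mem_cellsOf.1 hc'
    simp only at *
    rw [extendDiag_headCellMap x w (p := (j + (k - 1 - (i + 1))).toNat)
        (by simp only [headRowLength]; omega) (by push_cast; omega),
      extendDiag_headCellMap x w (p := (j + (k - 1 - (i + 1))).toNat + 1)
        (by simp only [headRowLength]; omega) (by omega)]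
    exact (hw _ _).2
  · have := mem_cellsOf.1 hc
    have := mem_cellsOf.1 hc'
    simp only at *
    rw [extendDiag_headCellMap x w (p := (j + (k - 1 - i)).toNat + 1)
        (by simp only [headRowLength]; omega) (by omega),
      extendDiag_headCellMap x w (p := (j + (k - 1 - i)).toNat)
        (by simp only [headRowLength]; omega) (by omega)]
    exact (hw _ _).1

theorem shiftedFilling_nonneg_of_mem_headPolytope
    (hw : headCellMap k lam w ∈ headPolytope k lam x) (i p : ℕ) :
    0 ≤ shiftedFilling (x ∘ Fin.rev) w i p := by
  by_cases hi : i < k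
  · by_cases hp : p ≤ headRowLength k lam ⟨i, hi⟩
    · rw [← extendDiag_headCellMap x w (j := p - (k - 1 - i)) hp (by simp)]
      exact (hw.1 _ (mem_cellsOf.2 (by simp only [headRowLength] at hp ⊢; omega))).1
    · exact (shiftedFilling_eq_zero _ _ ⟨i, hi⟩ (by omega)).ge
  · exact (shiftedFilling_of_le _ _ (not_lt.1 hi) p).ge

theorem shiftedAntitone_of_headCellMap_mem (hlam : Antitone lam)
    (hw : headCellMap k lam w ∈ headPolytope k lam x) :
    ShiftedAntitone (shiftedFilling (x ∘ Fin.rev) w) := by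
  have hY0 := shiftedFilling_nonneg_of_mem_headPolytope hw
  obtain ⟨-, hvert, hhor⟩ := hw
  intro i q
  by_cases hi : i < k
  swap
  · simp [shiftedFilling_of_le _ _ (not_lt.1 hi),
      shiftedFilling_of_le _ _ (show k ≤ i + 1 by omega)]
  constructor
  · by_cases hq : q + 1 ≤ headRowLength k lam ⟨i, hi⟩
    · rw [← extendDiag_headCellMap x w (i := ⟨i, hi⟩) (j := q - (k - 1 - i) + 1) hq
          (by push_cast; ring),
        ← extendDiag_headCellMap x w (i := ⟨i, hi⟩) (j := q - (k - 1 - i)) (by omega)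
          (by simp)]
      exact hhor ⟨i, hi⟩ _ (mem_cellsOf.2 (by simp only [headRowLength] at hq ⊢; omega))
        (mem_cellsOf.2 (by simp only [headRowLength] at hq ⊢; omega))
    · rw [shiftedFilling_eq_zero _ _ ⟨i, hi⟩ (by omega)]
      exact hY0 _ _
  · by_cases hi1 : i + 1 < k
    swap
    · rw [shiftedFilling_of_le _ _ (not_lt.1 hi1)]
      exact hY0 _ _
    by_cases hq : q ≤ headRowLength k lam ⟨i + 1, hi1⟩
    · have hlam' : lam ⟨i + 1, hi1⟩ ≤ lam ⟨i, hi⟩ := hlam (Fin.mk_le_mk.2 (by omega))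
      simp only [headRowLength] at hq
      rw [← extendDiag_headCellMap x w (i := ⟨i + 1, hi1⟩) (j := q - (k - 1 - (i + 1))) hq
          (by simp),
        ← extendDiag_headCellMap x w (i := ⟨i, hi⟩) (j := q - (k - 1 - (i + 1))) (p := q + 1)
          (by simp only [headRowLength]; omega) (by push_cast; ring)]
      exact hvert ⟨i, hi⟩ hi1 _ (mem_cellsOf.2 (by push_cast; omega))
        (mem_cellsOf.2 (by push_cast; omega))
    · rw [shiftedFilling_eq_zero _ _ ⟨i + 1, hi1⟩ (by omega)]
      exact hY0 _ _

theorem preimage_headCellMap_headPolytope (hlam : Antitone lam) (hx : ∀ i, x i ≤ 1) :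
    headCellMap k lam ⁻¹' headPolytope k lam x =
      shiftedPolytope k (headRowLength k lam) (x ∘ Fin.rev) :=
  Set.ext fun _ => ⟨shiftedAntitone_of_headCellMap_mem hlam, headCellMap_mem_headPolytope hx⟩

end HeadPolytope

theorem head_polytope_section_volume_general (k : ℕ)
    (lam : Fin k → ℕ) (hlam : ∀ i j : Fin k, i ≤ j → lam j ≤ lam i)
    (x : Fin k → ℝ) (hx01 : ∀ i, 0 ≤ x i ∧ x i ≤ 1) (hmono : Monotone x) :
    volume {y : {c : Fin k × ℤ // c ∈ freeCells k lam} → ℝ |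
        (∀ c ∈ cellsOf k lam,
          0 ≤ extendDiag k lam x y c ∧ extendDiag k lam x y c ≤ 1) ∧
        (∀ (i : Fin k) (h : (i : ℕ) + 1 < k) (j : ℤ),
          (i, j) ∈ cellsOf k lam → ((⟨(i : ℕ) + 1, h⟩ : Fin k), j) ∈ cellsOf k lam →
          extendDiag k lam x y ((⟨(i : ℕ) + 1, h⟩ : Fin k), j) ≤ extendDiag k lam x y (i, j)) ∧
        (∀ (i : Fin k) (j : ℤ),
          (i, j) ∈ cellsOf k lam → (i, j + 1) ∈ cellsOf k lam →
          extendDiag k lam x y (i, j + 1) ≤ extendDiag k lam x y (i, j))} =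
      ENNReal.ofReal
        ((1 / ∏ j : Fin k, (Nat.factorial (lam j + (k - 1 - (j : ℕ))) : ℝ)) *
          Matrix.det (Matrix.of fun i j : Fin k =>
            x (Fin.rev i) ^ (lam j + (k - 1 - (j : ℕ))))) := by
  change volume (headPolytope k lam x) = _
  rw [← measurePreserving_headCellMap.measure_preimage_equiv,
    preimage_headCellMap_headPolytope hlam fun i => (hx01 i).2,
    volume_shiftedPolytope (strictAnti_headRowLength hlam) (hmono.comp_antitone Fin.rev_anti)
      fun i => (hx01 i.rev).1,
    shiftedVolume, one_div, inv_mul_eq_div]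
  rfl

/-- **Head/tail polytope section volume.** The Lebesgue measure of the section
of the head polytope of `λ` with diagonal values `x_1 ≤ … ≤ x_k` (placed
bottom-to-top) equals `det(x_{k+1−i}^{L_j}) / ∏_j L_j!` where `L_j = λ_j + k − j`. -/
theorem head_polytope_section_volume (k : ℕ) (hk : 1 ≤ k)
    (lam : Fin k → ℕ) (hlam : ∀ i j : Fin k, i ≤ j → lam j ≤ lam i)
    (x : Fin k → ℝ) (hx01 : ∀ i, 0 ≤ x i ∧ x i ≤ 1) (hmono : Monotone x) :
    volume {y : {c : Fin k × ℤ // c ∈ freeCells k lam} → ℝ |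
        (∀ c ∈ cellsOf k lam,
          0 ≤ extendDiag k lam x y c ∧ extendDiag k lam x y c ≤ 1) ∧
        (∀ (i : Fin k) (h : (i : ℕ) + 1 < k) (j : ℤ),
          (i, j) ∈ cellsOf k lam → ((⟨(i : ℕ) + 1, h⟩ : Fin k), j) ∈ cellsOf k lam →
          extendDiag k lam x y ((⟨(i : ℕ) + 1, h⟩ : Fin k), j) ≤ extendDiag k lam x y (i, j)) ∧
        (∀ (i : Fin k) (j : ℤ),
          (i, j) ∈ cellsOf k lam → (i, j + 1) ∈ cellsOf k lam →
          extendDiag k lam x y (i, j + 1) ≤ extendDiag k lam x y (i, j))} =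
      ENNReal.ofReal
        ((1 / ∏ j : Fin k, (Nat.factorial (lam j + (k - 1 - (j : ℕ))) : ℝ)) *
          Matrix.det (Matrix.of fun i j : Fin k =>
            x (Fin.rev i) ^ (lam j + (k - 1 - (j : ℕ))))) :=
  head_polytope_section_volume_general k lam hlam x hx01 hmono
end

section
/- Fix an integer k ≥ 1 and integers j_1 > j_2 > … > j_k > 0. Define φ(x_1,…,x_k) = 2^{k/2} · det( cos(π(2j_p−1)x_q/2) )_{1≤p,q≤k} and λ = 2^k · (−1)^{k(k−1)/2 + Σ_{p=1}^k (j_p+1)} / ( π^k · (2j_1−1)(2j_2−1)⋯(2j_k−1) ). Then for all real numbers 0 ≤ x_1 ≤ x_2 ≤ … ≤ x_k ≤ 1, the iterated integral ∫_{y_1=0}^{1−x_k} ∫_{y_2=1−x_k}^{1−x_{k−1}} ∫_{y_3=1−x_{k−1}}^{1−x_{k−2}} ⋯ ∫_{y_k=1−x_2}^{1−x_1} φ(y_1,…,y_k) dy_k ⋯ dy_1 equals λ · φ(x_1,…,x_k). -/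
/-!
Expanding the determinant and integrating term by term (Fubini), the integral of
`det (f_p (y_q))` over a box is the determinant of the one-variable integrals `∫_{a_q}^{b_q} f_p`.
With `ω_j = π(2j−1)/2` we have `sin (ω_j (1 − u)) = (−1)^(j+1) cos (ω_j u)`, so
`∫_{1−v}^{1−u} cos (ω_j t) dt = (−1)^(j+1) ω_j⁻¹ (cos (ω_j u) − cos (ω_j v))`; since `cos ω_j = 0`,
the first interval `[0, 1 − x_k] = [1 − 1, 1 − x_k]` follows the same pattern. Thus the matrix of
integrals is a diagonal matrix times the cosine matrix of `x` with its columns reversed and each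
column diminished by the previous one. The column differences leave the determinant unchanged, and
the reversal contributes the sign `(−1)^(k(k−1)/2)`.
-/

open MeasureTheory

/-- The eigenfunction `φ_{j_1,…,j_k}(x) = 2^{k/2} det( cos(π(2j_p−1)x_q/2) )_{p,q}`
of the `2k`-strip transfer operator. -/
noncomputable def phiCos (k : ℕ) (jj : Fin k → ℕ) (x : Fin k → ℝ) : ℝ :=
  Real.sqrt 2 ^ k *
    Matrix.det (Matrix.of fun p q : Fin k =>
      Real.cos (Real.pi * (2 * (jj p : ℝ) - 1) * x q / 2))

open Equiv Real Matrix

theorem Fin.sign_revPerm (n : ℕ) :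
    Perm.sign (Fin.revPerm : Perm (Fin n)) = (-1) ^ n.choose 2 := by
  induction n with
  | zero => rfl
  | succ n ih =>
    have hdecomp : finRotate (n + 1) * Fin.revPerm = Perm.decomposeFin.symm (0, Fin.revPerm) := by
      ext i
      refine Fin.cases ?_ (fun i => ?_) i
      · simp [Fin.rev_zero]
      · simp [Fin.rev_succ, Fin.coeSucc_eq_succ]
    have h := congrArg Perm.sign hdecomp
    rw [map_mul, sign_finRotate, Perm.decomposeFin.symm_sign, if_pos rfl, one_mul, ih,
      Nat.add_one_sub_one] at h
    rw [Nat.choose_succ_succ, Nat.choose_one_right, pow_add, ← h, ← mul_assoc, ← pow_add,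
      ← two_mul, pow_mul]
    simp

section SubPrevCol

variable {m R : Type*} {k : ℕ}

def Matrix.subPrevCol [Sub R] [Zero R] (A : Matrix m (Fin k) R) : Matrix m (Fin k) R :=
  of fun i j => A i j - if h : (j : ℕ) = 0 then 0 else A i ⟨j - 1, by omega⟩

theorem Matrix.det_subPrevCol [CommRing R] (A : Matrix (Fin k) (Fin k) R) :
    A.subPrevCol.det = A.det := by
  cases k with
  | zero => simp
  | succ n =>
    refine (det_eq_of_forall_col_eq_smul_add_pred (fun _ => 1) (fun i => ?_) fun i j => ?_).symm
    · simp [subPrevCol]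
    · simp only [subPrevCol, of_apply, Fin.val_succ, Nat.add_one_ne_zero, dite_false,
        Nat.add_one_sub_one, one_mul]
      exact (sub_add_cancel (A i j.succ) (A i j.castSucc)).symm

end SubPrevCol

theorem integral_det_pi {ι 𝕜 E : Type*} [Fintype ι] [DecidableEq ι] [RCLike 𝕜]
    [MeasurableSpace E] {μ : ι → Measure E} [∀ i, SigmaFinite (μ i)] (f : ι → E → 𝕜)
    (hf : ∀ p q, Integrable (f p) (μ q)) :
    ∫ y, (of fun p q => f p (y q)).det ∂Measure.pi μ = (of fun p q => ∫ t, f p t ∂μ q).det := by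
  simp_rw [det_apply, of_apply, Units.smul_def, zsmul_eq_mul]
  rw [integral_finsetSum _ fun σ _ => (Integrable.fintype_prod fun q => hf (σ q) q).const_mul _]
  simp_rw [integral_const_mul, integral_fintype_prod_eq_prod]

noncomputable def oddCos (j : ℕ) (t : ℝ) : ℝ := cos (π * (2 * (j : ℝ) - 1) * t / 2)

theorem continuous_oddCos (j : ℕ) : Continuous (oddCos j) := by
  unfold oddCos
  fun_prop

theorem phiCos_eq_oddCos (k : ℕ) (jj : Fin k → ℕ) (x : Fin k → ℝ) :
    phiCos k jj x = sqrt 2 ^ k * (of fun p q : Fin k => oddCos (jj p) (x q)).det :=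
  rfl

theorem two_mul_natCast_sub_one_ne_zero (j : ℕ) : 2 * (j : ℝ) - 1 ≠ 0 := by
  have : (2 * j : ℝ) ≠ 1 := by exact_mod_cast (by omega : 2 * j ≠ 1)
  exact sub_ne_zero.mpr this

theorem sin_one_sub_eq_oddCos (j : ℕ) (u : ℝ) :
    sin (π * (2 * (j : ℝ) - 1) * (1 - u) / 2) = (-1) ^ (j + 1) * oddCos j u := by
  have h : π * (2 * (j : ℝ) - 1) * (1 - u) / 2 = j * π - (π * (2 * j - 1) * u / 2 + π / 2) := by
    ring
  rw [h, sin_nat_mul_pi_sub, sin_add_pi_div_two, oddCos]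
  ring

theorem oddCos_one (j : ℕ) : oddCos j 1 = 0 := by
  simpa using sin_one_sub_eq_oddCos j 1

theorem integral_Icc_one_sub_oddCos (j : ℕ) {u v : ℝ} (huv : u ≤ v) :
    ∫ t in Set.Icc (1 - v) (1 - u), oddCos j t =
      (-1) ^ (j + 1) * 2 / (π * (2 * j - 1)) * (oddCos j u - oddCos j v) := by
  have hodd := two_mul_natCast_sub_one_ne_zero j
  have hderiv (t : ℝ) : HasDerivAt
      (fun t => sin (π * (2 * (j : ℝ) - 1) * t / 2) * (2 / (π * (2 * j - 1)))) (oddCos j t) t := by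
    refine ((((hasDerivAt_id' t).const_mul (π * (2 * (j : ℝ) - 1))).div_const 2).sin.mul_const
      (2 / (π * (2 * (j : ℝ) - 1)))).congr_deriv ?_
    rw [oddCos]
    field_simp
  rw [integral_Icc_eq_integral_Ioc, ← intervalIntegral.integral_of_le (by linarith),
    intervalIntegral.integral_eq_sub_of_hasDerivAt (fun t _ => hderiv t)
      ((continuous_oddCos j).intervalIntegrable _ _),
    sin_one_sub_eq_oddCos, sin_one_sub_eq_oddCos]
  ring

theorem integral_Icc_oddCos_matrix {k : ℕ} (jj : Fin k → ℕ) (x : Fin k → ℝ) (hmono : Monotone x)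
    (hx1 : ∀ q, x q ≤ 1) :
    (of fun p q : Fin k => ∫ t in Set.Icc
          (if h : (q : ℕ) = 0 then (0 : ℝ)
            else 1 - x ⟨k - (q : ℕ), Nat.sub_lt (Fin.pos q) (Nat.pos_of_ne_zero h)⟩)
          (1 - x (Fin.rev q)), oddCos (jj p) t) =
      diagonal (fun p => (-1) ^ (jj p + 1) * 2 / (π * (2 * jj p - 1))) *
        ((of fun p q => oddCos (jj p) (x q)).submatrix id Fin.revPerm).subPrevCol := by
  ext p q
  simp only [subPrevCol, diagonal_mul, of_apply, submatrix_apply, id, Fin.revPerm_apply]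
  split_ifs with hq
  · simpa only [sub_self, oddCos_one, sub_zero] using
      integral_Icc_one_sub_oddCos (jj p) (hx1 q.rev)
  · have hrev : Fin.rev ⟨q - 1, by omega⟩ = (⟨k - q, by omega⟩ : Fin k) := by
      ext
      simp only [Fin.val_rev]
      omega
    rw [hrev, integral_Icc_one_sub_oddCos _ (hmono (Fin.le_def.mpr ?_))]
    simp only [Fin.val_rev]
    omega

/-- **Eigenfunction equation for the `2k`-strip transfer operator `S_{2k}`.**
For `j_1 > j_2 > … > j_k > 0` and `0 ≤ x_1 ≤ … ≤ x_k ≤ 1`, the iterated integral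
`∫_{y_1=0}^{1−x_k} ∫_{y_2=1−x_k}^{1−x_{k−1}} ⋯ ∫_{y_k=1−x_2}^{1−x_1} φ(y) dy`
(an integral over a box, since all the limits are constants) equals `λ · φ(x)`
with `λ = 2^k (−1)^{k(k−1)/2 + Σ_p (j_p+1)} / (π^k ∏_p (2j_p−1))`. -/
theorem transfer_eigen_2k (k : ℕ) (jj : Fin k → ℕ)
    (x : Fin k → ℝ) (hmono : Monotone x) (h01 : ∀ q, 0 ≤ x q ∧ x q ≤ 1) :
    (∫ y in Set.univ.pi (fun q : Fin k =>
        Set.Icc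
          (if h : (q : ℕ) = 0 then (0 : ℝ)
            else 1 - x ⟨k - (q : ℕ), by have := q.isLt; omega⟩)
          (1 - x (Fin.rev q))),
        phiCos k jj y) =
      (2 ^ k * (-1 : ℝ) ^ (k * (k - 1) / 2 + ∑ p : Fin k, (jj p + 1)) /
          (Real.pi ^ k * ∏ p : Fin k, (2 * (jj p : ℝ) - 1))) * phiCos k jj x := by
  have hweights : ∏ p, (-1) ^ (jj p + 1) * 2 / (π * (2 * jj p - 1)) =
      (-1 : ℝ) ^ (∑ p, (jj p + 1)) * 2 ^ k / (π ^ k * ∏ p, (2 * (jj p : ℝ) - 1)) := by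
    simp only [Finset.prod_div_distrib, Finset.prod_mul_distrib, Finset.prod_pow_eq_pow_sum,
      Finset.prod_const, Finset.card_univ, Fintype.card_fin]
  simp_rw [phiCos_eq_oddCos]
  rw [integral_const_mul, volume_pi, Measure.restrict_pi_pi,
    integral_det_pi _ fun p q => (continuous_oddCos (jj p)).integrableOn_Icc,
    integral_Icc_oddCos_matrix jj x hmono fun q => (h01 q).2, det_mul, det_diagonal,
    det_subPrevCol, det_permute', Fin.sign_revPerm, Nat.choose_two_right, hweights, pow_add]
  push_cast
  ring
end

section
/- Let P ⊆ ℝ^d be a compact set and let {1,…,d} = C_1 ∪ C_2 ∪ … ∪ C_t (t ≥ 2) be a partition of the coordinate set such that P is Markovian with respect to (C_1,…,C_t): for every j with 2 ≤ j ≤ t−1 and every x̃ ∈ ℝ^{C_j}, the section P_{x̃} = {y ∈ P : y|_{C_j} = x̃} equals the set of all y with y|_{C_j} = x̃ such that there exists z ∈ P with z|_{C_j} = x̃ and z agreeing with y on C_1 ∪ … ∪ C_{j−1}, and there exists w ∈ P with w|_{C_j} = x̃ and w agreeing with y on C_{j+1} ∪ … ∪ C_t (i.e. every such section decomposes as a Cartesian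 product of its projections to the earlier and later coordinate blocks). Then the d-dimensional Lebesgue measure of P equals the iterated integral over (x_1,…,x_t) ∈ ℝ^{C_1} × ⋯ × ℝ^{C_t} of the product ∏_{j=1}^{t−1} 1[ there exists y ∈ P with y|_{C_j} = x_j and y|_{C_{j+1}} = x_{j+1} ]. -/
open MeasureTheory

/-- **Volume of a Markovian polytope via transfer operators.** Let `P ⊆ ℝ^d` be
compact and let `C 0, C 1, …, C (t−1)` be a partition of the coordinate set
(`C l = ∅` for `l ≥ t`) such that `P` is Markovian with respect to it: for each
middle block `j` (`1 ≤ j ≤ t−2`), any point whose restriction to the blocks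
`C 0, …, C j` agrees with some point of `P` and whose restriction to the blocks
`C j, …, C (t−1)` agrees with some point of `P` (both agreeing with it on `C j`)
lies in `P`.  Then `vol(P)` equals the integral over `z ∈ ℝ^d` (identifying
`ℝ^{C_1} × ⋯ × ℝ^{C_t} ≅ ℝ^d` via the partition) of
`∏_{j=0}^{t−2} 1[∃ y ∈ P with y = z on C j ∪ C (j+1)]`, i.e.
`vol(P) = ⟨T_{t−1} ∘ ⋯ ∘ T_1 𝟙, 𝟙⟩`. -/
theorem markovian_polytope_volume (d t : ℕ) (ht : 2 ≤ t)
    (P : Set (Fin d → ℝ)) (hP : IsCompact P)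
    (C : ℕ → Finset (Fin d))
    (hpart : ∀ i : Fin d, ∃! l : ℕ, i ∈ C l)
    (hsupp : ∀ l, t ≤ l → C l = ∅)
    (hMarkov : ∀ j : ℕ, 1 ≤ j → j + 2 ≤ t → ∀ y : Fin d → ℝ,
      (∃ z ∈ P, ∀ i : Fin d, (∃ l, l ≤ j ∧ i ∈ C l) → z i = y i) →
      (∃ w ∈ P, ∀ i : Fin d, (∃ l, j ≤ l ∧ i ∈ C l) → w i = y i) →
      y ∈ P) :
    volume P =
      ∫⁻ z : Fin d → ℝ,
        ∏ j ∈ Finset.range (t - 1),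
          Set.indicator
            {w : Fin d → ℝ | ∃ y ∈ P, ∀ i : Fin d,
              (i ∈ C j ∨ i ∈ C (j + 1)) → y i = w i}
            (fun _ => (1 : ENNReal)) z := by
  classical
  set S : ℕ → Set (Fin d → ℝ) := fun j =>
    {w : Fin d → ℝ | ∃ y ∈ P, ∀ i : Fin d, (i ∈ C j ∨ i ∈ C (j + 1)) → y i = w i} with hS
  have key : ∀ w : Fin d → ℝ, (∀ j, j < t - 1 → w ∈ S j) → w ∈ P := by
    intro w hw
    have claim : ∀ k, k + 2 ≤ t → ∃ z ∈ P, ∀ i : Fin d,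
        (∃ l, l ≤ k + 1 ∧ i ∈ C l) → z i = w i := by
      intro k
      induction k with
      | zero =>
        intro _
        obtain ⟨y, hyP, hy⟩ := hw 0 (by omega)
        refine ⟨y, hyP, fun i ⟨l, hl, hil⟩ => hy i ?_⟩
        interval_cases l
        · exact Or.inl hil
        · exact Or.inr hil
      | succ k ih =>
        intro hk
        obtain ⟨z, hzP, hz⟩ := ih (by omega)
        obtain ⟨y', hy'P, hy'⟩ := hw (k + 1) (by omega)
        set y : Fin d → ℝ := fun i =>
          if ∃ l, l ≤ k + 2 ∧ i ∈ C l then w i else y' i with hydef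
        have hyP : y ∈ P := by
          apply hMarkov (k + 1) (by omega) (by omega) y
          · refine ⟨z, hzP, fun i ⟨l, hl, hil⟩ => ?_⟩
            have hyi : y i = w i := if_pos ⟨l, by omega, hil⟩
            rw [hyi]
            exact hz i ⟨l, hl, hil⟩
          · refine ⟨y', hy'P, fun i ⟨l, hl, hil⟩ => ?_⟩
            by_cases h : ∃ l', l' ≤ k + 2 ∧ i ∈ C l'
            · have hyi : y i = w i := if_pos h
              obtain ⟨l', hl', hil'⟩ := h
              obtain ⟨m, _, hm⟩ := hpart i
              have hll : l' = l := by rw [hm l' hil', hm l hil]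
              subst hll
              rw [hyi]
              have : l' = k + 1 ∨ l' = k + 2 := by omega
              rcases this with h1 | h1 <;> subst h1
              · exact hy' i (Or.inl hil')
              · exact hy' i (Or.inr hil')
            · exact (if_neg h).symm
        exact ⟨y, hyP, fun i ⟨l, hl, hil⟩ => if_pos ⟨l, hl, hil⟩⟩
    obtain ⟨z, hzP, hz⟩ := claim (t - 2) (by omega)
    have hzw : z = w := by
      funext i
      obtain ⟨l, hl, _⟩ := hpart i
      have hlt : l < t := by
        by_contra h
        push_neg at h
        rw [hsupp l h] at hl
        exact absurd hl (Finset.notMem_empty i)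
      exact hz i ⟨l, by omega, hl⟩
    rwa [← hzw]
  have hInt : ∀ z : Fin d → ℝ,
      (∏ j ∈ Finset.range (t - 1), (S j).indicator (fun _ => (1 : ENNReal)) z)
        = P.indicator (fun _ => (1 : ENNReal)) z := by
    intro z
    by_cases hz : z ∈ P
    · rw [Set.indicator_of_mem hz]
      refine Finset.prod_eq_one fun j _ => ?_
      have hzS : z ∈ S j := ⟨z, hz, fun i _ => rfl⟩
      exact Set.indicator_of_mem hzS _
    · rw [Set.indicator_of_notMem hz]
      have hex : ∃ j, j < t - 1 ∧ z ∉ S j := by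
        by_contra h
        push_neg at h
        exact hz (key z h)
      obtain ⟨j, hj, hjS⟩ := hex
      exact Finset.prod_eq_zero (Finset.mem_range.mpr hj)
        (Set.indicator_of_notMem hjS _)
  rw [lintegral_congr hInt, lintegral_indicator hP.measurableSet]
  simp
end

section
/- For every integer n ≥ 1, the Lebesgue measure of the up-down polytope P_n = {(x_1,…,x_n) ∈ [0,1]^n : x_1 ≤ x_2 ≥ x_3 ≤ x_4 ≥ ⋯} (i.e. x_i ≤ x_{i+1} for odd i and x_i ≥ x_{i+1} for even i, 1 ≤ i ≤ n−1) equals A_n / n!, where A_n is the number of up-down permutations of n elements. -/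
open MeasureTheory
open Set

variable {n : ℕ}

/-- The up-down condition on a permutation. -/
def UDCond (n : ℕ) (τ : Equiv.Perm (Fin n)) : Prop :=
  ∀ i : Fin n, ∀ h : (i : ℕ) + 1 < n,
    if (i : ℕ) % 2 = 0 then τ i < τ ⟨(i : ℕ) + 1, h⟩
    else τ ⟨(i : ℕ) + 1, h⟩ < τ i

/-- The open order simplex associated to a permutation. -/
def UDReg (n : ℕ) (σ : Equiv.Perm (Fin n)) : Set (Fin n → ℝ) :=
  {x | (∀ i, 0 ≤ x i ∧ x i ≤ 1) ∧ StrictMono (x ∘ σ)}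

lemma UDReg_measurable (σ : Equiv.Perm (Fin n)) : MeasurableSet (UDReg n σ) := by
  have h1 : MeasurableSet {x : Fin n → ℝ | ∀ i, 0 ≤ x i ∧ x i ≤ 1} := by
    have : {x : Fin n → ℝ | ∀ i, 0 ≤ x i ∧ x i ≤ 1} = univ.pi fun _ => Icc (0:ℝ) 1 := by
      ext x; simp [Set.mem_pi, Icc]
    rw [this]
    exact MeasurableSet.univ_pi fun _ => measurableSet_Icc
  have h2 : MeasurableSet {x : Fin n → ℝ | StrictMono (x ∘ σ)} := by
    have : {x : Fin n → ℝ | StrictMono (x ∘ σ)} =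
        ⋂ p : Fin n × Fin n, ⋂ _ : p.1 < p.2, {x | x (σ p.1) < x (σ p.2)} := by
      ext x
      simp only [mem_iInter, mem_setOf_eq]
      constructor
      · exact fun h p hp => h hp
      · intro h a b hab; exact h (a, b) hab
    rw [this]
    exact MeasurableSet.iInter fun p => MeasurableSet.iInter fun _ =>
      measurableSet_lt (measurable_pi_apply _) (measurable_pi_apply _)
  exact h1.inter h2

lemma strictMono_perm_eq_refl (π : Equiv.Perm (Fin n)) (hπ : StrictMono ⇑π) : π = Equiv.refl _ := by
  have h := Subsingleton.elim (hπ.orderIsoOfSurjective _ π.surjective) (OrderIso.refl (Fin n))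
  refine Equiv.ext fun i => ?_
  have : (hπ.orderIsoOfSurjective _ π.surjective) i = (OrderIso.refl (Fin n)) i := by rw [h]
  simpa using this

lemma UDReg_disjoint : Pairwise (Function.onFun Disjoint (UDReg n)) := by
  intro σ τ hst
  rw [Function.onFun, Set.disjoint_left]
  rintro x ⟨-, hσ⟩ ⟨-, hτ⟩
  apply hst
  -- π := τ.trans σ.symm, then (x ∘ σ) ∘ π = x ∘ τ
  set π : Equiv.Perm (Fin n) := τ.trans σ.symm with hπdef
  have hπ : StrictMono ⇑π := by
    intro a b hab
    have : (x ∘ σ) (π a) < (x ∘ σ) (π b) := by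
      simpa [hπdef, Function.comp] using hτ hab
    exact hσ.lt_iff_lt.mp this
  have h1 : π = Equiv.refl _ := strictMono_perm_eq_refl π hπ
  refine Equiv.ext fun i => ?_
  have h2 : σ.symm (τ i) = i := by
    have := congrArg (fun e => e i) h1
    simpa [hπdef] using this
  have := congrArg σ h2
  simpa using this.symm

lemma vol_hyperplane (i j : Fin n) (hij : i ≠ j) :
    volume {x : Fin n → ℝ | x i = x j} = 0 := by
  have heq : {x : Fin n → ℝ | x i = x j} =
      (LinearMap.ker ((LinearMap.proj i : (Fin n → ℝ) →ₗ[ℝ] ℝ) - LinearMap.proj j) : Set _) := by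
    ext x
    simp [LinearMap.mem_ker, sub_eq_zero]
  rw [heq]
  apply Measure.addHaar_submodule
  intro htop
  have : (Pi.single i 1 : Fin n → ℝ) ∈ LinearMap.ker
      ((LinearMap.proj i : (Fin n → ℝ) →ₗ[ℝ] ℝ) - LinearMap.proj j) := htop ▸ Submodule.mem_top
  simp [LinearMap.mem_ker, Pi.single_apply, hij, (Ne.symm hij)] at this

/-- The non-injective set is null. -/
lemma vol_noninj : volume {x : Fin n → ℝ | ¬ Function.Injective x} = 0 := by
  have hsub : {x : Fin n → ℝ | ¬ Function.Injective x} ⊆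
      ⋃ p : Fin n × Fin n, ⋃ _ : p.1 ≠ p.2, {x | x p.1 = x p.2} := by
    intro x hx
    simp only [Function.Injective, not_forall] at hx
    obtain ⟨a, b, hab, hne⟩ := hx
    exact mem_iUnion.2 ⟨(a, b), mem_iUnion.2 ⟨hne, hab⟩⟩
  refine measure_mono_null hsub ?_
  refine measure_iUnion_null fun p => measure_iUnion_null fun hp => vol_hyperplane _ _ hp

lemma UDReg_cover {x : Fin n → ℝ} (hx : ∀ i, 0 ≤ x i ∧ x i ≤ 1)
    (hinj : Function.Injective x) : ∃ σ, x ∈ UDReg n σ := by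
  refine ⟨Tuple.sort x, hx, ?_⟩
  exact (Tuple.monotone_sort x).strictMono_of_injective (hinj.comp (Tuple.sort x).injective)

lemma vol_UDReg_const (σ : Equiv.Perm (Fin n)) :
    volume (UDReg n σ) = volume (UDReg n 1) := by
  -- map x ↦ x ∘ σ : preimage of UDReg 1 is UDReg σ
  have hmp := volume_measurePreserving_piCongrLeft (fun _ : Fin n => ℝ) σ.symm
  have hcoe : ⇑(MeasurableEquiv.piCongrLeft (fun _ : Fin n => ℝ) σ.symm) = fun x => x ∘ σ := by
    funext x
    funext i
    simp [MeasurableEquiv.piCongrLeft, Equiv.piCongrLeft, Equiv.piCongrLeft',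
      Function.comp]
  have hpre : (fun x : Fin n → ℝ => x ∘ ⇑σ) ⁻¹' (UDReg n 1) = UDReg n σ := by
    ext x
    constructor
    · rintro ⟨hb, hm⟩
      refine ⟨fun i => by simpa using hb (σ.symm i), ?_⟩
      simpa using hm
    · rintro ⟨hb, hm⟩
      refine ⟨fun i => by simpa using hb (σ i), ?_⟩
      simpa using hm
  calc volume (UDReg n σ) = volume ((fun x : Fin n → ℝ => x ∘ ⇑σ) ⁻¹' (UDReg n 1)) := by
        rw [hpre]
    _ = volume (UDReg n 1) := by
        rw [← hcoe]
        exact hmp.measure_preimage (UDReg_measurable 1).nullMeasurableSet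

lemma cube_eq : {x : Fin n → ℝ | ∀ i, 0 ≤ x i ∧ x i ≤ 1} = univ.pi fun _ => Icc (0:ℝ) 1 := by
  ext x; simp [Set.mem_pi, Icc]

lemma vol_UDReg_one (n : ℕ) : volume (UDReg n 1) = ((n.factorial : ENNReal))⁻¹ := by
  have hU : volume (⋃ σ : Equiv.Perm (Fin n), UDReg n σ) =
      (n.factorial : ENNReal) * volume (UDReg n 1) := by
    rw [measure_iUnion UDReg_disjoint (fun σ => UDReg_measurable σ), tsum_fintype]
    rw [Finset.sum_congr rfl (fun σ _ => vol_UDReg_const σ), Finset.sum_const]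
    simp [Fintype.card_perm, mul_comm, nsmul_eq_mul]
  have hUle : (⋃ σ : Equiv.Perm (Fin n), UDReg n σ) ⊆ {x : Fin n → ℝ | ∀ i, 0 ≤ x i ∧ x i ≤ 1} := by
    rintro x hx
    obtain ⟨σ, hb, -⟩ := mem_iUnion.1 hx
    exact hb
  have hcov : {x : Fin n → ℝ | ∀ i, 0 ≤ x i ∧ x i ≤ 1} ⊆
      (⋃ σ : Equiv.Perm (Fin n), UDReg n σ) ∪ {x : Fin n → ℝ | ¬ Function.Injective x} := by
    intro x hx
    by_cases hinj : Function.Injective x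
    · obtain ⟨σ, hσ⟩ := UDReg_cover hx hinj
      exact Or.inl (mem_iUnion.2 ⟨σ, hσ⟩)
    · exact Or.inr hinj
  have hcube : volume {x : Fin n → ℝ | ∀ i, 0 ≤ x i ∧ x i ≤ 1} = 1 := by
    rw [cube_eq, volume_pi_pi]
    simp [Real.volume_Icc]
  have h1 : volume (⋃ σ : Equiv.Perm (Fin n), UDReg n σ) = 1 := by
    refine le_antisymm (hcube ▸ measure_mono hUle) ?_
    calc (1 : ENNReal) = volume {x : Fin n → ℝ | ∀ i, 0 ≤ x i ∧ x i ≤ 1} := hcube.symm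
      _ ≤ volume ((⋃ σ : Equiv.Perm (Fin n), UDReg n σ) ∪
            {x : Fin n → ℝ | ¬ Function.Injective x}) := measure_mono hcov
      _ ≤ volume (⋃ σ : Equiv.Perm (Fin n), UDReg n σ) +
            volume {x : Fin n → ℝ | ¬ Function.Injective x} := measure_union_le _ _
      _ = volume (⋃ σ : Equiv.Perm (Fin n), UDReg n σ) := by rw [vol_noninj, add_zero]
  have key : (n.factorial : ENNReal) * volume (UDReg n 1) = 1 := by rw [← hU, h1]
  have hne : (n.factorial : ENNReal) ≠ 0 := by
    exact_mod_cast Nat.cast_ne_zero.2 n.factorial_ne_zero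
  have htop : (n.factorial : ENNReal) ≠ ⊤ := ENNReal.natCast_ne_top _
  rw [← one_div]
  exact (ENNReal.eq_div_iff hne htop).2 key

/-- **Volume of the up-down polytope**: the Lebesgue measure of
`P_n = {x ∈ [0,1]^n : x_1 ≤ x_2 ≥ x_3 ≤ x_4 ≥ ⋯}` equals `A_n / n!`. -/
theorem updown_polytope_volume (n : ℕ) (hn : 1 ≤ n) :
    volume {x : Fin n → ℝ |
        (∀ i, 0 ≤ x i ∧ x i ≤ 1) ∧
        ∀ i : Fin n, ∀ h : (i : ℕ) + 1 < n,
          if (i : ℕ) % 2 = 0 then x i ≤ x ⟨(i : ℕ) + 1, h⟩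
          else x ⟨(i : ℕ) + 1, h⟩ ≤ x i} =
      ENNReal.ofReal ((updownCount n : ℝ) / (Nat.factorial n : ℝ)) := by
  classical
  set P : Set (Fin n → ℝ) := {x : Fin n → ℝ |
        (∀ i, 0 ≤ x i ∧ x i ≤ 1) ∧
        ∀ i : Fin n, ∀ h : (i : ℕ) + 1 < n,
          if (i : ℕ) % 2 = 0 then x i ≤ x ⟨(i : ℕ) + 1, h⟩
          else x ⟨(i : ℕ) + 1, h⟩ ≤ x i} with hP
  haveI : Fintype {σ : Equiv.Perm (Fin n) // UDCond n σ⁻¹} := Fintype.ofFinite _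
  -- regions for good permutations are inside P
  have hUsub : ∀ s : {σ : Equiv.Perm (Fin n) // UDCond n σ⁻¹}, UDReg n s.val ⊆ P := by
    rintro ⟨σ, hcond⟩ x ⟨hb, hm⟩
    refine ⟨hb, fun i h => ?_⟩
    have hc := hcond i h
    split_ifs at hc ⊢ with hpar
    · exact le_of_lt (by simpa using hm hc)
    · exact le_of_lt (by simpa using hm hc)
  have hPsub : P ⊆ (⋃ s : {σ : Equiv.Perm (Fin n) // UDCond n σ⁻¹}, UDReg n s.val) ∪
      {x : Fin n → ℝ | ¬ Function.Injective x} := by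
    rintro x ⟨hb, hpat⟩
    by_cases hinj : Function.Injective x
    · obtain ⟨σ, hσ⟩ := UDReg_cover hb hinj
      have hm : StrictMono (x ∘ σ) := hσ.2
      have hcond : UDCond n σ⁻¹ := by
        intro i h
        have hne : x i ≠ x ⟨(i : ℕ) + 1, h⟩ := by
          intro he
          have := hinj he
          have := congrArg Fin.val this
          simp at this
        have hp := hpat i h
        split_ifs at hp ⊢ with hpar
        · exact hm.lt_iff_lt.mp (by simpa using lt_of_le_of_ne hp hne)
        · exact hm.lt_iff_lt.mp (by simpa using lt_of_le_of_ne hp (Ne.symm hne))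
      exact Or.inl (mem_iUnion.2 ⟨⟨σ, hcond⟩, hσ⟩)
    · exact Or.inr hinj
  have hvolU : volume (⋃ s : {σ : Equiv.Perm (Fin n) // UDCond n σ⁻¹}, UDReg n s.val) =
      (Nat.card {σ : Equiv.Perm (Fin n) // UDCond n σ⁻¹} : ENNReal) *
        ((n.factorial : ENNReal))⁻¹ := by
    have hdisj : Pairwise (Function.onFun Disjoint
        (fun s : {σ : Equiv.Perm (Fin n) // UDCond n σ⁻¹} => UDReg n s.val)) :=
      fun a b hab => UDReg_disjoint (Subtype.coe_injective.ne hab)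
    rw [measure_iUnion hdisj
      (fun s : {σ : Equiv.Perm (Fin n) // UDCond n σ⁻¹} => UDReg_measurable s.val),
      tsum_fintype]
    rw [Finset.sum_congr rfl (fun s _ => (vol_UDReg_const s.val).trans (vol_UDReg_one n)),
      Finset.sum_const]
    simp [Nat.card_eq_fintype_card, nsmul_eq_mul]
  have hPvol : volume P = (Nat.card {σ : Equiv.Perm (Fin n) // UDCond n σ⁻¹} : ENNReal) *
      ((n.factorial : ENNReal))⁻¹ := by
    rw [← hvolU]
    refine le_antisymm ?_ (measure_mono (iUnion_subset hUsub))
    calc volume P ≤ volume ((⋃ s : {σ : Equiv.Perm (Fin n) // UDCond n σ⁻¹}, UDReg n s.val) ∪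
            {x : Fin n → ℝ | ¬ Function.Injective x}) := measure_mono hPsub
      _ ≤ volume (⋃ s : {σ : Equiv.Perm (Fin n) // UDCond n σ⁻¹}, UDReg n s.val) +
            volume {x : Fin n → ℝ | ¬ Function.Injective x} := measure_union_le _ _
      _ = volume (⋃ s : {σ : Equiv.Perm (Fin n) // UDCond n σ⁻¹}, UDReg n s.val) := by
            rw [vol_noninj, add_zero]
  have hcount : Nat.card {σ : Equiv.Perm (Fin n) // UDCond n σ⁻¹} = updownCount n := by
    have h1 : updownCount n = Nat.card {σ : Equiv.Perm (Fin n) // UDCond n σ} := rfl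
    rw [h1]
    exact Nat.card_congr ((Equiv.inv (Equiv.Perm (Fin n))).subtypeEquiv (fun σ => Iff.rfl))
  rw [hPvol, hcount]
  have hfac : (0:ℝ) < (n.factorial : ℝ) := by exact_mod_cast n.factorial_pos
  rw [ENNReal.ofReal_div_of_pos hfac, ENNReal.ofReal_natCast, ENNReal.ofReal_natCast,
    div_eq_mul_inv]
end
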